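/- arXiv:2603.22155 — 12 statements merged into one kernel-verified Lean document; each statement's English description precedes it below -/
import Mathlib

section
/- Let F : ℝ^p → ℝ^p be L-Lipschitz continuous and μ-co-coercive with μ > 0, let θ* satisfy F(θ*) = 0, and let 0 < η ≤ min(2μ, 1/(√2·L)). Then for every θ ∈ ℝ^p, the expected one-step RAMPAGE descent inequality holds: ∫₀¹ ‖θ − η·F(θ − 2ηs·F(θ)) − θ*‖² ds ≤ ‖θ − θ*‖² − η²(1 − 2η²L²)·‖F(θ)‖². -/
open scoped RealInnerProductSpace

/-- Expected one-step RAMPAGE descent inequality under Lipschitzness and co-coercivity. -/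
theorem rampage_one_step_cocoercive {p : ℕ}
    (F : EuclideanSpace ℝ (Fin p) → EuclideanSpace ℝ (Fin p))
    (L μ η : ℝ) (θstar : EuclideanSpace ℝ (Fin p))
    (hLip : ∀ a b, ‖F a - F b‖ ≤ L * ‖a - b‖)
    (hμ : 0 < μ)
    (hcoco : ∀ a b, μ * ‖F a - F b‖ ^ 2 ≤ ⟪F a - F b, a - b⟫)
    (hzero : F θstar = 0)
    (hη0 : 0 < η) (hη : η ≤ min (2 * μ) (1 / (Real.sqrt 2 * L)))
    (θ : EuclideanSpace ℝ (Fin p)) :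
    (∫ s in (0:ℝ)..1, ‖θ - η • F (θ - (2 * η * s) • F θ) - θstar‖ ^ 2)
      ≤ ‖θ - θstar‖ ^ 2 - η ^ 2 * (1 - 2 * η ^ 2 * L ^ 2) * ‖F θ‖ ^ 2 := by
  -- L > 0
  have hημ : η ≤ 2 * μ := le_trans hη (min_le_left _ _)
  have hηL : η ≤ 1 / (Real.sqrt 2 * L) := le_trans hη (min_le_right _ _)
  have hL : 0 < L := by
    by_contra h
    push_neg at h
    have h2 : Real.sqrt 2 * L ≤ 0 :=
      mul_nonpos_of_nonneg_of_nonpos (Real.sqrt_nonneg 2) h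
    have : 1 / (Real.sqrt 2 * L) ≤ 0 := div_nonpos_of_nonneg_of_nonpos zero_le_one h2
    linarith
  set f : EuclideanSpace ℝ (Fin p) := F θ with hf
  set v : EuclideanSpace ℝ (Fin p) := θ - θstar with hv
  -- pointwise bound
  have key : ∀ s ∈ Set.Icc (0:ℝ) 1,
      ‖θ - η • F (θ - (2 * η * s) • F θ) - θstar‖ ^ 2
        ≤ ‖v‖ ^ 2 - 2 * η ^ 2 * ‖f‖ ^ 2 * s + 8 * η ^ 4 * L ^ 2 * ‖f‖ ^ 2 * s ^ 3 := by
    intro s hs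
    obtain ⟨hs0, hs1⟩ := hs
    set g : EuclideanSpace ℝ (Fin p) := F (θ - (2 * η * s) • F θ) with hg
    -- Lipschitz bound
    have hlip : ‖g - f‖ ≤ L * (2 * η * s * ‖f‖) := by
      have := hLip (θ - (2 * η * s) • F θ) θ
      have hnorm : ‖θ - (2 * η * s) • F θ - θ‖ = 2 * η * s * ‖f‖ := by
        rw [sub_sub_cancel_left, norm_neg, norm_smul, Real.norm_eq_abs,
          abs_of_nonneg (by positivity)]
      rw [hnorm] at this
      simpa [hg, hf] using this
    have hlip2 : ‖g - f‖ ^ 2 ≤ 4 * η ^ 2 * s ^ 2 * L ^ 2 * ‖f‖ ^ 2 := by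
      have h1 : 0 ≤ L * (2 * η * s * ‖f‖) := by positivity
      nlinarith [norm_nonneg (g - f)]
    -- co-coercivity at θstar
    have hco : μ * ‖g‖ ^ 2 ≤ ⟪g, v⟫ - 2 * η * s * ⟪g, f⟫ := by
      have := hcoco (θ - (2 * η * s) • F θ) θstar
      rw [hzero, sub_zero] at this
      have hsub : θ - (2 * η * s) • F θ - θstar = v - (2 * η * s) • f := by
        rw [hv, hf]; abel
      rw [hsub, inner_sub_right, real_inner_smul_right] at this
      linarith [this]
    -- polarization
    have hid : ‖g - f‖ ^ 2 = ‖g‖ ^ 2 - 2 * ⟪g, f⟫ + ‖f‖ ^ 2 := by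
      rw [@norm_sub_sq_real]
    -- expansion of the step
    have hexp : ‖θ - η • g - θstar‖ ^ 2 = ‖v‖ ^ 2 - 2 * η * ⟪g, v⟫ + η ^ 2 * ‖g‖ ^ 2 := by
      have h1 : θ - η • g - θstar = v - η • g := by rw [hv]; abel
      rw [h1, @norm_sub_sq_real, norm_smul, Real.norm_eq_abs, abs_of_pos hη0,
        real_inner_smul_right, real_inner_comm]
      ring
    rw [hexp]
    have h1 := mul_le_mul_of_nonneg_left hco (show (0:ℝ) ≤ 2 * η by linarith)
    have h2 := mul_le_mul_of_nonneg_left hlip2 (show (0:ℝ) ≤ 2 * η ^ 2 * s by positivity)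
    have hBs : 4 * η ^ 2 * s * ⟪g, f⟫
        = 2 * η ^ 2 * s * (‖g‖ ^ 2 + ‖f‖ ^ 2 - ‖g - f‖ ^ 2) := by
      linear_combination (2 * η ^ 2 * s) * hid
    have h3 : 0 ≤ 2 * η ^ 2 * s * ‖g‖ ^ 2 := by positivity
    have h4 : 0 ≤ η * (2 * μ - η) * ‖g‖ ^ 2 := by
      have : 0 ≤ 2 * μ - η := by linarith
      positivity
    nlinarith [h1, h2, h3, h4, hBs]
  -- continuity / integrability
  have hFcont : Continuous F := by
    have : LipschitzWith L.toNNReal F := by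
      apply LipschitzWith.of_dist_le_mul
      intro a b
      rw [dist_eq_norm, dist_eq_norm, Real.coe_toNNReal L hL.le]
      exact hLip a b
    exact this.continuous
  have hcont : Continuous fun s : ℝ => ‖θ - η • F (θ - (2 * η * s) • F θ) - θstar‖ ^ 2 := by
    apply Continuous.pow
    apply Continuous.norm
    apply Continuous.sub _ continuous_const
    apply Continuous.sub continuous_const
    apply Continuous.comp (continuous_const_smul η)
    exact hFcont.comp (continuous_const.sub ((continuous_const.mul continuous_id).smul continuous_const))
  have hint1 : IntervalIntegrable (fun s : ℝ => ‖θ - η • F (θ - (2 * η * s) • F θ) - θstar‖ ^ 2)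
      MeasureTheory.volume 0 1 := hcont.intervalIntegrable 0 1
  have hint2 : IntervalIntegrable
      (fun s : ℝ => ‖v‖ ^ 2 - 2 * η ^ 2 * ‖f‖ ^ 2 * s + 8 * η ^ 4 * L ^ 2 * ‖f‖ ^ 2 * s ^ 3)
      MeasureTheory.volume 0 1 := by
    apply Continuous.intervalIntegrable
    fun_prop
  have hle := intervalIntegral.integral_mono_on (by norm_num : (0:ℝ) ≤ 1) hint1 hint2 key
  refine hle.trans (le_of_eq ?_)
  have i1 : IntervalIntegrable (fun s : ℝ => ‖v‖ ^ 2 - 2 * η ^ 2 * ‖f‖ ^ 2 * s)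
      MeasureTheory.volume 0 1 := by apply Continuous.intervalIntegrable; fun_prop
  have i2 : IntervalIntegrable (fun s : ℝ => 8 * η ^ 4 * L ^ 2 * ‖f‖ ^ 2 * s ^ 3)
      MeasureTheory.volume 0 1 := by apply Continuous.intervalIntegrable; fun_prop
  have i3 : IntervalIntegrable (fun s : ℝ => 2 * η ^ 2 * ‖f‖ ^ 2 * s)
      MeasureTheory.volume 0 1 := by apply Continuous.intervalIntegrable; fun_prop
  rw [intervalIntegral.integral_add i1 i2,
    intervalIntegral.integral_sub intervalIntegrable_const i3,
    intervalIntegral.integral_const, intervalIntegral.integral_const_mul,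
    intervalIntegral.integral_const_mul, integral_id, integral_pow]
  norm_num
  ring
end

section
/- Let F : ℝ^p → ℝ^p be L-Lipschitz continuous and ρ-co-hypomonotone with ρ ≥ 0, let θ* satisfy F(θ*) = 0, and let η > 0 be such that C := 1/2 − 2ρ/η − (4/3)·L²·(η² + 2ηρ + 2(η + 2ρ)²) > 0. Then for every θ ∈ ℝ^p, the expected one-step RAMPAGE descent inequality holds: ∫₀¹ ‖θ − η·F(θ − 2ηs·F(θ)) − θ*‖² ds ≤ ‖θ − θ*‖² − η²·C·‖F(θ)‖². -/
set_option maxHeartbeats 1000000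

open scoped RealInnerProductSpace
open intervalIntegral

private lemma poly_int (c0 c1 c2 c3 : ℝ) :
    (∫ s in (0:ℝ)..1, (c0 + c1*s + c2*s^2 + c3*s^3)) = c0 + c1/2 + c2/3 + c3/4 := by
  have h1 : (∫ x in (0:ℝ)..1, c1 * x) = c1/2 := by
    rw [integral_const_mul, integral_id]; ring
  rw [integral_add, integral_add, integral_add]
  · simp [integral_const_mul, integral_pow, h1]
    ring
  all_goals apply Continuous.intervalIntegrable; continuity

/-- Expected one-step RAMPAGE descent inequality under Lipschitzness and
co-hypomonotonicity. -/
theorem rampage_one_step_cohypomonotone {p : ℕ}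
    (F : EuclideanSpace ℝ (Fin p) → EuclideanSpace ℝ (Fin p))
    (L ρ η : ℝ) (θstar : EuclideanSpace ℝ (Fin p))
    (hLip : ∀ a b, ‖F a - F b‖ ≤ L * ‖a - b‖)
    (hρ : 0 ≤ ρ)
    (hcohypo : ∀ a b, -(ρ * ‖F a - F b‖ ^ 2) ≤ ⟪F a - F b, a - b⟫)
    (hzero : F θstar = 0)
    (hη0 : 0 < η)
    (C : ℝ)
    (hC : C = 1/2 - 2 * ρ / η - (4/3) * L ^ 2 * (η ^ 2 + 2 * η * ρ + 2 * (η + 2 * ρ) ^ 2))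
    (hCpos : 0 < C)
    (θ : EuclideanSpace ℝ (Fin p)) :
    (∫ s in (0:ℝ)..1, ‖θ - η • F (θ - (2 * η * s) • F θ) - θstar‖ ^ 2)
      ≤ ‖θ - θstar‖ ^ 2 - η ^ 2 * C * ‖F θ‖ ^ 2 := by
  have hFc : Continuous F := by
    have : LipschitzWith (Real.toNNReal (max L 0)) F := by
      apply LipschitzWith.of_dist_le_mul
      intro a b
      rw [dist_eq_norm, dist_eq_norm, Real.coe_toNNReal _ (le_max_right L 0)]
      calc ‖F a - F b‖ ≤ L * ‖a - b‖ := hLip a b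
        _ ≤ max L 0 * ‖a - b‖ :=
            mul_le_mul_of_nonneg_right (le_max_left _ _) (norm_nonneg _)
    exact this.continuous
  set g := F θ with hg
  set x := θ - θstar with hxdef
  clear_value g x
  -- pointwise bound
  have key : ∀ s ∈ Set.Icc (0:ℝ) 1,
      ‖θ - η • F (θ - (2 * η * s) • g) - θstar‖ ^ 2
        ≤ ‖x‖^2 + ((η^2+2*η*ρ)
            + (4*L^2*η^2*(η+2*ρ)^2 - 3*η^2)*s
            + (4*(η^2+2*η*ρ)*L^2*η^2 - 16*L^2*η^3*(η+2*ρ))*s^2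
            + 16*L^2*η^4*s^3) * ‖g‖^2 := by
    intro s hs
    obtain ⟨hs0, hs1⟩ := hs
    set G := F (θ - (2 * η * s) • g) with hGdef
    set Δ := G - g with hΔdef
    have hGdec : G = g + Δ := by rw [hΔdef]; abel
    have hd : ‖Δ‖ ≤ 2*L*η*s*‖g‖ := by
      calc ‖Δ‖ = ‖F (θ - (2*η*s) • g) - F θ‖ := by rw [hΔdef, hGdef, hg]
        _ ≤ L * ‖(θ - (2*η*s) • g) - θ‖ := hLip _ _
        _ = 2*L*η*s*‖g‖ := by
            have h1 : (θ - (2*η*s) • g) - θ = -((2*η*s) • g) := by abel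
            rw [h1, norm_neg, norm_smul, Real.norm_eq_abs,
              abs_of_nonneg (by positivity : (0:ℝ) ≤ 2*η*s)]
            ring
    have hcoh := hcohypo (θ - (2 * η * s) • g) θstar
    rw [hzero, sub_zero] at hcoh
    have hsplit : ⟪G, θ - (2*η*s) • g - θstar⟫ = ⟪G, x⟫ - (2*η*s) * ⟪G, g⟫ := by
      have h1 : θ - (2*η*s) • g - θstar = x - (2*η*s) • g := by rw [hxdef]; abel
      rw [h1, inner_sub_right, real_inner_smul_right]
    rw [hsplit] at hcoh
    have hexpand : ‖θ - η • G - θstar‖ ^ 2 = ‖x‖^2 - 2*η*⟪x, G⟫ + η^2*‖G‖^2 := by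
      have h1 : θ - η • G - θstar = x - η • G := by rw [hxdef]; abel
      rw [h1, @norm_sub_sq_real, real_inner_smul_right, norm_smul, Real.norm_eq_abs,
        mul_pow, sq_abs]
      ring
    have hnG : ‖G‖^2 = ‖g‖^2 + 2*⟪g,Δ⟫ + ‖Δ‖^2 := by
      conv_lhs => rw [hGdec]
      rw [@norm_add_sq_real]
    have hGg : ⟪G, g⟫ = ‖g‖^2 + ⟪g, Δ⟫ := by
      rw [real_inner_comm]
      conv_lhs => rw [hGdec]
      rw [inner_add_right, real_inner_self_eq_norm_sq]
    have hxG : ⟪x, G⟫ = ⟪G, x⟫ := real_inner_comm _ _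
    have habs : |⟪g, Δ⟫| ≤ ‖g‖ * ‖Δ‖ := abs_real_inner_le_norm _ _
    -- scalar abbreviations
    set a := ⟪g, Δ⟫ with hadef
    set d := ‖Δ‖ with hddef
    set nn := ‖g‖ with hnndef
    have hnn0 : (0:ℝ) ≤ nn := norm_nonneg _
    have hd0 : (0:ℝ) ≤ d := norm_nonneg _
    have hA0 : (0:ℝ) ≤ η^2 + 2*η*ρ := by nlinarith
    have hdsq : d^2 ≤ 4*L^2*η^2*s^2*nn^2 := by nlinarith [hd, hd0]
    -- Young-type bound on the cross term
    have hca : (2*(η^2+2*η*ρ) - 4*η^2*s)*a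
        ≤ (η^2*s + 4*L^2*η^2*s*((η+2*ρ) - 2*η*s)^2) * nn^2 := by
      have hyoung : 2*η*|(η+2*ρ) - 2*η*s| * (2*L*η*s)
          ≤ η^2*s + 4*L^2*η^2*s*((η+2*ρ) - 2*η*s)^2 := by
        rcases abs_cases ((η+2*ρ) - 2*η*s) with ⟨h,_⟩ | ⟨h,_⟩ <;> rw [h] <;>
          nlinarith [mul_nonneg hs0 (sq_nonneg (η - 2*L*η*((η+2*ρ) - 2*η*s))),
            mul_nonneg hs0 (sq_nonneg (η + 2*L*η*((η+2*ρ) - 2*η*s)))]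
      calc (2*(η^2+2*η*ρ) - 4*η^2*s)*a
          ≤ |2*(η^2+2*η*ρ) - 4*η^2*s| * (nn * d) := by
            calc (2*(η^2+2*η*ρ) - 4*η^2*s)*a ≤ |(2*(η^2+2*η*ρ) - 4*η^2*s)*a| :=
                le_abs_self _
              _ = |2*(η^2+2*η*ρ) - 4*η^2*s| * |a| := abs_mul _ _
              _ ≤ _ := mul_le_mul_of_nonneg_left habs (abs_nonneg _)
        _ ≤ |2*(η^2+2*η*ρ) - 4*η^2*s| * (nn * (2*L*η*s*nn)) :=
            mul_le_mul_of_nonneg_left (mul_le_mul_of_nonneg_left hd hnn0) (abs_nonneg _)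
        _ = (2*η*|(η+2*ρ) - 2*η*s| * (2*L*η*s)) * nn^2 := by
            have h2 : |2*(η^2+2*η*ρ) - 4*η^2*s| = 2*η*|(η+2*ρ) - 2*η*s| := by
              rw [show 2*(η^2+2*η*ρ) - 4*η^2*s = (2*η)*((η+2*ρ) - 2*η*s) by ring,
                abs_mul, abs_of_nonneg (by linarith : (0:ℝ) ≤ 2*η)]
            rw [h2]; ring
        _ ≤ _ := mul_le_mul_of_nonneg_right hyoung (sq_nonneg nn)
    have hAd : (η^2+2*η*ρ)*d^2 ≤ (η^2+2*η*ρ)*(4*L^2*η^2*s^2*nn^2) :=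
      mul_le_mul_of_nonneg_left hdsq hA0
    -- co-hypomonotonicity consequence, scaled by 2η
    have hmul : 2*η*(-(ρ*‖G‖^2) + 2*η*s*⟪G,g⟫) ≤ 2*η*⟪G,x⟫ := by
      apply mul_le_mul_of_nonneg_left _ (by linarith : (0:ℝ) ≤ 2*η)
      linarith [hcoh]
    rw [hnG, hGg] at hmul
    rw [hexpand, hxG, hnG]
    nlinarith [hmul, hca, hAd]
  -- integrability
  have hcont : Continuous (fun s : ℝ => ‖θ - η • F (θ - (2 * η * s) • g) - θstar‖ ^ 2) := by
    have h1 : Continuous fun s : ℝ => θ - (2 * η * s) • g :=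
      continuous_const.sub ((continuous_const.mul continuous_id).smul continuous_const)
    exact ((continuous_const.sub ((hFc.comp h1).const_smul η)).sub
      continuous_const).norm.pow 2
  have hint_f : IntervalIntegrable
      (fun s : ℝ => ‖θ - η • F (θ - (2 * η * s) • g) - θstar‖ ^ 2)
      MeasureTheory.volume 0 1 := hcont.intervalIntegrable 0 1
  have hint_B : IntervalIntegrable
      (fun s : ℝ => ‖x‖^2 + ((η^2+2*η*ρ)
            + (4*L^2*η^2*(η+2*ρ)^2 - 3*η^2)*s
            + (4*(η^2+2*η*ρ)*L^2*η^2 - 16*L^2*η^3*(η+2*ρ))*s^2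
            + 16*L^2*η^4*s^3) * ‖g‖^2) MeasureTheory.volume 0 1 := by
    apply Continuous.intervalIntegrable; fun_prop
  have hmono := intervalIntegral.integral_mono_on zero_le_one hint_f hint_B key
  have hBval : (∫ s in (0:ℝ)..1, (‖x‖^2 + ((η^2+2*η*ρ)
            + (4*L^2*η^2*(η+2*ρ)^2 - 3*η^2)*s
            + (4*(η^2+2*η*ρ)*L^2*η^2 - 16*L^2*η^3*(η+2*ρ))*s^2
            + 16*L^2*η^4*s^3) * ‖g‖^2))
      = (‖x‖^2 + (η^2+2*η*ρ)*‖g‖^2)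
        + ((4*L^2*η^2*(η+2*ρ)^2 - 3*η^2)*‖g‖^2)/2
        + ((4*(η^2+2*η*ρ)*L^2*η^2 - 16*L^2*η^3*(η+2*ρ))*‖g‖^2)/3
        + (16*L^2*η^4*‖g‖^2)/4 := by
    rw [show (fun s : ℝ => ‖x‖^2 + ((η^2+2*η*ρ)
            + (4*L^2*η^2*(η+2*ρ)^2 - 3*η^2)*s
            + (4*(η^2+2*η*ρ)*L^2*η^2 - 16*L^2*η^3*(η+2*ρ))*s^2
            + 16*L^2*η^4*s^3) * ‖g‖^2)
        = (fun s : ℝ => (‖x‖^2 + (η^2+2*η*ρ)*‖g‖^2)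
            + ((4*L^2*η^2*(η+2*ρ)^2 - 3*η^2)*‖g‖^2)*s
            + ((4*(η^2+2*η*ρ)*L^2*η^2 - 16*L^2*η^3*(η+2*ρ))*‖g‖^2)*s^2
            + (16*L^2*η^4*‖g‖^2)*s^3) from funext fun s => by ring]
    exact poly_int _ _ _ _
  rw [hBval] at hmono
  have hC2 : η^2*C = η^2/2 - 2*η*ρ
      - (4/3)*L^2*η^2*(η^2 + 2*η*ρ + 2*(η+2*ρ)^2) := by
    rw [hC]; field_simp
  have hbr : (0:ℝ) ≤ 2*η^2 + 40/3*(η*ρ) + 8/3*ρ^2 := by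
    have h1 : (0:ℝ) ≤ η*ρ := mul_nonneg hη0.le hρ
    nlinarith [sq_nonneg η, sq_nonneg ρ]
  have hpos : (0:ℝ) ≤ L^2*η^2*(2*η^2 + 40/3*(η*ρ) + 8/3*ρ^2)*‖g‖^2 :=
    mul_nonneg (mul_nonneg (mul_nonneg (sq_nonneg L) (sq_nonneg η)) hbr) (sq_nonneg _)
  have heq : (‖x‖^2 + (η^2+2*η*ρ)*‖g‖^2)
        + ((4*L^2*η^2*(η+2*ρ)^2 - 3*η^2)*‖g‖^2)/2
        + ((4*(η^2+2*η*ρ)*L^2*η^2 - 16*L^2*η^3*(η+2*ρ))*‖g‖^2)/3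
        + (16*L^2*η^4*‖g‖^2)/4
      = ‖x‖^2 - (η^2/2 - 2*η*ρ - (4/3)*L^2*η^2*(η^2 + 2*η*ρ + 2*(η+2*ρ)^2))*‖g‖^2
        - L^2*η^2*(2*η^2 + 40/3*(η*ρ) + 8/3*ρ^2)*‖g‖^2 := by ring
  rw [heq] at hmono
  have hfin : ‖x‖^2 - (η^2/2 - 2*η*ρ - (4/3)*L^2*η^2*(η^2 + 2*η*ρ + 2*(η+2*ρ)^2))*‖g‖^2
        - L^2*η^2*(2*η^2 + 40/3*(η*ρ) + 8/3*ρ^2)*‖g‖^2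
      ≤ ‖x‖^2 - η^2*C*‖g‖^2 := by
    rw [hC2]; linarith only [hpos]
  linarith only [hmono, hfin]
end

section
/- Let F : ℝ^p → ℝ^p be monotone with F(θ*) = 0, and suppose there are constants K₀, K₁, K₂ ≥ 0 and α ∈ (0,1) with ‖F(θ) − F(θ')‖ ≤ (K₀ + K₁‖F(θ)‖^α + K₂‖θ − θ'‖^{α/(1−α)})·‖θ − θ'‖ for all θ, θ'. Set C_α = K₁ + 2^{α/(1−α)}·K₂ and, for θ ∈ ℝ^p, the adaptive step η(θ) = ν/(K₀ + C_α‖F(θ)‖^α), where 0 < ν ≤ min{ C_α/(8(C_α + K₁)), C_α·(1/(8(C_α − K₁)))^{1−α} }. Then for every θ ∈ ℝ^p: ∫₀¹ ‖θ − η(θ)·F(θ − 2η(θ)s·F(θ)) − θ*‖² ds ≤ ‖θ − θ*‖² − (1/4)·η(θ)²·‖F(θ)‖². -/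
open scoped RealInnerProductSpace

private lemma rampage_aux {E : Type*} [NormedAddCommGroup E] [InnerProductSpace ℝ E]
    (u g w : E) (η s : ℝ) (hη : 0 ≤ η) (hs0 : 0 ≤ s) (hs1 : s ≤ 1)
    (hdle : ‖w - g‖ ≤ s / 2 * ‖g‖)
    (hinner : 2 * η * s * ⟪w, g⟫ ≤ ⟪w, u⟫) :
    ‖u - η • w‖ ^ 2 ≤ ‖u‖ ^ 2 + η ^ 2 * ‖g‖ ^ 2 * (1 - 3 * s + s ^ 2 / 4) := by
  have hexp : ‖u - η • w‖ ^ 2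
      = ‖u‖ ^ 2 - 2 * η * ⟪u, w⟫ + η ^ 2 * ‖w‖ ^ 2 := by
    rw [norm_sub_sq_real, real_inner_smul_right, norm_smul, Real.norm_eq_abs,
      abs_of_nonneg hη, mul_pow]
    ring
  have hnh : ‖w‖ ^ 2 = ‖g‖ ^ 2 + 2 * ⟪g, w - g⟫ + ‖w - g‖ ^ 2 := by
    have hnh' := norm_add_sq_real g (w - g)
    have e : g + (w - g) = w := by abel
    rw [e] at hnh'
    exact hnh'
  have hip : ⟪w, g⟫ = ‖g‖ ^ 2 + ⟪g, w - g⟫ := by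
    have e : w = g + (w - g) := by abel
    nth_rewrite 1 [e]
    rw [inner_add_left, real_inner_self_eq_norm_sq, real_inner_comm]
  have habs := (abs_real_inner_le_norm g (w - g)).trans
    (mul_le_mul_of_nonneg_left hdle (norm_nonneg g))
  obtain ⟨hX2, hX1⟩ := abs_le.mp habs
  have hci : ⟪u, w⟫ = ⟪w, u⟫ := real_inner_comm _ _
  rw [hexp, hci, hnh]
  rw [hip] at hinner
  have h24 : (2 - 4 * s) * ⟪g, w - g⟫ ≤ s * ‖g‖ ^ 2 := by
    rcases le_total s (1/2) with hc | hc
    · have h2s : (0:ℝ) ≤ 2 - 4 * s := by linarith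
      calc (2 - 4 * s) * ⟪g, w - g⟫ ≤ (2 - 4 * s) * (‖g‖ * (s / 2 * ‖g‖)) :=
            mul_le_mul_of_nonneg_left hX1 h2s
        _ ≤ s * ‖g‖ ^ 2 := by
            nlinarith [sq_nonneg ‖g‖, mul_nonneg (mul_nonneg hs0 hs0) (sq_nonneg ‖g‖)]
    · have h2s : (0:ℝ) ≤ 4 * s - 2 := by linarith
      have e : (2 - 4 * s) * ⟪g, w - g⟫ = (4 * s - 2) * (-⟪g, w - g⟫) := by ring
      rw [e]
      calc (4 * s - 2) * (-⟪g, w - g⟫) ≤ (4 * s - 2) * (‖g‖ * (s / 2 * ‖g‖)) := by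
            apply mul_le_mul_of_nonneg_left _ h2s
            linarith
        _ ≤ s * ‖g‖ ^ 2 := by
            nlinarith [sq_nonneg ‖g‖, mul_nonneg (mul_nonneg hs0 hs0) (sq_nonneg ‖g‖), hs1]
  have hd2 : ‖w - g‖ ^ 2 ≤ s ^ 2 / 4 * ‖g‖ ^ 2 := by
    nlinarith [norm_nonneg (w - g), mul_nonneg hs0 (norm_nonneg g)]
  have hstep1 := mul_le_mul_of_nonneg_left hinner
    (by positivity : (0:ℝ) ≤ 2 * η)
  nlinarith [hstep1, mul_le_mul_of_nonneg_left h24 (sq_nonneg η),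
    mul_le_mul_of_nonneg_left hd2 (sq_nonneg η)]


set_option maxHeartbeats 1000000 in
/-- Expected one-step RAMPAGE descent inequality for monotone operators satisfying the
generalized (`α`-symmetric type) growth condition, with the adaptive step size. -/
theorem rampage_one_step_alpha_monotone {p : ℕ}
    (F : EuclideanSpace ℝ (Fin p) → EuclideanSpace ℝ (Fin p))
    (K0 K1 K2 α ν : ℝ) (θstar : EuclideanSpace ℝ (Fin p))
    (hK0 : 0 ≤ K0) (hK1 : 0 ≤ K1) (hK2 : 0 ≤ K2)
    (hα : α ∈ Set.Ioo (0:ℝ) 1)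
    (hmono : ∀ a b, (0:ℝ) ≤ ⟪F a - F b, a - b⟫)
    (hgrowth : ∀ a b,
      ‖F a - F b‖ ≤ (K0 + K1 * ‖F a‖ ^ α + K2 * ‖a - b‖ ^ (α / (1 - α))) * ‖a - b‖)
    (hzero : F θstar = 0)
    (Cα : ℝ) (hCα : Cα = K1 + (2:ℝ) ^ (α / (1 - α)) * K2)
    (ηf : EuclideanSpace ℝ (Fin p) → ℝ)
    (hηf : ∀ θ, ηf θ = ν / (K0 + Cα * ‖F θ‖ ^ α))
    (hν0 : 0 < ν)
    (hν : ν ≤ min (Cα / (8 * (Cα + K1))) (Cα * (1 / (8 * (Cα - K1))) ^ (1 - α)))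
    (θ : EuclideanSpace ℝ (Fin p)) :
    (∫ s in (0:ℝ)..1, ‖θ - ηf θ • F (θ - (2 * ηf θ * s) • F θ) - θstar‖ ^ 2)
      ≤ ‖θ - θstar‖ ^ 2 - (1/4) * ηf θ ^ 2 * ‖F θ‖ ^ 2 := by
  obtain ⟨hα0, hα1⟩ := hα
  have h1α : 0 < 1 - α := by linarith
  have hβ : 0 < α / (1 - α) := div_pos hα0 h1α
  set β : ℝ := α / (1 - α) with hβdef
  have h2β : (0:ℝ) < (2:ℝ) ^ β := Real.rpow_pos_of_pos (by norm_num) β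
  -- Cα > 0
  have hCα0 : 0 ≤ Cα := by
    rw [hCα]; positivity
  have hCpos : 0 < Cα := by
    rcases hCα0.lt_or_eq with h | h
    · exact h
    · exfalso
      have hK1z : K1 = 0 := by
        nlinarith [mul_nonneg h2β.le hK2]
      have := (le_min_iff.mp hν).1
      rw [← h, hK1z] at this
      simp at this
      linarith
  -- K2 > 0
  have hK2pos : 0 < K2 := by
    rcases hK2.lt_or_eq with h | h
    · exact h
    · exfalso
      have hCK1 : Cα - K1 = 0 := by rw [hCα, ← h]; ring
      have := (le_min_iff.mp hν).2
      rw [hCK1] at this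
      simp [Real.zero_rpow (by linarith : (1:ℝ) - α ≠ 0)] at this
      linarith
  have hCK1pos : 0 < Cα - K1 := by
    rw [hCα]; nlinarith
  -- ν ≤ 1/8
  have hν8 : ν ≤ 1/8 := by
    have h1 := (le_min_iff.mp hν).1
    have hd : 0 < 8 * (Cα + K1) := by linarith
    have : Cα / (8 * (Cα + K1)) ≤ 1/8 := by
      rw [div_le_div_iff₀ hd (by norm_num)]
      linarith
    linarith
  -- fact2 : (ν/Cα) * (K2 * (2*ν/Cα)^β) ≤ 1/8
  have hνC : 0 < ν / Cα := div_pos hν0 hCpos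
  have fact2 : ν / Cα * (K2 * (2 * ν / Cα) ^ β) ≤ 1 / 8 := by
    have h2 := (le_min_iff.mp hν).2
    have hstep : ν / Cα ≤ (1 / (8 * (Cα - K1))) ^ (1 - α) := by
      rw [div_le_iff₀ hCpos] at *
      calc ν ≤ Cα * (1 / (8 * (Cα - K1))) ^ (1 - α) := h2
        _ = (1 / (8 * (Cα - K1))) ^ (1 - α) * Cα := by ring
    have hbase : (0:ℝ) ≤ 1 / (8 * (Cα - K1)) := by positivity
    have hpow : (ν / Cα) ^ (1 / (1 - α)) ≤ 1 / (8 * (Cα - K1)) := by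
      have h := Real.rpow_le_rpow hνC.le hstep (by positivity : (0:ℝ) ≤ 1 / (1 - α))
      rwa [← Real.rpow_mul hbase, mul_one_div, div_self h1α.ne', Real.rpow_one] at h
    have e1 : (2 * ν / Cα) ^ β = 2 ^ β * (ν / Cα) ^ β := by
      rw [mul_div_assoc, Real.mul_rpow (by norm_num) hνC.le]
    have e2 : (ν / Cα) ^ (1 / (1 - α)) = (ν / Cα) ^ β * (ν / Cα) := by
      have hb1 : (1:ℝ) / (1 - α) = β + 1 := by
        rw [hβdef]; field_simp; ring
      rw [hb1, Real.rpow_add hνC, Real.rpow_one]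
    calc ν / Cα * (K2 * (2 * ν / Cα) ^ β) = (2 ^ β * K2) * ((ν / Cα) ^ β * (ν / Cα)) := by
          rw [e1]; ring
      _ = (Cα - K1) * ((ν / Cα) ^ (1 / (1 - α))) := by rw [e2, hCα]; ring
      _ ≤ (Cα - K1) * (1 / (8 * (Cα - K1))) :=
          mul_le_mul_of_nonneg_left hpow hCK1pos.le
      _ = 1 / 8 := by field_simp
  -- continuity of F
  have hFcont : Continuous F := by
    rw [continuous_iff_continuousAt]
    intro a
    have key : Filter.Tendsto (fun b => F b - F a) (nhds a) (nhds 0) := by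
      apply squeeze_zero_norm
        (a := fun b => (K0 + K1 * ‖F a‖ ^ α + K2 * ‖a - b‖ ^ β) * ‖a - b‖)
      · intro b; rw [norm_sub_rev]; exact hgrowth a b
      · have h1 : Filter.Tendsto (fun b : EuclideanSpace ℝ (Fin p) => ‖a - b‖)
            (nhds a) (nhds 0) := by
          have hc : Continuous fun b : EuclideanSpace ℝ (Fin p) => ‖a - b‖ :=
            (continuous_const.sub continuous_id).norm
          simpa using hc.tendsto a
        have h2 : Filter.Tendsto (fun b : EuclideanSpace ℝ (Fin p) => ‖a - b‖ ^ β)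
            (nhds a) (nhds 0) := by
          have hc : ContinuousAt (fun x : ℝ => x ^ β) 0 :=
            Real.continuousAt_rpow_const 0 β (Or.inr hβ.le)
          have := hc.tendsto.comp h1
          simpa [Real.zero_rpow hβ.ne', Function.comp_def] using this
        have h3 : Filter.Tendsto
            (fun b : EuclideanSpace ℝ (Fin p) => K0 + K1 * ‖F a‖ ^ α + K2 * ‖a - b‖ ^ β)
            (nhds a) (nhds (K0 + K1 * ‖F a‖ ^ α + K2 * 0)) :=
          Filter.Tendsto.add tendsto_const_nhds (h2.const_mul K2)
        have := h3.mul h1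
        simpa using this
    have : Filter.Tendsto F (nhds a) (nhds (F a)) := by
      have := key.add (tendsto_const_nhds (x := F a))
      simpa using this
    exact this
  by_cases hG0 : F θ = 0
  · simp only [hG0, smul_zero, sub_zero, norm_zero]
    rw [intervalIntegral.integral_const]
    norm_num
  -- main case
  have hGpos : 0 < ‖F θ‖ := norm_pos_iff.mpr hG0
  have hGα : 0 < ‖F θ‖ ^ α := Real.rpow_pos_of_pos hGpos α
  have hD : 0 < K0 + Cα * ‖F θ‖ ^ α := by positivity
  have hηpos : 0 < ηf θ := by rw [hηf]; exact div_pos hν0 hD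
  have hηD : ηf θ * (K0 + Cα * ‖F θ‖ ^ α) = ν := by
    rw [hηf]; field_simp
  have hη1 : ηf θ * (K0 + K1 * ‖F θ‖ ^ α) ≤ ν := by
    rw [← hηD]
    apply mul_le_mul_of_nonneg_left _ hηpos.le
    nlinarith [hCK1pos, hGα.le]
  have hηGα : ηf θ * ‖F θ‖ ^ α ≤ ν / Cα := by
    rw [le_div_iff₀ hCpos]
    nlinarith [mul_nonneg hηpos.le hK0]
  have hGsplit : ‖F θ‖ = ‖F θ‖ ^ α * ‖F θ‖ ^ (1 - α) := by
    have h' : α + (1 - α) = 1 := by ring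
    rw [← Real.rpow_add hGpos, h', Real.rpow_one]
  have h2ηG : 2 * ηf θ * ‖F θ‖ ≤ 2 * ν / Cα * ‖F θ‖ ^ (1 - α) := by
    have e : 2 * ηf θ * ‖F θ‖ = 2 * (ηf θ * ‖F θ‖ ^ α) * ‖F θ‖ ^ (1 - α) := by
      nth_rewrite 1 [hGsplit]; ring
    rw [e]
    have h1a : (0:ℝ) ≤ ‖F θ‖ ^ (1 - α) := Real.rpow_nonneg (norm_nonneg _) _
    have h' : 2 * (ηf θ * ‖F θ‖ ^ α) ≤ 2 * (ν / Cα) := by linarith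
    rw [mul_div_assoc]
    exact mul_le_mul_of_nonneg_right h' h1a
  -- the delta bound
  have hδ : ∀ s ∈ Set.Icc (0:ℝ) 1,
      ‖F (θ - (2 * ηf θ * s) • F θ) - F θ‖ ≤ s / 2 * ‖F θ‖ := by
    intro s hs
    obtain ⟨hs0, hs1⟩ := hs
    have hab : θ - (θ - (2 * ηf θ * s) • F θ) = (2 * ηf θ * s) • F θ := by abel
    have hr : ‖θ - (θ - (2 * ηf θ * s) • F θ)‖ = 2 * ηf θ * s * ‖F θ‖ := by
      rw [hab, norm_smul, Real.norm_eq_abs, abs_of_nonneg (by positivity)]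
    have hg := hgrowth θ (θ - (2 * ηf θ * s) • F θ)
    rw [hr] at hg
    rw [norm_sub_rev]
    refine hg.trans ?_
    have hrβ : (2 * ηf θ * s * ‖F θ‖) ^ β ≤ (2 * ν / Cα) ^ β * ‖F θ‖ ^ α := by
      have hle : 2 * ηf θ * s * ‖F θ‖ ≤ 2 * ν / Cα * ‖F θ‖ ^ (1 - α) := by
        have h' : 2 * ηf θ * s * ‖F θ‖ ≤ 2 * ηf θ * ‖F θ‖ := by
          have := mul_le_mul_of_nonneg_left hs1
            (mul_nonneg (by positivity : (0:ℝ) ≤ 2 * ηf θ) hGpos.le)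
          linarith
        linarith
      have h'' := Real.rpow_le_rpow (by positivity) hle hβ.le
      refine h''.trans_eq ?_
      rw [Real.mul_rpow (by positivity) (Real.rpow_nonneg (norm_nonneg _) _),
        ← Real.rpow_mul (norm_nonneg _)]
      congr 1
      rw [hβdef]; field_simp
    have hterm : ηf θ * (K2 * ((2 * ν / Cα) ^ β * ‖F θ‖ ^ α)) ≤ 1 / 8 := by
      have e : ηf θ * (K2 * ((2 * ν / Cα) ^ β * ‖F θ‖ ^ α))
          = (ηf θ * ‖F θ‖ ^ α) * (K2 * (2 * ν / Cα) ^ β) := by ring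
      rw [e]
      calc (ηf θ * ‖F θ‖ ^ α) * (K2 * (2 * ν / Cα) ^ β)
          ≤ (ν / Cα) * (K2 * (2 * ν / Cα) ^ β) := by
            apply mul_le_mul_of_nonneg_right hηGα (by positivity)
        _ ≤ 1 / 8 := fact2
    have hterm2 : ηf θ * (K2 * (2 * ηf θ * s * ‖F θ‖) ^ β) ≤ 1 / 8 := by
      refine le_trans ?_ hterm
      apply mul_le_mul_of_nonneg_left _ hηpos.le
      exact mul_le_mul_of_nonneg_left hrβ hK2
    have hT : ηf θ * (K0 + K1 * ‖F θ‖ ^ α) + ηf θ * (K2 * (2 * ηf θ * s * ‖F θ‖) ^ β)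
        ≤ 1 / 4 := by linarith
    calc (K0 + K1 * ‖F θ‖ ^ α + K2 * (2 * ηf θ * s * ‖F θ‖) ^ β) * (2 * ηf θ * s * ‖F θ‖)
        = 2 * s * ‖F θ‖ * (ηf θ * (K0 + K1 * ‖F θ‖ ^ α)
            + ηf θ * (K2 * (2 * ηf θ * s * ‖F θ‖) ^ β)) := by ring
      _ ≤ 2 * s * ‖F θ‖ * (1 / 4) := by
          apply mul_le_mul_of_nonneg_left hT (by positivity)
      _ = s / 2 * ‖F θ‖ := by ring
  -- pointwise key inequality
  have key : ∀ s ∈ Set.Icc (0:ℝ) 1,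
      ‖θ - ηf θ • F (θ - (2 * ηf θ * s) • F θ) - θstar‖ ^ 2 ≤
      ‖θ - θstar‖ ^ 2 + ηf θ ^ 2 * ‖F θ‖ ^ 2 * (1 - 3 * s + s ^ 2 / 4) := by
    intro s hs
    obtain ⟨hs0, hs1⟩ := hs
    have hmon : 0 ≤ ⟪F (θ - (2 * ηf θ * s) • F θ), (θ - (2 * ηf θ * s) • F θ) - θstar⟫ := by
      have h' := hmono (θ - (2 * ηf θ * s) • F θ) θstar
      rwa [hzero, sub_zero] at h'
    have hinner : 2 * ηf θ * s * ⟪F (θ - (2 * ηf θ * s) • F θ), F θ⟫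
        ≤ ⟪F (θ - (2 * ηf θ * s) • F θ), θ - θstar⟫ := by
      have hsplit : θ - θstar = ((θ - (2 * ηf θ * s) • F θ) - θstar)
          + (2 * ηf θ * s) • F θ := by abel
      rw [hsplit, inner_add_right, real_inner_smul_right]
      linarith
    have happ := rampage_aux (θ - θstar) (F θ) (F (θ - (2 * ηf θ * s) • F θ))
      (ηf θ) s hηpos.le hs0 hs1 (hδ s ⟨hs0, hs1⟩) hinner
    have e : θ - ηf θ • F (θ - (2 * ηf θ * s) • F θ) - θstar
        = (θ - θstar) - ηf θ • F (θ - (2 * ηf θ * s) • F θ) := by abel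
    rw [e]
    exact happ
  -- integration
  have hcont : Continuous fun s : ℝ =>
      ‖θ - ηf θ • F (θ - (2 * ηf θ * s) • F θ) - θstar‖ ^ 2 := by
    fun_prop
  have hint1 : IntervalIntegrable
      (fun s : ℝ => ‖θ - ηf θ • F (θ - (2 * ηf θ * s) • F θ) - θstar‖ ^ 2)
      MeasureTheory.volume 0 1 := hcont.intervalIntegrable 0 1
  have hcont2 : Continuous fun s : ℝ =>
      ‖θ - θstar‖ ^ 2 + ηf θ ^ 2 * ‖F θ‖ ^ 2 * (1 - 3 * s + s ^ 2 / 4) := by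
    fun_prop
  have hint2 : IntervalIntegrable
      (fun s : ℝ => ‖θ - θstar‖ ^ 2 + ηf θ ^ 2 * ‖F θ‖ ^ 2 * (1 - 3 * s + s ^ 2 / 4))
      MeasureTheory.volume 0 1 := hcont2.intervalIntegrable 0 1
  have hmonoint := intervalIntegral.integral_mono_on (by norm_num : (0:ℝ) ≤ 1)
    hint1 hint2 key
  have hval : (∫ s in (0:ℝ)..1,
      (‖θ - θstar‖ ^ 2 + ηf θ ^ 2 * ‖F θ‖ ^ 2 * (1 - 3 * s + s ^ 2 / 4)))
      = ‖θ - θstar‖ ^ 2 - 5 / 12 * (ηf θ ^ 2 * ‖F θ‖ ^ 2) := by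
    set C1 := ‖θ - θstar‖ ^ 2 with hC1
    set C2 := ηf θ ^ 2 * ‖F θ‖ ^ 2 with hC2
    have hder : ∀ x ∈ Set.uIcc (0:ℝ) 1,
        HasDerivAt (fun s : ℝ => C1 * s + C2 * (s - 3 / 2 * s ^ 2 + s ^ 3 / 12))
          (C1 + C2 * (1 - 3 * x + x ^ 2 / 4)) x := by
      intro x _
      have h1 : HasDerivAt (fun s : ℝ => C1 * s + C2 * (s - 3 / 2 * s ^ 2 + s ^ 3 / 12))
          (C1 * 1 + C2 * (1 - 3 / 2 * ((2:ℕ) * x ^ 1) + ((3:ℕ) * x ^ 2) / 12)) x := by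
        exact ((hasDerivAt_id x).const_mul C1).add
          ((((hasDerivAt_id x).sub ((hasDerivAt_pow 2 x).const_mul (3/2))).add
            ((hasDerivAt_pow 3 x).div_const 12)).const_mul C2)
      convert h1 using 1
      push_cast
      ring
    rw [intervalIntegral.integral_eq_sub_of_hasDerivAt hder hint2]
    norm_num
    ring
  rw [hval] at hmonoint
  refine hmonoint.trans ?_
  have hC2nn : (0:ℝ) ≤ ηf θ ^ 2 * ‖F θ‖ ^ 2 := by positivity
  linarith
end

section
/- Let 𝒳 ⊆ ℝ^p be nonempty, closed, and convex with metric projection Π, let F : ℝ^p → ℝ^p be L-Lipschitz continuous and monotone, and let θ* ∈ 𝒳 satisfy ⟨F(θ*), θ − θ*⟩ ≥ 0 for all θ ∈ 𝒳. Fix 0 < η < 1/(2L), an initial point θ₀ ∈ 𝒳, and any sequence u : ℕ → [0,1], and define the SS-RAMPAGE iterates y_t = Π(θ_t − 2η·u_t·F(θ_t)) and θ_{t+1} = Π(θ_t − 2η·u_t·F(y_t)). Then for every k ∈ ℕ: min_{0≤l≤k} ‖θ_l − y_l‖² ≤ (1/(k+1)) Σ_{l=0}^{k} ‖θ_l − y_l‖²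 ≤ ‖θ₀ − θ*‖² / ((1 − 4η²L²)·(k+1)). -/
open scoped RealInnerProductSpace

set_option maxRecDepth 4000
set_option maxHeartbeats 1000000

/-- Best-iterate `O(1/k)` convergence of SS-RAMPAGE for constrained monotone variational
inequalities: the bound holds for every realization of the scaling sequence `u`. -/
theorem ss_rampage_best_iterate_monotone {p : ℕ}
    (X : Set (EuclideanSpace ℝ (Fin p)))
    (hXne : X.Nonempty) (hXclosed : IsClosed X) (hXconv : Convex ℝ X)
    (proj : EuclideanSpace ℝ (Fin p) → EuclideanSpace ℝ (Fin p))
    (hproj : ∀ w, proj w ∈ X ∧ ∀ v ∈ X, ‖w - proj w‖ ≤ ‖w - v‖)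
    (F : EuclideanSpace ℝ (Fin p) → EuclideanSpace ℝ (Fin p))
    (L η : ℝ)
    (hLip : ∀ a b, ‖F a - F b‖ ≤ L * ‖a - b‖)
    (hmono : ∀ a b, (0:ℝ) ≤ ⟪F a - F b, a - b⟫)
    (θstar : EuclideanSpace ℝ (Fin p)) (hθstarX : θstar ∈ X)
    (hVI : ∀ θ ∈ X, (0:ℝ) ≤ ⟪F θstar, θ - θstar⟫)
    (hη0 : 0 < η) (hη : η < 1 / (2 * L))
    (θ0 : EuclideanSpace ℝ (Fin p)) (hθ0X : θ0 ∈ X)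
    (u : ℕ → ℝ) (hu : ∀ t, u t ∈ Set.Icc (0:ℝ) 1)
    (θ y : ℕ → EuclideanSpace ℝ (Fin p))
    (hinit : θ 0 = θ0)
    (hy : ∀ t, y t = proj (θ t - (2 * η * u t) • F (θ t)))
    (hstep : ∀ t, θ (t+1) = proj (θ t - (2 * η * u t) • F (y t)))
    (k : ℕ) :
    (Finset.range (k+1)).inf' Finset.nonempty_range_add_one (fun l => ‖θ l - y l‖ ^ 2)
      ≤ (1 / (k+1 : ℝ)) * ∑ l ∈ Finset.range (k+1), ‖θ l - y l‖ ^ 2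
    ∧ (1 / (k+1 : ℝ)) * ∑ l ∈ Finset.range (k+1), ‖θ l - y l‖ ^ 2
      ≤ ‖θ0 - θstar‖ ^ 2 / ((1 - 4 * η ^ 2 * L ^ 2) * (k+1)) := by
  -- L must be positive
  have hL : 0 < L := by
    by_contra h
    push_neg at h
    have h1 : 1 / (2 * L) ≤ 0 := div_nonpos_of_nonneg_of_nonpos zero_le_one (by linarith)
    linarith
  have h2Lη : 2 * L * η < 1 := by
    rw [lt_div_iff₀ (by linarith : 0 < 2 * L)] at hη
    linarith
  have hc : 0 < 1 - 4 * η ^ 2 * L ^ 2 := by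
    have ha : (0:ℝ) < 1 - 2 * L * η := by linarith
    have hb : (0:ℝ) < 1 + 2 * L * η := by positivity
    nlinarith [mul_pos ha hb]
  -- variational characterization of the projection
  have hvar : ∀ w, ∀ v ∈ X, ⟪w - proj w, v - proj w⟫ ≤ 0 := by
    intro w v hv
    haveI : Nonempty X := hXne.to_subtype
    have hbdd : BddBelow (Set.range fun z : X => ‖w - (z : EuclideanSpace ℝ (Fin p))‖) := by
      refine ⟨0, ?_⟩
      rintro x ⟨z, rfl⟩
      exact norm_nonneg _
    have heq : ‖w - proj w‖ = ⨅ z : X, ‖w - (z : EuclideanSpace ℝ (Fin p))‖ := by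
      refine le_antisymm (le_ciInf fun z => (hproj w).2 z z.2) ?_
      exact ciInf_le hbdd (⟨proj w, (hproj w).1⟩ : X)
    exact (norm_eq_iInf_iff_real_inner_le_zero hXconv (hproj w).1).mp heq v hv
  -- one-step inequality
  have key : ∀ t, (1 - 4 * η ^ 2 * L ^ 2) * ‖θ t - y t‖ ^ 2
      ≤ ‖θ t - θstar‖ ^ 2 - ‖θ (t+1) - θstar‖ ^ 2 := by
    intro t
    obtain ⟨hu0, hu1⟩ := hu t
    set γ : ℝ := 2 * η * u t with hγdef
    have hγ0 : 0 ≤ γ := by positivity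
    have hγη : γ ≤ 2 * η := by nlinarith
    have hγsq : γ ^ 2 ≤ 4 * η ^ 2 := by nlinarith
    have e1 : y t = proj (θ t - γ • F (θ t)) := hy t
    have e2 : θ (t+1) = proj (θ t - γ • F (y t)) := hstep t
    have hytX : y t ∈ X := by rw [e1]; exact (hproj _).1
    have hx'X : θ (t+1) ∈ X := by rw [e2]; exact (hproj _).1
    have h1 : ⟪(θ t - γ • F (θ t)) - y t, θ (t+1) - y t⟫ ≤ 0 := by
      have h := hvar (θ t - γ • F (θ t)) (θ (t+1)) hx'X
      rwa [← e1] at h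
    have h2 : ⟪(θ t - γ • F (y t)) - θ (t+1), θstar - θ (t+1)⟫ ≤ 0 := by
      have h := hvar (θ t - γ • F (y t)) θstar hθstarX
      rwa [← e2] at h
    have h3 : 0 ≤ γ * ⟪F (y t), y t - θstar⟫ := by
      have hm := hmono (y t) θstar
      have hv := hVI (y t) hytX
      rw [inner_sub_left] at hm
      have : 0 ≤ ⟪F (y t), y t - θstar⟫ := by linarith
      exact mul_nonneg hγ0 this
    set nc : ℝ := ‖θ t - y t‖ with hncdef
    set nd : ℝ := ‖y t - θ (t+1)‖ with hnddef
    have hnc0 : 0 ≤ nc := norm_nonneg _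
    have hnd0 : 0 ≤ nd := norm_nonneg _
    have h4 : ⟪F (y t) - F (θ t), y t - θ (t+1)⟫ ≤ L * nc * nd := by
      have habs : |⟪F (y t) - F (θ t), y t - θ (t+1)⟫| ≤ ‖F (y t) - F (θ t)‖ * nd :=
        abs_real_inner_le_norm _ _
      have hlip : ‖F (y t) - F (θ t)‖ ≤ L * nc := by
        have := hLip (y t) (θ t)
        rwa [norm_sub_rev (y t) (θ t)] at this
      have : ‖F (y t) - F (θ t)‖ * nd ≤ L * nc * nd :=
        mul_le_mul_of_nonneg_right hlip hnd0
      have := (abs_le.mp habs).2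
      linarith
    have H4 : 2 * γ * ⟪F (y t) - F (θ t), y t - θ (t+1)⟫ ≤ 2 * γ * (L * nc * nd) :=
      mul_le_mul_of_nonneg_left h4 (by linarith)
    have H5 : 2 * γ * L * nc * nd ≤ γ ^ 2 * L ^ 2 * nc ^ 2 + nd ^ 2 := by
      nlinarith [sq_nonneg (γ * L * nc - nd)]
    have H6 : γ ^ 2 * L ^ 2 * nc ^ 2 ≤ 4 * η ^ 2 * L ^ 2 * nc ^ 2 := by
      nlinarith [sq_nonneg (L * nc)]
    have hnc : nc ^ 2 = ⟪θ t - y t, θ t - y t⟫ := (real_inner_self_eq_norm_sq _).symm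
    have hnd : nd ^ 2 = ⟪y t - θ (t+1), y t - θ (t+1)⟫ := (real_inner_self_eq_norm_sq _).symm
    have hna : ‖θ t - θstar‖ ^ 2 = ⟪θ t - θstar, θ t - θstar⟫ :=
      (real_inner_self_eq_norm_sq _).symm
    have hnb : ‖θ (t+1) - θstar‖ ^ 2 = ⟪θ (t+1) - θstar, θ (t+1) - θstar⟫ :=
      (real_inner_self_eq_norm_sq _).symm
    rw [hna, hnb]
    simp only [inner_sub_left, inner_sub_right, real_inner_smul_left]
      at h1 h2 h3 H4 hnc hnd ⊢
    simp only [real_inner_comm] at h1 h2 h3 H4 hnc hnd ⊢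
    linarith [h1, h2, h3, H4, H5, H6, hnc, hnd]
  -- telescoping sum bound
  set S : ℝ := ∑ l ∈ Finset.range (k+1), ‖θ l - y l‖ ^ 2 with hS
  have hS0 : 0 ≤ S := Finset.sum_nonneg fun l _ => by positivity
  have hsum : (1 - 4 * η ^ 2 * L ^ 2) * S ≤ ‖θ0 - θstar‖ ^ 2 := by
    have h1 : (1 - 4 * η ^ 2 * L ^ 2) * S
        = ∑ l ∈ Finset.range (k+1), (1 - 4 * η ^ 2 * L ^ 2) * ‖θ l - y l‖ ^ 2 :=
      Finset.mul_sum _ _ _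
    have h2 : ∑ l ∈ Finset.range (k+1), (1 - 4 * η ^ 2 * L ^ 2) * ‖θ l - y l‖ ^ 2
        ≤ ∑ l ∈ Finset.range (k+1), (‖θ l - θstar‖ ^ 2 - ‖θ (l+1) - θstar‖ ^ 2) :=
      Finset.sum_le_sum fun l _ => key l
    have h3 : ∑ l ∈ Finset.range (k+1), (‖θ l - θstar‖ ^ 2 - ‖θ (l+1) - θstar‖ ^ 2)
        = ‖θ 0 - θstar‖ ^ 2 - ‖θ (k+1) - θstar‖ ^ 2 :=
      Finset.sum_range_sub' (fun l => ‖θ l - θstar‖ ^ 2) (k+1)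
    have h4 : ‖θ 0 - θstar‖ ^ 2 = ‖θ0 - θstar‖ ^ 2 := by rw [hinit]
    have h5 : 0 ≤ ‖θ (k+1) - θstar‖ ^ 2 := by positivity
    linarith
  have hk : (0:ℝ) < (k:ℝ) + 1 := by positivity
  constructor
  · have hinf : ∀ l ∈ Finset.range (k+1),
        (Finset.range (k+1)).inf' Finset.nonempty_range_add_one (fun l => ‖θ l - y l‖ ^ 2)
          ≤ ‖θ l - y l‖ ^ 2 := fun l hl => Finset.inf'_le _ hl
    have hbound : ((k:ℝ)+1) *
        (Finset.range (k+1)).inf' Finset.nonempty_range_add_one (fun l => ‖θ l - y l‖ ^ 2) ≤ S := by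
      calc ((k:ℝ)+1) * (Finset.range (k+1)).inf' Finset.nonempty_range_add_one
              (fun l => ‖θ l - y l‖ ^ 2)
          = ∑ _l ∈ Finset.range (k+1), (Finset.range (k+1)).inf' Finset.nonempty_range_add_one
              (fun l => ‖θ l - y l‖ ^ 2) := by
            rw [Finset.sum_const, Finset.card_range, nsmul_eq_mul]
            push_cast
            ring
        _ ≤ S := Finset.sum_le_sum hinf
    rw [one_div, inv_mul_eq_div, le_div_iff₀ hk]
    linarith
  · rw [one_div, inv_mul_eq_div, div_le_div_iff₀ hk (by positivity)]
    nlinarith [mul_le_mul_of_nonneg_right hsum hk.le]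
end

section
/- Let F : ℝ^p → ℝ^p be L-Lipschitz continuous and μ-co-coercive with μ > 0, let θ* satisfy F(θ*) = 0, and let 0 < η ≤ min(2μ, 1/(√3·L)). Then for every θ ∈ ℝ^p and every u ∈ [0,1], the one-step RAMPAGE+ update θ₊ = θ − (η/2)·[ F(θ − 2η·u·F(θ)) + F(θ − 2η·(1−u)·F(θ)) ] satisfies ‖θ₊ − θ*‖² ≤ ‖θ − θ*‖² − η²(1 − 3η²L²)·‖F(θ)‖². -/
open scoped RealInnerProductSpace

lemma scalar_key_rampage (D N s r x u : ℝ) (hD : 0 ≤ D) (hN : 0 ≤ N)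
    (hCS : (s - r)^2 ≤ D * N) (hs : -(2*x*u*N) ≤ s) (hr : -(2*x*(1-u)*N) ≤ r)
    (hx : 0 ≤ x) (hx2 : 3*x^2 ≤ 1) (hu0 : 0 ≤ u) (hu1 : u ≤ 1) :
    0 ≤ D/4 + 2*u*s + 2*(1-u)*r + (1+3*x^2)*N := by
  rcases eq_or_lt_of_le hN with h0 | hNpos
  · have hN0 : N = 0 := h0.symm
    subst hN0
    nlinarith [mul_nonneg hu0 (by linarith : (0:ℝ) ≤ s),
      mul_nonneg (by linarith : (0:ℝ) ≤ 1-u) (by linarith : (0:ℝ) ≤ r)]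
  · have hσ : 0 ≤ s + 2*x*u*N := by linarith
    have hρ : 0 ≤ r + 2*x*(1-u)*N := by linarith
    have hQ : 0 ≤ (s-r)^2 + 8*u*s*N + 8*(1-u)*r*N + 4*(1+3*x^2)*N^2 := by
      nlinarith [sq_nonneg (s - r - 2*x*(1-2*u)*N),
        mul_nonneg (mul_nonneg hσ hN) hx,
        mul_nonneg (mul_nonneg hσ hN) hu0,
        mul_nonneg (mul_nonneg hρ hN) hx,
        mul_nonneg (mul_nonneg hρ hN) (by linarith : (0:ℝ) ≤ 1-u),
        mul_nonneg hσ hN, mul_nonneg hρ hN,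
        sq_nonneg ((2*x-1)*N),
        mul_nonneg (mul_nonneg (mul_nonneg hu0 (by linarith : (0:ℝ) ≤ 1-u))
          (mul_nonneg hx (by nlinarith : (0:ℝ) ≤ 2 - x))) (mul_nonneg hN hN)]
    nlinarith [mul_pos hNpos hNpos, mul_nonneg hD hN]

lemma assemble_rampage (η μ x N nA nB D IAz IBz s r u : ℝ)
    (hη0 : 0 < η) (hμη : η/2 ≤ μ)
    (hA : μ*nA ≤ IAz - (2*η*u)*(N + s))
    (hB : μ*nB ≤ IBz - (2*η*(1-u))*(N + r))
    (hkey : 0 ≤ D/4 + 2*u*s + 2*(1-u)*r + (1+3*x^2)*N)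
    (hnA : 0 ≤ nA) (hnB : 0 ≤ nB) (hN : 0 ≤ N) :
    η^2*(1-3*x^2)*N ≤ η*(IAz+IBz) - (η/2)^2*(2*nA+2*nB-D) := by
  have h1 := mul_le_mul_of_nonneg_left hA (le_of_lt hη0)
  have h2 := mul_le_mul_of_nonneg_left hB (le_of_lt hη0)
  have h3 := mul_le_mul_of_nonneg_left (mul_le_mul_of_nonneg_right hμη hnA) (le_of_lt hη0)
  have h4 := mul_le_mul_of_nonneg_left (mul_le_mul_of_nonneg_right hμη hnB) (le_of_lt hη0)
  have h5 := mul_le_mul_of_nonneg_left hkey (sq_nonneg η)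
  nlinarith [h1, h2, h3, h4, h5]

set_option maxHeartbeats 1000000 in
/-- Deterministic one-step RAMPAGE+ descent inequality under Lipschitzness and
co-coercivity, valid for every antithetic scalar `u ∈ [0,1]`. -/
theorem rampage_plus_one_step_cocoercive {p : ℕ}
    (F : EuclideanSpace ℝ (Fin p) → EuclideanSpace ℝ (Fin p))
    (L μ η : ℝ) (θstar : EuclideanSpace ℝ (Fin p))
    (hLip : ∀ a b, ‖F a - F b‖ ≤ L * ‖a - b‖)
    (hμ : 0 < μ)
    (hcoco : ∀ a b, μ * ‖F a - F b‖ ^ 2 ≤ ⟪F a - F b, a - b⟫)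
    (hzero : F θstar = 0)
    (hη0 : 0 < η) (hη : η ≤ min (2 * μ) (1 / (Real.sqrt 3 * L)))
    (θ : EuclideanSpace ℝ (Fin p)) (u : ℝ) (hu : u ∈ Set.Icc (0:ℝ) 1) :
    ‖θ - (η/2) • (F (θ - (2 * η * u) • F θ) + F (θ - (2 * η * (1 - u)) • F θ)) - θstar‖ ^ 2
      ≤ ‖θ - θstar‖ ^ 2 - η ^ 2 * (1 - 3 * η ^ 2 * L ^ 2) * ‖F θ‖ ^ 2 := by
  obtain ⟨hu0, hu1⟩ := hu
  -- L is positive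
  have hηL : η ≤ 1 / (Real.sqrt 3 * L) := le_trans hη (min_le_right _ _)
  have hημ : η ≤ 2 * μ := le_trans hη (min_le_left _ _)
  have hs3 : (0:ℝ) < Real.sqrt 3 := Real.sqrt_pos.2 (by norm_num)
  have hL : 0 < L := by
    by_contra h
    push_neg at h
    have h1 : Real.sqrt 3 * L ≤ 0 := mul_nonpos_of_nonneg_of_nonpos hs3.le h
    have h2 : 1 / (Real.sqrt 3 * L) ≤ 0 := div_nonpos_of_nonneg_of_nonpos zero_le_one h1
    linarith
  have hx2 : 3 * (η*L)^2 ≤ 1 := by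
    have h1 : 0 < Real.sqrt 3 * L := mul_pos hs3 hL
    have h2 : η * (Real.sqrt 3 * L) ≤ 1 := (le_div_iff₀ h1).mp hηL
    have h3 : 0 ≤ η * (Real.sqrt 3 * L) := by positivity
    have hsq : Real.sqrt 3 ^ 2 = 3 := Real.sq_sqrt (by norm_num)
    nlinarith [sq_nonneg (η * (Real.sqrt 3 * L))]
  set f := F θ with hf
  set a := θ - (2 * η * u) • f with ha
  set b := θ - (2 * η * (1 - u)) • f with hb
  set A := F a with hA
  set B := F b with hB
  set z := θ - θstar with hz
  -- co-coercivity at a and θstar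
  have hcocoA : μ * ‖A‖^2 ≤ ⟪A, z⟫ - (2*η*u) * ⟪A, f⟫ := by
    have h := hcoco a θstar
    rw [hzero, sub_zero] at h
    have hab : a - θstar = z - (2*η*u) • f := by
      rw [ha, hz]; abel
    rw [hab, inner_sub_right, real_inner_smul_right] at h
    exact h
  have hcocoB : μ * ‖B‖^2 ≤ ⟪B, z⟫ - (2*η*(1-u)) * ⟪B, f⟫ := by
    have h := hcoco b θstar
    rw [hzero, sub_zero] at h
    have hab : b - θstar = z - (2*η*(1-u)) • f := by
      rw [hb, hz]; abel
    rw [hab, inner_sub_right, real_inner_smul_right] at h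
    exact h
  -- Lipschitz bounds
  have hLipA : ‖A - f‖ ≤ 2*η*L*u * ‖f‖ := by
    have h := hLip a θ
    have hat : a - θ = -((2*η*u) • f) := by rw [ha]; abel
    rw [hat, norm_neg, norm_smul, Real.norm_eq_abs,
        abs_of_nonneg (by positivity : (0:ℝ) ≤ 2*η*u)] at h
    calc ‖A - f‖ ≤ L * (2*η*u * ‖f‖) := h
      _ = 2*η*L*u * ‖f‖ := by ring
  have hLipB : ‖B - f‖ ≤ 2*η*L*(1-u) * ‖f‖ := by
    have h := hLip b θ
    have hbt : b - θ = -((2*η*(1-u)) • f) := by rw [hb]; abel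
    rw [hbt, norm_neg, norm_smul, Real.norm_eq_abs,
        abs_of_nonneg (mul_nonneg (by linarith : (0:ℝ) ≤ 2*η) (by linarith : (0:ℝ) ≤ 1-u) : (0:ℝ) ≤ 2*η*(1-u))] at h
    calc ‖B - f‖ ≤ L * (2*η*(1-u) * ‖f‖) := h
      _ = 2*η*L*(1-u) * ‖f‖ := by ring
  -- inner product bounds
  have hsA : -(2*(η*L)*u*‖f‖^2) ≤ ⟪A - f, f⟫ := by
    have h1 : |⟪A - f, f⟫| ≤ ‖A - f‖ * ‖f‖ := abs_real_inner_le_norm _ _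
    have h2 : ‖A - f‖ * ‖f‖ ≤ (2*η*L*u*‖f‖) * ‖f‖ :=
      mul_le_mul_of_nonneg_right hLipA (norm_nonneg _)
    have := neg_abs_le ⟪A - f, f⟫
    nlinarith
  have hsB : -(2*(η*L)*(1-u)*‖f‖^2) ≤ ⟪B - f, f⟫ := by
    have h1 : |⟪B - f, f⟫| ≤ ‖B - f‖ * ‖f‖ := abs_real_inner_le_norm _ _
    have h2 : ‖B - f‖ * ‖f‖ ≤ (2*η*L*(1-u)*‖f‖) * ‖f‖ :=
      mul_le_mul_of_nonneg_right hLipB (norm_nonneg _)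
    have := neg_abs_le ⟪B - f, f⟫
    nlinarith
  -- Cauchy-Schwarz for the difference
  have hCS : (⟪A - f, f⟫ - ⟪B - f, f⟫)^2 ≤ ‖A - B‖^2 * ‖f‖^2 := by
    have h1 : ⟪A - f, f⟫ - ⟪B - f, f⟫ = ⟪A - B, f⟫ := by
      rw [← inner_sub_left]
      congr 1
      abel
    rw [h1]
    have h2 := abs_real_inner_le_norm (A - B) f
    nlinarith [abs_nonneg ⟪A - B, f⟫, sq_abs ⟪A - B, f⟫, norm_nonneg (A - B), norm_nonneg f]
  -- the scalar inequality
  have hkey := scalar_key_rampage (‖A - B‖^2) (‖f‖^2) ⟪A - f, f⟫ ⟪B - f, f⟫ (η*L) u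
    (sq_nonneg _) (sq_nonneg _) hCS hsA hsB (by positivity) hx2 hu0 hu1
  -- decompose inner products with f
  have hAf : ⟪A, f⟫ = ‖f‖^2 + ⟪A - f, f⟫ := by
    rw [inner_sub_left, real_inner_self_eq_norm_sq]; ring
  have hBf : ⟪B, f⟫ = ‖f‖^2 + ⟪B - f, f⟫ := by
    rw [inner_sub_left, real_inner_self_eq_norm_sq]; ring
  -- parallelogram
  have hpar : ‖A + B‖^2 = 2*‖A‖^2 + 2*‖B‖^2 - ‖A - B‖^2 := by
    have h1 := norm_add_sq_real A B
    have h2 := norm_sub_sq_real A B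
    linarith
  -- norm expansion of the update
  have hexp : ‖z - (η/2) • (A + B)‖^2
      = ‖z‖^2 - η * ⟪z, A + B⟫ + (η/2)^2 * ‖A + B‖^2 := by
    rw [norm_sub_sq_real, real_inner_smul_right, norm_smul, Real.norm_eq_abs,
        abs_of_nonneg (by positivity : (0:ℝ) ≤ η/2), mul_pow]
    ring
  have hzAB : ⟪z, A + B⟫ = ⟪A, z⟫ + ⟪B, z⟫ := by
    rw [inner_add_right, real_inner_comm z A, real_inner_comm z B]
  have hμη : η / 2 ≤ μ := by linarith
  -- main chain
  have hcocoA' := hcocoA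
  rw [hAf] at hcocoA'
  have hcocoB' := hcocoB
  rw [hBf] at hcocoB'
  have hmain := assemble_rampage η μ (η*L) (‖f‖^2) (‖A‖^2) (‖B‖^2) (‖A - B‖^2)
    ⟪A, z⟫ ⟪B, z⟫ ⟪A - f, f⟫ ⟪B - f, f⟫ u hη0 (by linarith) hcocoA' hcocoB' hkey
    (sq_nonneg _) (sq_nonneg _) (sq_nonneg _)
  have hgoal : θ - (η/2) • (A + B) - θstar = z - (η/2) • (A + B) := by
    rw [hz]; abel
  calc ‖θ - (η/2) • (A + B) - θstar‖^2
      = ‖z - (η/2) • (A + B)‖^2 := by rw [hgoal]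
    _ = ‖z‖^2 - η * ⟪z, A + B⟫ + (η/2)^2 * ‖A + B‖^2 := hexp
    _ ≤ ‖z‖^2 - η^2*(1-3*(η*L)^2)*‖f‖^2 := by
        rw [hzAB, hpar]
        linarith [hmain]
    _ = ‖z‖ ^ 2 - η ^ 2 * (1 - 3 * η ^ 2 * L ^ 2) * ‖f‖ ^ 2 := by ring
end

section
/- Let F : ℝ^p → ℝ^p be L-Lipschitz continuous and ρ-co-hypomonotone with ρ ≥ 0, let θ* satisfy F(θ*) = 0, and let η > 0 be such that C := 3/4 − 2ρ/η − 16L²(ρ + η/2)² − 4L²η(ρ + η/2) > 0. Fix θ₀ ∈ ℝ^p and any sequence u : ℕ → [0,1], and define the RAMPAGE+ iterates θ_{t+1} = θ_t − (η/2)·[ F(θ_t − 2η·u_t·F(θ_t)) + F(θ_t − 2η·(1 − u_t)·F(θ_t)) ]. Then for every k ∈ ℕ: min_{0≤l≤k} ‖F(θ_l)‖² ≤ (1/(k+1)) Σ_{l=0}^{k} ‖F(θ_l)‖² ≤ ‖θ₀ − θ*‖² / (η²·C·(k+1)). -/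
set_option maxHeartbeats 1000000

open scoped RealInnerProductSpace


/-- Scalar core of the RAMPAGE+ one-step descent inequality. -/
lemma rampage_scalar_core (η ρ L C n a b d1 d2 s1 s2 e P1 P2 : ℝ)
    (hη : 0 < η) (hρ : 0 ≤ ρ) (hn : 0 ≤ n)
    (ha : 0 ≤ a) (hb : 0 ≤ b) (hab : a + b = 2*η)
    (hd1 : 0 ≤ d1) (hd2 : 0 ≤ d2)
    (hd1' : d1 ≤ L*a*n) (hd2' : d2 ≤ L*b*n)
    (hs1 : |s1| ≤ d1*n) (hs2 : |s2| ≤ d2*n)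
    (hP1 : -(ρ*(n^2 + 2*s1 + d1^2)) ≤ P1)
    (hP2 : -(ρ*(n^2 + 2*s2 + d2^2)) ≤ P2)
    (he0 : 0 ≤ e) (he : e ≤ (d1+d2)^2)
    (hCη : η^2*C = 3/4*η^2 - 2*ρ*η - 16*L^2*η^2*(ρ+η/2)^2 - 4*L^2*η^3*(ρ+η/2)) :
    η^2*C*n^2 ≤ η*(P1+P2) + η*(a*(n^2+s1)+b*(n^2+s2))
      - η^2*n^2 - η^2*(s1+s2) - (η^2/4)*e := by
  have ha2 : a ≤ 2*η := by linarith
  have hb2 : b ≤ 2*η := by linarith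
  -- cross terms
  have habs1 : |a - 2*ρ - η| ≤ 2*ρ + η := abs_le.mpr ⟨by linarith, by linarith⟩
  have habs2 : |b - 2*ρ - η| ≤ 2*ρ + η := abs_le.mpr ⟨by linarith, by linarith⟩
  have h1 : -((2*ρ+η)*(d1*n)) ≤ (a - 2*ρ - η)*s1 := by
    have h := abs_mul (a - 2*ρ - η) s1
    have h2 : |(a - 2*ρ - η)*s1| ≤ (2*ρ+η)*(d1*n) := by
      rw [h]
      exact mul_le_mul habs1 hs1 (abs_nonneg _) (by linarith)
    have := neg_abs_le ((a - 2*ρ - η)*s1)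
    linarith
  have h2 : -((2*ρ+η)*(d2*n)) ≤ (b - 2*ρ - η)*s2 := by
    have h := abs_mul (b - 2*ρ - η) s2
    have h2 : |(b - 2*ρ - η)*s2| ≤ (2*ρ+η)*(d2*n) := by
      rw [h]
      exact mul_le_mul habs2 hs2 (abs_nonneg _) (by linarith)
    have := neg_abs_le ((b - 2*ρ - η)*s2)
    linarith
  have hd12 : d1 + d2 ≤ 2*L*η*n := by
    have heq : L*a*n + L*b*n = 2*L*η*n := by linear_combination (L*n)*hab
    linarith
  have hdn : (d1+d2)*n ≤ 2*L*η*n^2 := by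
    have := mul_le_mul_of_nonneg_right hd12 hn
    linarith [this]
  have h3 : (2*ρ+η)*((d1+d2)*n) ≤ (2*ρ+η)*(2*L*η*n^2) :=
    mul_le_mul_of_nonneg_left hdn (by linarith)
  have h4 : (2*ρ+η)*(2*L*η*n^2) ≤ (η/4)*n^2 + 16*L^2*η*(ρ+η/2)^2*n^2 := by
    linarith [mul_nonneg (mul_nonneg hη.le (sq_nonneg n)) (sq_nonneg (4*L*(ρ+η/2) - 1/2))]
  have hd1sq : d1^2 ≤ L^2*a^2*n^2 := by linarith [mul_self_le_mul_self hd1 hd1']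
  have hd2sq : d2^2 ≤ L^2*b^2*n^2 := by linarith [mul_self_le_mul_self hd2 hd2']
  have hsqL : L^2*a^2*n^2 + 2*L^2*(a*b)*n^2 + L^2*b^2*n^2 = 4*L^2*η^2*n^2 := by
    linear_combination (L^2*n^2*(a+b+2*η))*hab
  have habL : 0 ≤ 2*L^2*(a*b)*n^2 := by
    have := mul_nonneg (mul_nonneg ha hb) (sq_nonneg (L*n))
    linarith
  have h5 : d1^2 + d2^2 ≤ 4*L^2*η^2*n^2 := by linarith
  have h6 : e ≤ 4*L^2*η^2*n^2 := by
    have h12 := mul_self_le_mul_self (by linarith : (0:ℝ) ≤ d1 + d2) hd12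
    linarith
  -- combine, after dividing by η
  have hρ5 : ρ*(d1^2+d2^2) ≤ 4*ρ*L^2*η^2*n^2 := by
    have := mul_le_mul_of_nonneg_left h5 hρ
    linarith
  have hee : (η/4)*e ≤ L^2*η^3*n^2 := by
    have := mul_le_mul_of_nonneg_left h6 (by linarith : (0:ℝ) ≤ η/4)
    linarith
  have habn : a*n^2 + b*n^2 = 2*η*n^2 := by linear_combination n^2*hab
  have hpos : 0 ≤ L^2*η^3*n^2 := by positivity
  have hC' : η*C = 3/4*η - 2*ρ - 16*L^2*η*(ρ+η/2)^2 - 4*L^2*η^2*(ρ+η/2) := by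
    have hηne : η ≠ 0 := ne_of_gt hη
    have h : η*(η*C) = η*(3/4*η - 2*ρ - 16*L^2*η*(ρ+η/2)^2 - 4*L^2*η^2*(ρ+η/2)) := by
      linear_combination hCη
    exact mul_left_cancel₀ hηne h
  have key : η*C*n^2 ≤ (a*(n^2+s1)+b*(n^2+s2)) + (P1+P2) - η*n^2 - η*(s1+s2) - (η/4)*e := by
    calc η*C*n^2 = (3/4*η - 2*ρ - 16*L^2*η*(ρ+η/2)^2 - 4*L^2*η^2*(ρ+η/2))*n^2 := by rw [hC']
    _ ≤ _ := by linarith [h1, h2, h3, h4, hP1, hP2, hρ5, hee, habn, hpos]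
  have hfin := mul_le_mul_of_nonneg_left key hη.le
  linarith [hfin]

lemma rampage_step {p : ℕ}
    (F : EuclideanSpace ℝ (Fin p) → EuclideanSpace ℝ (Fin p))
    (L ρ η : ℝ) (θstar : EuclideanSpace ℝ (Fin p))
    (hLip : ∀ a b, ‖F a - F b‖ ≤ L * ‖a - b‖)
    (hρ : 0 ≤ ρ)
    (hcohypo : ∀ a b, -(ρ * ‖F a - F b‖ ^ 2) ≤ ⟪F a - F b, a - b⟫)
    (hzero : F θstar = 0)
    (hη0 : 0 < η) (C : ℝ)
    (hC : C = 3/4 - 2 * ρ / η - 16 * L ^ 2 * (ρ + η/2) ^ 2 - 4 * L ^ 2 * η * (ρ + η/2))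
    (u : ℝ) (hu : u ∈ Set.Icc (0:ℝ) 1)
    (x : EuclideanSpace ℝ (Fin p)) :
    ‖(x - (η/2) • (F (x - (2 * η * u) • F x) + F (x - (2 * η * (1 - u)) • F x))) - θstar‖^2
      + η^2*C*‖F x‖^2 ≤ ‖x - θstar‖^2 := by
  obtain ⟨hu0, hu1⟩ := hu
  set F0 := F x with hF0
  set a : ℝ := 2 * η * u with hadef
  set b : ℝ := 2 * η * (1 - u) with hbdef
  set y := x - a • F0 with hy
  set z := x - b • F0 with hz
  set Fy := F y with hFy
  set Fz := F z with hFz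
  set w := x - θstar with hw
  set n : ℝ := ‖F0‖ with hn
  set d1 : ℝ := ‖Fy - F0‖ with hd1
  set d2 : ℝ := ‖Fz - F0‖ with hd2
  set s1 : ℝ := ⟪Fy - F0, F0⟫ with hs1
  set s2 : ℝ := ⟪Fz - F0, F0⟫ with hs2
  set e : ℝ := ‖(Fy - F0) + (Fz - F0)‖^2 with he
  set P1 : ℝ := ⟪Fy, y - θstar⟫ with hP1
  set P2 : ℝ := ⟪Fz, z - θstar⟫ with hP2
  have ha : 0 ≤ a := by positivity
  have hb : 0 ≤ b := by
    have : 0 ≤ 1 - u := by linarith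
    positivity
  have hab : a + b = 2*η := by rw [hadef, hbdef]; ring
  -- Lipschitz bounds
  have hd1' : d1 ≤ L*a*n := by
    have h := hLip y x
    have : y - x = -(a • F0) := by rw [hy]; abel
    rw [this] at h
    rw [norm_neg, norm_smul, Real.norm_eq_abs, abs_of_nonneg ha] at h
    calc d1 ≤ L * (a * n) := h
    _ = L*a*n := by ring
  have hd2' : d2 ≤ L*b*n := by
    have h := hLip z x
    have : z - x = -(b • F0) := by rw [hz]; abel
    rw [this] at h
    rw [norm_neg, norm_smul, Real.norm_eq_abs, abs_of_nonneg hb] at h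
    calc d2 ≤ L * (b * n) := h
    _ = L*b*n := by ring
  -- Cauchy-Schwarz
  have hcs1 : |s1| ≤ d1*n := abs_real_inner_le_norm _ _
  have hcs2 : |s2| ≤ d2*n := abs_real_inner_le_norm _ _
  -- norm expansions
  have hFyn : ‖Fy‖^2 = n^2 + 2*s1 + d1^2 := by
    have hdecomp : Fy = F0 + (Fy - F0) := by abel
    rw [hdecomp, norm_add_sq_real, real_inner_comm]
  have hFzn : ‖Fz‖^2 = n^2 + 2*s2 + d2^2 := by
    have hdecomp : Fz = F0 + (Fz - F0) := by abel
    rw [hdecomp, norm_add_sq_real, real_inner_comm]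
  -- co-hypomonotonicity bounds
  have hco1 : -(ρ*(n^2 + 2*s1 + d1^2)) ≤ P1 := by
    have h := hcohypo y θstar
    rw [hzero, sub_zero] at h
    rw [← hFyn]; exact h
  have hco2 : -(ρ*(n^2 + 2*s2 + d2^2)) ≤ P2 := by
    have h := hcohypo z θstar
    rw [hzero, sub_zero] at h
    rw [← hFzn]; exact h
  have he0 : 0 ≤ e := sq_nonneg _
  have hee : e ≤ (d1+d2)^2 := by
    have h := norm_add_le (Fy - F0) (Fz - F0)
    have h0 : (0:ℝ) ≤ ‖(Fy - F0) + (Fz - F0)‖ := norm_nonneg _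
    nlinarith
  have hCη : η^2*C = 3/4*η^2 - 2*ρ*η - 16*L^2*η^2*(ρ+η/2)^2 - 4*L^2*η^3*(ρ+η/2) := by
    rw [hC]; field_simp
  have hscalar := rampage_scalar_core η ρ L C n a b d1 d2 s1 s2 e P1 P2
    hη0 hρ (norm_nonneg _) ha hb hab (norm_nonneg _) (norm_nonneg _)
    hd1' hd2' hcs1 hcs2 hco1 hco2 he0 hee hCη
  -- inner product identities
  have hI1 : ⟪w, Fy + Fz⟫ = P1 + P2 + a*(n^2+s1) + b*(n^2+s2) := by
    have hw1 : w = (y - θstar) + a • F0 := by rw [hw, hy]; abel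
    have hw2 : w = (z - θstar) + b • F0 := by rw [hw, hz]; abel
    have hyF : ⟪Fy, F0⟫ = n^2 + s1 := by
      have hdecomp : Fy = F0 + (Fy - F0) := by abel
      calc ⟪Fy, F0⟫ = ⟪F0 + (Fy - F0), F0⟫ := by rw [← hdecomp]
      _ = ⟪F0, F0⟫ + ⟪Fy - F0, F0⟫ := inner_add_left _ _ _
      _ = n^2 + s1 := by rw [real_inner_self_eq_norm_sq]
    have hzF : ⟪Fz, F0⟫ = n^2 + s2 := by
      have hdecomp : Fz = F0 + (Fz - F0) := by abel
      calc ⟪Fz, F0⟫ = ⟪F0 + (Fz - F0), F0⟫ := by rw [← hdecomp]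
      _ = ⟪F0, F0⟫ + ⟪Fz - F0, F0⟫ := inner_add_left _ _ _
      _ = n^2 + s2 := by rw [real_inner_self_eq_norm_sq]
    calc ⟪w, Fy + Fz⟫ = ⟪w, Fy⟫ + ⟪w, Fz⟫ := inner_add_right _ _ _
    _ = ⟪Fy, w⟫ + ⟪Fz, w⟫ := by rw [real_inner_comm w Fy, real_inner_comm w Fz]
    _ = ⟪Fy, (y - θstar) + a • F0⟫ + ⟪Fz, (z - θstar) + b • F0⟫ := by
        rw [← hw1, ← hw2]
    _ = (P1 + a * ⟪Fy, F0⟫) + (P2 + b * ⟪Fz, F0⟫) := by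
        rw [inner_add_right, inner_add_right, real_inner_smul_right, real_inner_smul_right]
    _ = P1 + P2 + a*(n^2+s1) + b*(n^2+s2) := by rw [hyF, hzF]; ring
  have hI2 : ‖Fy + Fz‖^2 = 4*n^2 + 4*s1 + 4*s2 + e := by
    have hdecomp : Fy + Fz = (2:ℝ) • F0 + ((Fy - F0) + (Fz - F0)) := by
      rw [two_smul]; abel
    rw [hdecomp, norm_add_sq_real]
    have h1 : ‖(2:ℝ) • F0‖^2 = 4*n^2 := by
      rw [norm_smul, Real.norm_eq_abs]
      rw [abs_of_nonneg (by norm_num : (0:ℝ) ≤ 2)]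
      ring
    have h2 : ⟪(2:ℝ) • F0, (Fy - F0) + (Fz - F0)⟫ = 2*(s1 + s2) := by
      rw [real_inner_smul_left, inner_add_right]
      rw [real_inner_comm (Fy - F0) F0, real_inner_comm (Fz - F0) F0]
    rw [h1, h2]; ring
  -- final expansion of the squared distance
  have hmain : ‖w - (η/2) • (Fy + Fz)‖^2
      = ‖w‖^2 - η * ⟪w, Fy + Fz⟫ + (η^2/4) * ‖Fy + Fz‖^2 := by
    rw [norm_sub_sq_real, real_inner_smul_right, norm_smul, Real.norm_eq_abs,
      abs_of_nonneg (by linarith : (0:ℝ) ≤ η/2), mul_pow]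
    ring
  have hgoal : (x - (η/2) • (Fy + Fz)) - θstar = w - (η/2) • (Fy + Fz) := by
    rw [hw]; abel
  rw [hgoal, hmain, hI1, hI2]
  have : η^2*C*n^2 ≤ η*(P1+P2) + η*(a*(n^2+s1)+b*(n^2+s2))
      - η^2*n^2 - η^2*(s1+s2) - (η^2/4)*e := hscalar
  nlinarith [this]


/-- Deterministic best-iterate `O(1/k)` convergence of RAMPAGE+ under Lipschitzness and
co-hypomonotonicity: the bound holds for every realization of the antithetic sequence. -/
theorem rampage_plus_best_iterate_cohypomonotone {p : ℕ}
    (F : EuclideanSpace ℝ (Fin p) → EuclideanSpace ℝ (Fin p))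
    (L ρ η : ℝ) (θstar θ0 : EuclideanSpace ℝ (Fin p))
    (hLip : ∀ a b, ‖F a - F b‖ ≤ L * ‖a - b‖)
    (hρ : 0 ≤ ρ)
    (hcohypo : ∀ a b, -(ρ * ‖F a - F b‖ ^ 2) ≤ ⟪F a - F b, a - b⟫)
    (hzero : F θstar = 0)
    (hη0 : 0 < η)
    (C : ℝ)
    (hC : C = 3/4 - 2 * ρ / η - 16 * L ^ 2 * (ρ + η/2) ^ 2 - 4 * L ^ 2 * η * (ρ + η/2))
    (hCpos : 0 < C)
    (u : ℕ → ℝ) (hu : ∀ t, u t ∈ Set.Icc (0:ℝ) 1)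
    (θ : ℕ → EuclideanSpace ℝ (Fin p))
    (hinit : θ 0 = θ0)
    (hstep : ∀ t, θ (t+1)
      = θ t - (η/2) • (F (θ t - (2 * η * u t) • F (θ t))
          + F (θ t - (2 * η * (1 - u t)) • F (θ t))))
    (k : ℕ) :
    (Finset.range (k+1)).inf' Finset.nonempty_range_add_one (fun l => ‖F (θ l)‖ ^ 2)
      ≤ (1 / (k+1 : ℝ)) * ∑ l ∈ Finset.range (k+1), ‖F (θ l)‖ ^ 2
    ∧ (1 / (k+1 : ℝ)) * ∑ l ∈ Finset.range (k+1), ‖F (θ l)‖ ^ 2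
      ≤ ‖θ0 - θstar‖ ^ 2 / (η ^ 2 * C * (k+1)) := by
  have hk1 : (0:ℝ) < (k:ℝ) + 1 := by positivity
  set S : ℝ := ∑ l ∈ Finset.range (k+1), ‖F (θ l)‖ ^ 2 with hS
  set I : ℝ := (Finset.range (k+1)).inf' Finset.nonempty_range_add_one
      (fun l => ‖F (θ l)‖ ^ 2) with hI
  constructor
  · -- min ≤ average
    have hle : ∀ l ∈ Finset.range (k+1), I ≤ ‖F (θ l)‖ ^ 2 := by
      intro l hl
      exact Finset.inf'_le _ hl
    have hsum : (Finset.range (k+1)).card • I ≤ S :=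
      Finset.card_nsmul_le_sum _ _ _ hle
    rw [Finset.card_range, nsmul_eq_mul] at hsum
    have hsum' : ((k:ℝ)+1) * I ≤ S := by push_cast at hsum; linarith
    have h2 := mul_le_mul_of_nonneg_left hsum' (by positivity : (0:ℝ) ≤ 1/((k:ℝ)+1))
    have hid : (1/((k:ℝ)+1)) * (((k:ℝ)+1) * I) = I := by
      field_simp
    rw [hid] at h2
    exact h2
  · -- average ≤ bound
    have hdesc : ∀ t, ‖θ (t+1) - θstar‖^2 + η^2*C*‖F (θ t)‖^2 ≤ ‖θ t - θstar‖^2 := by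
      intro t
      rw [hstep t]
      exact rampage_step F L ρ η θstar hLip hρ hcohypo hzero hη0 C hC (u t) (hu t) (θ t)
    have htel : ∀ m : ℕ, η^2*C * ∑ l ∈ Finset.range m, ‖F (θ l)‖^2 + ‖θ m - θstar‖^2
        ≤ ‖θ0 - θstar‖^2 := by
      intro m
      induction m with
      | zero => simp [hinit]
      | succ m ih =>
        have h := hdesc m
        rw [Finset.sum_range_succ]
        have : η^2*C * (∑ l ∈ Finset.range m, ‖F (θ l)‖^2 + ‖F (θ m)‖^2)
            = η^2*C * ∑ l ∈ Finset.range m, ‖F (θ l)‖^2 + η^2*C*‖F (θ m)‖^2 := by ring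
        rw [this]
        linarith
    have hSb : η^2*C * S ≤ ‖θ0 - θstar‖^2 := by
      have h := htel (k+1)
      have h0 : (0:ℝ) ≤ ‖θ (k+1) - θstar‖^2 := sq_nonneg _
      linarith
    have hpos : (0:ℝ) < η^2*C := by positivity
    have hgoal : (1/((k:ℝ)+1)) * S ≤ ‖θ0 - θstar‖^2 / (η^2*C*((k:ℝ)+1)) := by
      rw [le_div_iff₀ (by positivity : (0:ℝ) < η^2*C*((k:ℝ)+1))]
      have : 1/((k:ℝ)+1) * S * (η^2*C*((k:ℝ)+1)) = η^2*C*S := by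
        field_simp
      rw [this]
      exact hSb
    exact hgoal
end

section
/- Let F : ℝ^p → ℝ^p be monotone with F(θ*) = 0, and suppose there are constants K₀, K₁, K₂ ≥ 0 and α ∈ (0,1) with ‖F(θ) − F(θ')‖ ≤ (K₀ + K₁‖F(θ)‖^α + K₂‖θ − θ'‖^{α/(1−α)})·‖θ − θ'‖ for all θ, θ'. Set C_α = K₁ + 2^{α/(1−α)}·K₂ and, for θ ∈ ℝ^p, the adaptive step η(θ) = ν/(K₀ + C_α‖F(θ)‖^α), where 0 < ν ≤ min{ √6·C_α/(16(C_α + K₁)), C_α·(√6/(16(C_α − K₁)))^{1−α} }. Then for every θ ∈ ℝ^p: ∫₀¹ ‖θ − (η(θ)/2)·[F(θ − 2η(θ)s·F(θ)) + F(θ − 2η(θ)(1−s)·F(θ))] − θ*‖² ds ≤ ‖θ − θ*‖² − (1/4)·η(θ)²·‖F(θ)‖². -/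
open scoped RealInnerProductSpace
open Filter Topology

lemma rampage_cont_of_growth {E : Type*} [NormedAddCommGroup E]
    (F : E → E) (C : E → ℝ) (K2 c : ℝ) (hc : 0 < c)
    (hgrowth : ∀ a b, ‖F a - F b‖ ≤ (C a + K2 * ‖a - b‖ ^ c) * ‖a - b‖) :
    Continuous F := by
  rw [continuous_iff_continuousAt]
  intro a
  rw [ContinuousAt, tendsto_iff_norm_sub_tendsto_zero]
  have hn : Continuous fun b : E => ‖a - b‖ := (continuous_const.sub continuous_id).norm
  have hcont : ContinuousAt (fun b => (C a + K2 * ‖a - b‖ ^ c) * ‖a - b‖) a := by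
    exact ((continuousAt_const.add (continuousAt_const.mul
      ((Real.continuousAt_rpow_const _ _ (Or.inr hc.le)).comp hn.continuousAt))).mul
      hn.continuousAt)
  have hb : Filter.Tendsto (fun b => (C a + K2 * ‖a - b‖ ^ c) * ‖a - b‖) (nhds a) (nhds 0) := by
    have h0 : (C a + K2 * ‖a - a‖ ^ c) * ‖a - a‖ = 0 := by simp
    simpa [h0] using hcont.tendsto
  refine squeeze_zero (fun b => norm_nonneg _) (fun b => ?_) hb
  rw [norm_sub_rev]
  exact hgrowth a b

set_option maxHeartbeats 1000000 in
lemma rampage_per_s {E : Type*} [NormedAddCommGroup E] [InnerProductSpace ℝ E]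
    (A B G X : E) (η s : ℝ) (hη : 0 ≤ η) (hs0 : 0 ≤ s) (hs1 : s ≤ 1)
    (hA : ‖A - G‖ ≤ s * (Real.sqrt 6 / 4) * ‖G‖)
    (hB : ‖B - G‖ ≤ (1 - s) * (Real.sqrt 6 / 4) * ‖G‖)
    (hmA : 2 * η * s * ⟪A, G⟫ ≤ ⟪A, X⟫)
    (hmB : 2 * η * (1 - s) * ⟪B, G⟫ ≤ ⟪B, X⟫) :
    ‖X - (η / 2) • (A + B)‖ ^ 2 ≤ ‖X‖ ^ 2 - 1/4 * η ^ 2 * ‖G‖ ^ 2 := by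
  have h6 : Real.sqrt 6 ^ 2 = 6 := Real.sq_sqrt (by norm_num)
  have h6n : 0 ≤ Real.sqrt 6 := Real.sqrt_nonneg 6
  set δ : ℝ := Real.sqrt 6 / 4 with hδ
  set r : ℝ := ‖G‖ with hrdef
  have hr0 : 0 ≤ r := norm_nonneg _
  have hδ0 : 0 ≤ δ := by rw [hδ]; positivity
  have hnum : δ ^ 2 / 4 + δ ≤ 3 / 4 := by rw [hδ]; nlinarith
  have hexp : ‖X - (η / 2) • (A + B)‖ ^ 2
      = ‖X‖ ^ 2 - η * ⟪A + B, X⟫ + η ^ 2 / 4 * ‖A + B‖ ^ 2 := by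
    rw [norm_sub_sq_real, real_inner_smul_right, norm_smul, Real.norm_eq_abs, mul_pow, sq_abs,
      real_inner_comm]
    ring
  have hW : ‖A + B - (2:ℝ) • G‖ ^ 2 = ‖A + B‖ ^ 2 - 4 * ⟪A + B, G⟫ + 4 * r ^ 2 := by
    rw [norm_sub_sq_real, real_inner_smul_right, norm_smul, Real.norm_eq_abs, mul_pow, sq_abs]
    rw [hrdef]
    ring
  have hWb : ‖A + B - (2:ℝ) • G‖ ≤ δ * r := by
    have hid : A + B - (2:ℝ) • G = (A - G) + (B - G) := by
      rw [two_smul]; abel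
    rw [hid]
    calc ‖(A - G) + (B - G)‖ ≤ ‖A - G‖ + ‖B - G‖ := norm_add_le _ _
      _ ≤ s * δ * r + (1 - s) * δ * r := add_le_add hA hB
      _ = δ * r := by ring
  have hW2 : ‖A + B - (2:ℝ) • G‖ ^ 2 ≤ δ ^ 2 * r ^ 2 := by
    nlinarith [norm_nonneg (A + B - (2:ℝ) • G)]
  have hABd : ‖A - B‖ ≤ δ * r := by
    have hid : A - B = (A - G) - (B - G) := by abel
    rw [hid]
    calc ‖(A - G) - (B - G)‖ ≤ ‖A - G‖ + ‖B - G‖ := norm_sub_le _ _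
      _ ≤ s * δ * r + (1 - s) * δ * r := add_le_add hA hB
      _ = δ * r := by ring
  have hPQ : |⟪A, G⟫ - ⟪B, G⟫| ≤ δ * r ^ 2 := by
    rw [show ⟪A, G⟫ - ⟪B, G⟫ = ⟪A - B, G⟫ from (inner_sub_left _ _ _).symm]
    calc |⟪A - B, G⟫| ≤ ‖A - B‖ * ‖G‖ := abs_real_inner_le_norm _ _
      _ ≤ δ * r * r := mul_le_mul_of_nonneg_right hABd hr0
      _ = δ * r ^ 2 := by ring
  have hcross : (1 - 2*s) * (⟪A, G⟫ - ⟪B, G⟫) ≤ δ * r ^ 2 := by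
    have h1 : |1 - 2*s| ≤ 1 := abs_le.mpr ⟨by linarith, by linarith⟩
    calc (1 - 2*s) * (⟪A, G⟫ - ⟪B, G⟫) ≤ |(1 - 2*s) * (⟪A, G⟫ - ⟪B, G⟫)| := le_abs_self _
      _ = |1 - 2*s| * |⟪A, G⟫ - ⟪B, G⟫| := abs_mul _ _
      _ ≤ 1 * (δ * r ^ 2) := mul_le_mul h1 hPQ (abs_nonneg _) one_pos.le
      _ = δ * r ^ 2 := one_mul _
  have hiadd : ⟪A + B, X⟫ = ⟪A, X⟫ + ⟪B, X⟫ := inner_add_left _ _ _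
  have hgadd : ⟪A + B, G⟫ = ⟪A, G⟫ + ⟪B, G⟫ := inner_add_left _ _ _
  have hstep1 : η * (2 * η * s * ⟪A, G⟫ + 2 * η * (1 - s) * ⟪B, G⟫) ≤ η * (⟪A, X⟫ + ⟪B, X⟫) :=
    mul_le_mul_of_nonneg_left (add_le_add hmA hmB) hη
  have hWsc : η^2/4 * ‖A + B‖^2
      = η^2/4 * ‖A + B - (2:ℝ) • G‖^2 + η^2 * (⟪A, G⟫ + ⟪B, G⟫) - η^2 * r^2 := by
    rw [hgadd] at hW
    linear_combination (η^2/4) * hW.symm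
  have h1 : η^2 * ((1 - 2*s) * (⟪A, G⟫ - ⟪B, G⟫)) ≤ η^2 * (δ * r^2) :=
    mul_le_mul_of_nonneg_left hcross (sq_nonneg η)
  have h2 : η^2/4 * ‖A + B - (2:ℝ) • G‖^2 ≤ η^2/4 * (δ^2 * r^2) :=
    mul_le_mul_of_nonneg_left hW2 (by positivity)
  have h3 : η^2*r^2 * (δ^2/4 + δ) ≤ η^2*r^2 * (3/4) :=
    mul_le_mul_of_nonneg_left hnum (by positivity)
  rw [hexp, hiadd]
  nlinarith [hstep1, hWsc, h1, h2, h3]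


set_option maxHeartbeats 2000000 in
/-- Expected one-step RAMPAGE+ descent inequality for monotone operators satisfying the
generalized (`α`-symmetric type) growth condition, with the adaptive step size. -/
theorem rampage_plus_one_step_alpha_monotone {p : ℕ}
    (F : EuclideanSpace ℝ (Fin p) → EuclideanSpace ℝ (Fin p))
    (K0 K1 K2 α ν : ℝ) (θstar : EuclideanSpace ℝ (Fin p))
    (hK0 : 0 ≤ K0) (hK1 : 0 ≤ K1) (hK2 : 0 ≤ K2)
    (hα : α ∈ Set.Ioo (0:ℝ) 1)
    (hmono : ∀ a b, (0:ℝ) ≤ ⟪F a - F b, a - b⟫)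
    (hgrowth : ∀ a b,
      ‖F a - F b‖ ≤ (K0 + K1 * ‖F a‖ ^ α + K2 * ‖a - b‖ ^ (α / (1 - α))) * ‖a - b‖)
    (hzero : F θstar = 0)
    (Cα : ℝ) (hCα : Cα = K1 + (2:ℝ) ^ (α / (1 - α)) * K2)
    (ηf : EuclideanSpace ℝ (Fin p) → ℝ)
    (hηf : ∀ θ, ηf θ = ν / (K0 + Cα * ‖F θ‖ ^ α))
    (hν0 : 0 < ν)
    (hν : ν ≤ min (Real.sqrt 6 * Cα / (16 * (Cα + K1)))
      (Cα * (Real.sqrt 6 / (16 * (Cα - K1))) ^ (1 - α)))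
    (θ : EuclideanSpace ℝ (Fin p)) :
    (∫ s in (0:ℝ)..1,
        ‖θ - (ηf θ / 2) • (F (θ - (2 * ηf θ * s) • F θ)
            + F (θ - (2 * ηf θ * (1 - s)) • F θ)) - θstar‖ ^ 2)
      ≤ ‖θ - θstar‖ ^ 2 - (1/4) * ηf θ ^ 2 * ‖F θ‖ ^ 2 := by
  obtain ⟨hαpos, hα1⟩ := hα
  have h1α : 0 < 1 - α := by linarith
  have hβpos : 0 < α / (1 - α) := div_pos hαpos h1α
  have h6n : 0 ≤ Real.sqrt 6 := Real.sqrt_nonneg 6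
  -- K2 must be positive
  have hK2pos : 0 < K2 := by
    rcases hK2.lt_or_eq with h | h
    · exact h
    · exfalso
      have hCK : Cα - K1 = 0 := by rw [hCα, ← h]; ring
      have hb : Cα * (Real.sqrt 6 / (16 * (Cα - K1))) ^ (1 - α) = 0 := by
        rw [hCK]
        norm_num [Real.zero_rpow h1α.ne']
      have : ν ≤ 0 := (hν.trans (min_le_right _ _)).trans hb.le
      linarith
  have h2β : (0:ℝ) < (2:ℝ) ^ (α / (1 - α)) := Real.rpow_pos_of_pos two_pos _
  have hCK : Cα - K1 = (2:ℝ) ^ (α / (1 - α)) * K2 := by rw [hCα]; ring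
  have hCKpos : 0 < Cα - K1 := by rw [hCK]; positivity
  have hCαpos : 0 < Cα := by linarith
  have hν1 : ν ≤ Real.sqrt 6 * Cα / (16 * (Cα + K1)) := hν.trans (min_le_left _ _)
  have hν2 : ν ≤ Cα * (Real.sqrt 6 / (16 * (Cα - K1))) ^ (1 - α) := hν.trans (min_le_right _ _)
  have h2ν : 2 * ν ≤ Real.sqrt 6 / 8 := by
    have hd : Real.sqrt 6 * Cα / (16 * (Cα + K1)) ≤ Real.sqrt 6 / 16 := by
      rw [div_le_div_iff₀ (by positivity) (by norm_num)]
      nlinarith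
    linarith
  -- trivial case F θ = 0
  by_cases hFθ : F θ = 0
  · simp only [hFθ, smul_zero, sub_zero, add_zero]
    rw [intervalIntegral.integral_const]
    simp [hFθ]
  have hr : 0 < ‖F θ‖ := norm_pos_iff.mpr hFθ
  have hrα : 0 < ‖F θ‖ ^ α := Real.rpow_pos_of_pos hr α
  have hD : 0 < K0 + Cα * ‖F θ‖ ^ α := by positivity
  have hηθ : ηf θ = ν / (K0 + Cα * ‖F θ‖ ^ α) := hηf θ
  have hηpos : 0 < ηf θ := hηθ ▸ div_pos hν0 hD
  -- step size bound
  have hstep : ηf θ ≤ ν / (Cα * ‖F θ‖ ^ α) := by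
    rw [hηθ]
    exact div_le_div_of_nonneg_left hν0.le (by positivity) (by linarith)
  have hE1le : 2 * ηf θ * ‖F θ‖ ≤ 2 * ν / Cα * ‖F θ‖ ^ (1 - α) := by
    have hr1 : ‖F θ‖ ^ (1 - α) = ‖F θ‖ / ‖F θ‖ ^ α := by
      rw [Real.rpow_sub hr, Real.rpow_one]
    rw [hr1]
    have h := mul_le_mul_of_nonneg_right hstep hr.le
    calc 2 * ηf θ * ‖F θ‖ ≤ 2 * (ν / (Cα * ‖F θ‖ ^ α) * ‖F θ‖) := by linarith
      _ = 2 * ν / Cα * (‖F θ‖ / ‖F θ‖ ^ α) := by field_simp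
  -- rpow bound from the second constraint
  have hX : (ν / Cα) ^ (α / (1 - α) + 1) ≤ Real.sqrt 6 / (16 * (Cα - K1)) := by
    have hXpos : 0 < Real.sqrt 6 / (16 * (Cα - K1)) :=
      div_pos (Real.sqrt_pos.mpr (by norm_num)) (by positivity)
    have h1 : ν / Cα ≤ (Real.sqrt 6 / (16 * (Cα - K1))) ^ (1 - α) :=
      (div_le_iff₀ hCαpos).mpr (by linarith [hν2])
    calc (ν / Cα) ^ (α / (1 - α) + 1)
        ≤ ((Real.sqrt 6 / (16 * (Cα - K1))) ^ (1 - α)) ^ (α / (1 - α) + 1) :=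
          Real.rpow_le_rpow (by positivity) h1 (by positivity)
      _ = Real.sqrt 6 / (16 * (Cα - K1)) := by
          rw [← Real.rpow_mul hXpos.le,
            show (1 - α) * (α / (1 - α) + 1) = 1 by (field_simp; ring),
            Real.rpow_one]
  -- the key perturbation bound
  have KL : ∀ t ∈ Set.Icc (0:ℝ) 1,
      ‖F (θ - (2 * ηf θ * t) • F θ) - F θ‖ ≤ t * (Real.sqrt 6 / 4) * ‖F θ‖ := by
    rintro t ⟨ht0, ht1⟩
    rcases eq_or_lt_of_le ht0 with rfl | ht0'
    · simp
    have hEpos : 0 < 2 * ηf θ * t * ‖F θ‖ := by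
      have := mul_pos (mul_pos (mul_pos two_pos hηpos) ht0') hr
      linarith
    have hE1pos : 0 < 2 * ηf θ * ‖F θ‖ := by nlinarith
    have hEt : ‖θ - (θ - (2 * ηf θ * t) • F θ)‖ = 2 * ηf θ * t * ‖F θ‖ := by
      rw [sub_sub_cancel, norm_smul, Real.norm_eq_abs,
        abs_of_nonneg (by nlinarith : (0:ℝ) ≤ 2 * ηf θ * t)]
    have hg := hgrowth θ (θ - (2 * ηf θ * t) • F θ)
    rw [hEt] at hg
    rw [norm_sub_rev]
    refine hg.trans ?_
    have hEle : 2 * ηf θ * t * ‖F θ‖ ≤ 2 * ηf θ * ‖F θ‖ := by nlinarith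
    have hterm1 : (K0 + K1 * ‖F θ‖ ^ α) * (2 * ηf θ * t * ‖F θ‖)
        ≤ Real.sqrt 6 / 8 * (t * ‖F θ‖) := by
      have hKle : K0 + K1 * ‖F θ‖ ^ α ≤ K0 + Cα * ‖F θ‖ ^ α := by nlinarith
      have ha : (K0 + K1 * ‖F θ‖ ^ α) * (2 * ηf θ * t * ‖F θ‖)
          ≤ (K0 + Cα * ‖F θ‖ ^ α) * (2 * ηf θ * t * ‖F θ‖) :=
        mul_le_mul_of_nonneg_right hKle hEpos.le
      have hb : (K0 + Cα * ‖F θ‖ ^ α) * (2 * ηf θ * t * ‖F θ‖) = 2 * ν * (t * ‖F θ‖) := by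
        rw [hηθ]; field_simp
      have hc : 2 * ν * (t * ‖F θ‖) ≤ Real.sqrt 6 / 8 * (t * ‖F θ‖) :=
        mul_le_mul_of_nonneg_right h2ν (by positivity)
      linarith
    have hterm2 : K2 * (2 * ηf θ * t * ‖F θ‖) ^ (α / (1 - α)) * (2 * ηf θ * t * ‖F θ‖)
        ≤ Real.sqrt 6 / 8 * (t * ‖F θ‖) := by
      have hA1 : (2 * ηf θ * t * ‖F θ‖) ^ (α / (1 - α)) ≤ (2 * ηf θ * ‖F θ‖) ^ (α / (1 - α)) :=
        Real.rpow_le_rpow hEpos.le hEle hβpos.le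
      have hfin : K2 * (2 * ηf θ * ‖F θ‖) ^ (α / (1 - α)) * (2 * ηf θ * ‖F θ‖)
          ≤ Real.sqrt 6 / 8 * ‖F θ‖ := by
        have e1 : (2 * ηf θ * ‖F θ‖) ^ (α / (1 - α)) * (2 * ηf θ * ‖F θ‖)
            = (2 * ηf θ * ‖F θ‖) ^ (α / (1 - α) + 1) :=
          (Real.rpow_add_one hE1pos.ne' _).symm
        have e2 : (2 * ηf θ * ‖F θ‖) ^ (α / (1 - α) + 1)
            ≤ (2 * ν / Cα * ‖F θ‖ ^ (1 - α)) ^ (α / (1 - α) + 1) :=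
          Real.rpow_le_rpow hE1pos.le hE1le (by positivity)
        have e3 : (2 * ν / Cα * ‖F θ‖ ^ (1 - α)) ^ (α / (1 - α) + 1)
            = (2:ℝ) ^ (α / (1 - α) + 1) * (ν / Cα) ^ (α / (1 - α) + 1) * ‖F θ‖ := by
          rw [show 2 * ν / Cα * ‖F θ‖ ^ (1 - α) = 2 * (ν / Cα) * ‖F θ‖ ^ (1 - α) by ring,
            Real.mul_rpow (by positivity) (by positivity),
            Real.mul_rpow (by norm_num) (by positivity),
            ← Real.rpow_mul hr.le,
            show (1 - α) * (α / (1 - α) + 1) = 1 by (field_simp; ring),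
            Real.rpow_one]
        have e4 : K2 * ((2:ℝ) ^ (α / (1 - α) + 1) * (ν / Cα) ^ (α / (1 - α) + 1) * ‖F θ‖)
            ≤ K2 * ((2:ℝ) ^ (α / (1 - α) + 1) * (Real.sqrt 6 / (16 * (Cα - K1))) * ‖F θ‖) := by
          have h2p : (0:ℝ) < (2:ℝ) ^ (α / (1 - α) + 1) := Real.rpow_pos_of_pos two_pos _
          have h5 := mul_le_mul_of_nonneg_left hX h2p.le
          nlinarith [mul_le_mul_of_nonneg_right h5 hr.le]
        have e5 : K2 * ((2:ℝ) ^ (α / (1 - α) + 1) * (Real.sqrt 6 / (16 * (Cα - K1))) * ‖F θ‖)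
            = Real.sqrt 6 / 8 * ‖F θ‖ := by
          rw [Real.rpow_add two_pos, Real.rpow_one, hCK]
          field_simp
          ring
        calc K2 * (2 * ηf θ * ‖F θ‖) ^ (α / (1 - α)) * (2 * ηf θ * ‖F θ‖)
            = K2 * ((2 * ηf θ * ‖F θ‖) ^ (α / (1 - α) + 1)) := by rw [← e1]; ring
          _ ≤ K2 * ((2 * ν / Cα * ‖F θ‖ ^ (1 - α)) ^ (α / (1 - α) + 1)) :=
              mul_le_mul_of_nonneg_left e2 hK2
          _ = K2 * ((2:ℝ) ^ (α / (1 - α) + 1) * (ν / Cα) ^ (α / (1 - α) + 1) * ‖F θ‖) := by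
              rw [e3]
          _ ≤ K2 * ((2:ℝ) ^ (α / (1 - α) + 1) * (Real.sqrt 6 / (16 * (Cα - K1))) * ‖F θ‖) := e4
          _ = Real.sqrt 6 / 8 * ‖F θ‖ := e5
      calc K2 * (2 * ηf θ * t * ‖F θ‖) ^ (α / (1 - α)) * (2 * ηf θ * t * ‖F θ‖)
          ≤ K2 * (2 * ηf θ * ‖F θ‖) ^ (α / (1 - α)) * (t * (2 * ηf θ * ‖F θ‖)) := by
            have h1 : K2 * (2 * ηf θ * t * ‖F θ‖) ^ (α / (1 - α))
                ≤ K2 * (2 * ηf θ * ‖F θ‖) ^ (α / (1 - α)) := mul_le_mul_of_nonneg_left hA1 hK2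
            have h4 := mul_le_mul_of_nonneg_right h1 hEpos.le
            calc K2 * (2 * ηf θ * t * ‖F θ‖) ^ (α / (1 - α)) * (2 * ηf θ * t * ‖F θ‖)
                ≤ K2 * (2 * ηf θ * ‖F θ‖) ^ (α / (1 - α)) * (2 * ηf θ * t * ‖F θ‖) := h4
              _ = K2 * (2 * ηf θ * ‖F θ‖) ^ (α / (1 - α)) * (t * (2 * ηf θ * ‖F θ‖)) := by ring
        _ = t * (K2 * (2 * ηf θ * ‖F θ‖) ^ (α / (1 - α)) * (2 * ηf θ * ‖F θ‖)) := by ring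
        _ ≤ t * (Real.sqrt 6 / 8 * ‖F θ‖) := mul_le_mul_of_nonneg_left hfin ht0
        _ = Real.sqrt 6 / 8 * (t * ‖F θ‖) := by ring
    calc (K0 + K1 * ‖F θ‖ ^ α + K2 * (2 * ηf θ * t * ‖F θ‖) ^ (α / (1 - α)))
            * (2 * ηf θ * t * ‖F θ‖)
        = (K0 + K1 * ‖F θ‖ ^ α) * (2 * ηf θ * t * ‖F θ‖)
            + K2 * (2 * ηf θ * t * ‖F θ‖) ^ (α / (1 - α)) * (2 * ηf θ * t * ‖F θ‖) := by ring
      _ ≤ Real.sqrt 6 / 8 * (t * ‖F θ‖) + Real.sqrt 6 / 8 * (t * ‖F θ‖) :=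
          add_le_add hterm1 hterm2
      _ = t * (Real.sqrt 6 / 4) * ‖F θ‖ := by ring
  -- monotonicity consequence
  have hmGen : ∀ c : ℝ, c * ⟪F (θ - c • F θ), F θ⟫ ≤ ⟪F (θ - c • F θ), θ - θstar⟫ := by
    intro c
    have h := hmono (θ - c • F θ) θstar
    rw [hzero, sub_zero] at h
    have hrw : θ - c • F θ - θstar = (θ - θstar) - c • F θ := sub_right_comm _ _ _
    rw [hrw, inner_sub_right, real_inner_smul_right] at h
    linarith
  -- continuity and integrability
  have hcF : Continuous F := by
    refine rampage_cont_of_growth F (fun a => K0 + K1 * ‖F a‖ ^ α) K2 (α / (1 - α)) hβpos ?_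
    intro a b
    exact hgrowth a b
  have hcont : Continuous fun s : ℝ =>
      ‖θ - (ηf θ / 2) • (F (θ - (2 * ηf θ * s) • F θ)
        + F (θ - (2 * ηf θ * (1 - s)) • F θ)) - θstar‖ ^ 2 := by
    have c1 : Continuous fun s : ℝ => θ - (2 * ηf θ * s) • F θ :=
      continuous_const.sub ((continuous_const.mul continuous_id).smul continuous_const)
    have c2 : Continuous fun s : ℝ => θ - (2 * ηf θ * (1 - s)) • F θ :=
      continuous_const.sub
        ((continuous_const.mul (continuous_const.sub continuous_id)).smul continuous_const)
    exact ((continuous_const.sub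
      (((hcF.comp c1).add (hcF.comp c2)).const_smul (ηf θ / 2))).sub continuous_const).norm.pow 2
  have hInt : IntervalIntegrable (fun s : ℝ =>
      ‖θ - (ηf θ / 2) • (F (θ - (2 * ηf θ * s) • F θ)
        + F (θ - (2 * ηf θ * (1 - s)) • F θ)) - θstar‖ ^ 2) MeasureTheory.volume 0 1 :=
    hcont.intervalIntegrable 0 1
  have hmain : (∫ s in (0:ℝ)..1,
        ‖θ - (ηf θ / 2) • (F (θ - (2 * ηf θ * s) • F θ)
            + F (θ - (2 * ηf θ * (1 - s)) • F θ)) - θstar‖ ^ 2)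
      ≤ ∫ _ in (0:ℝ)..1, (‖θ - θstar‖ ^ 2 - 1/4 * ηf θ ^ 2 * ‖F θ‖ ^ 2) := by
    refine intervalIntegral.integral_mono_on (by norm_num) hInt (intervalIntegrable_const) ?_
    intro s hs
    have h1 : θ - (ηf θ / 2) • (F (θ - (2 * ηf θ * s) • F θ)
          + F (θ - (2 * ηf θ * (1 - s)) • F θ)) - θstar
        = (θ - θstar) - (ηf θ / 2) • (F (θ - (2 * ηf θ * s) • F θ)
          + F (θ - (2 * ηf θ * (1 - s)) • F θ)) := sub_right_comm _ _ _
    rw [h1]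
    exact rampage_per_s (F (θ - (2 * ηf θ * s) • F θ)) (F (θ - (2 * ηf θ * (1 - s)) • F θ))
      (F θ) (θ - θstar) (ηf θ) s hηpos.le hs.1 hs.2
      (KL s hs) (KL (1 - s) ⟨by linarith [hs.2], by linarith [hs.1]⟩)
      (hmGen (2 * ηf θ * s)) (hmGen (2 * ηf θ * (1 - s)))
  refine hmain.trans ?_
  rw [intervalIntegral.integral_const]
  norm_num
end

section
/- Let 𝒳 ⊆ ℝ^p be nonempty, closed, and convex with metric projection Π, let F : ℝ^p → ℝ^p be L-Lipschitz continuous and monotone, and let θ* ∈ 𝒳 satisfy ⟨F(θ*), θ − θ*⟩ ≥ 0 for all θ ∈ 𝒳. Fix 0 < η < 1/(2L), an initial point θ₀ ∈ 𝒳, and any sequence u : ℕ → [0,1], and define the SS-RAMPAGE+ iterates y_t = Π(θ_t − 2η·u_t·F(θ_t)), ỹ_t = Π(θ_t − 2η·(1−u_t)·F(θ_t)), θ_{t+1} = Π(θ_t − η·u_t·F(y_t) − η·(1−u_t)·F(ỹ_t)). Then for every k ∈ ℕ: min_{0≤l≤k} (‖θ_l − y_l‖² + ‖θ_l − ỹ_l‖²)/2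 ≤ (1/(2(k+1))) Σ_{l=0}^{k} (‖θ_l − y_l‖² + ‖θ_l − ỹ_l‖²) ≤ ‖θ₀ − θ*‖² / ((1 − 4η²L²)·(k+1)). -/
open scoped RealInnerProductSpace

set_option maxHeartbeats 800000

/-- Per-branch extragradient bound. -/
private lemma branch_bound {p : ℕ} {X : Set (EuclideanSpace ℝ (Fin p))}
    (proj : EuclideanSpace ℝ (Fin p) → EuclideanSpace ℝ (Fin p))
    (hpc : ∀ w, ∀ v ∈ X, ⟪w - proj w, v - proj w⟫ ≤ 0)
    (hpm : ∀ w, proj w ∈ X)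
    (F : EuclideanSpace ℝ (Fin p) → EuclideanSpace ℝ (Fin p))
    (L η c : ℝ)
    (hLip : ∀ a b, ‖F a - F b‖ ≤ L * ‖a - b‖)
    (hmono : ∀ a b, (0:ℝ) ≤ ⟪F a - F b, a - b⟫)
    (θstar : EuclideanSpace ℝ (Fin p)) (hθstarX : θstar ∈ X)
    (hVI : ∀ θ ∈ X, (0:ℝ) ≤ ⟪F θstar, θ - θstar⟫)
    (hη0 : 0 < η) (hL : 0 < L) (hc0 : 0 ≤ c) (hc1 : c ≤ 1)
    (a b yy : EuclideanSpace ℝ (Fin p)) (hbX : b ∈ X)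
    (hyy : yy = proj (a - (2 * η * c) • F a)) :
    -(2 * η * c * ⟪F yy, b - θstar⟫) ≤
      -(‖a - yy‖^2)/2 + ‖a - b‖^2/2 + 2*η^2*L^2*‖a - yy‖^2 := by
  have hyyX : yy ∈ X := hyy ▸ hpm _
  have h5 : 0 ≤ ⟪F yy, yy - θstar⟫ := by
    have hm := hmono yy θstar
    have hvi := hVI yy hyyX
    have hs : ⟪F yy - F θstar, yy - θstar⟫
        = ⟪F yy, yy - θstar⟫ - ⟪F θstar, yy - θstar⟫ := inner_sub_left _ _ _
    linarith
  have h5d : ⟪F yy, b - θstar⟫ = ⟪F yy, b - yy⟫ + ⟪F yy, yy - θstar⟫ := by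
    have e : b - θstar = (b - yy) + (yy - θstar) := by abel
    rw [e, inner_add_right]
  have h6 : ⟪(a - (2*η*c) • F a) - yy, b - yy⟫ ≤ 0 := by
    have h := hpc (a - (2*η*c) • F a) b hbX
    rwa [← hyy] at h
  have h6' : ⟪a - yy, b - yy⟫ - 2*η*c*⟪F a, b - yy⟫ ≤ 0 := by
    have e : (a - (2*η*c) • F a) - yy = (a - yy) - (2*η*c) • F a := by abel
    rw [e, inner_sub_left, real_inner_smul_left] at h6
    linarith
  have h7 : ⟪F a - F yy, b - yy⟫ ≤ L * ‖a - yy‖ * ‖b - yy‖ :=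
    le_trans (real_inner_le_norm _ _)
      (mul_le_mul_of_nonneg_right (hLip a yy) (norm_nonneg _))
  have h7' : ⟪F a, b - yy⟫ - ⟪F yy, b - yy⟫ ≤ L * ‖a - yy‖ * ‖b - yy‖ := by
    rw [inner_sub_left] at h7; linarith
  have hs0 : 0 ≤ 2*η*c := by positivity
  have h7s := mul_le_mul_of_nonneg_left h7' hs0
  have h5s := mul_le_mul_of_nonneg_left h5 hs0
  have h5ds : 2*η*c*⟪F yy, b - θstar⟫
      = 2*η*c*⟪F yy, b - yy⟫ + 2*η*c*⟪F yy, yy - θstar⟫ := by rw [h5d]; ring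
  have h8 : ‖a - b‖^2 = ‖a - yy‖^2 - 2*⟪a - yy, b - yy⟫ + ‖b - yy‖^2 := by
    rw [show a - b = (a - yy) - (b - yy) from by abel]
    exact norm_sub_sq_real _ _
  have hc2 : c^2 ≤ 1 := by nlinarith
  have hq : 0 ≤ ((η*L)^2) * (1 - c^2) := mul_nonneg (sq_nonneg _) (by linarith)
  have hYoung : 2*η*c*(L*‖a - yy‖*‖b - yy‖) ≤ ‖b - yy‖^2/2 + 2*η^2*L^2*‖a - yy‖^2 := by
    nlinarith [sq_nonneg (2*η*c*L*‖a - yy‖ - ‖b - yy‖), mul_nonneg hq (sq_nonneg ‖a - yy‖)]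
  nlinarith [h5s, h5ds, h7s, h6', h8, hYoung]

/-- Best-iterate `O(1/k)` convergence of SS-RAMPAGE+ for constrained monotone variational
inequalities: the bound holds for every realization of the antithetic sequence `u`. -/
theorem ss_rampage_plus_best_iterate_monotone {p : ℕ}
    (X : Set (EuclideanSpace ℝ (Fin p)))
    (hXne : X.Nonempty) (hXclosed : IsClosed X) (hXconv : Convex ℝ X)
    (proj : EuclideanSpace ℝ (Fin p) → EuclideanSpace ℝ (Fin p))
    (hproj : ∀ w, proj w ∈ X ∧ ∀ v ∈ X, ‖w - proj w‖ ≤ ‖w - v‖)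
    (F : EuclideanSpace ℝ (Fin p) → EuclideanSpace ℝ (Fin p))
    (L η : ℝ)
    (hLip : ∀ a b, ‖F a - F b‖ ≤ L * ‖a - b‖)
    (hmono : ∀ a b, (0:ℝ) ≤ ⟪F a - F b, a - b⟫)
    (θstar : EuclideanSpace ℝ (Fin p)) (hθstarX : θstar ∈ X)
    (hVI : ∀ θ ∈ X, (0:ℝ) ≤ ⟪F θstar, θ - θstar⟫)
    (hη0 : 0 < η) (hη : η < 1 / (2 * L))
    (θ0 : EuclideanSpace ℝ (Fin p)) (hθ0X : θ0 ∈ X)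
    (u : ℕ → ℝ) (hu : ∀ t, u t ∈ Set.Icc (0:ℝ) 1)
    (θ y ytil : ℕ → EuclideanSpace ℝ (Fin p))
    (hinit : θ 0 = θ0)
    (hy : ∀ t, y t = proj (θ t - (2 * η * u t) • F (θ t)))
    (hytil : ∀ t, ytil t = proj (θ t - (2 * η * (1 - u t)) • F (θ t)))
    (hstep : ∀ t, θ (t+1)
      = proj (θ t - (η * u t) • F (y t) - (η * (1 - u t)) • F (ytil t)))
    (k : ℕ) :
    (Finset.range (k+1)).inf' Finset.nonempty_range_add_one
        (fun l => (‖θ l - y l‖ ^ 2 + ‖θ l - ytil l‖ ^ 2) / 2)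
      ≤ (1 / (2 * (k+1 : ℝ))) * ∑ l ∈ Finset.range (k+1),
          (‖θ l - y l‖ ^ 2 + ‖θ l - ytil l‖ ^ 2)
    ∧ (1 / (2 * (k+1 : ℝ))) * ∑ l ∈ Finset.range (k+1),
          (‖θ l - y l‖ ^ 2 + ‖θ l - ytil l‖ ^ 2)
      ≤ ‖θ0 - θstar‖ ^ 2 / ((1 - 4 * η ^ 2 * L ^ 2) * (k+1)) := by
  -- L is positive
  have hL : 0 < L := by
    by_contra h
    push_neg at h
    have h2L : 1/(2*L) ≤ 0 := by
      rcases lt_or_eq_of_le h with h' | h'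
      · exact le_of_lt (div_neg_of_pos_of_neg one_pos (by linarith))
      · rw [h']; norm_num
    linarith
  have hηL : η * (2*L) < 1 := (lt_div_iff₀ (by positivity)).mp hη
  have hcpos : 0 < 1 - 4*η^2*L^2 := by nlinarith [mul_pos hη0 hL]
  -- projection characterization
  haveI : Nonempty X := hXne.to_subtype
  have hproj_char : ∀ w, ∀ v ∈ X, ⟪w - proj w, v - proj w⟫ ≤ 0 := by
    intro w v hv
    have hmem := (hproj w).1
    have hinf : ‖w - proj w‖ = ⨅ v : X, ‖w - v‖ := by
      refine le_antisymm (le_ciInf fun x => (hproj w).2 x x.2) ?_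
      have hbdd : BddBelow (Set.range fun v : X => ‖w - (v : EuclideanSpace ℝ (Fin p))‖) := by
        refine ⟨0, ?_⟩
        rintro r ⟨x, rfl⟩
        exact norm_nonneg _
      exact ciInf_le hbdd ⟨proj w, hmem⟩
    exact (norm_eq_iInf_iff_real_inner_le_zero hXconv hmem).mp hinf v hv
  -- key per-step estimate
  have key : ∀ t, ‖θ (t+1) - θstar‖^2
      + (1 - 4*η^2*L^2)/2 * (‖θ t - y t‖^2 + ‖θ t - ytil t‖^2) ≤ ‖θ t - θstar‖^2 := by
    intro t
    have hu1 : 0 ≤ u t := (hu t).1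
    have hu2 : u t ≤ 1 := (hu t).2
    have hyt := hy t
    have hytt := hytil t
    have hst := hstep t
    set a := θ t with ha
    set b := θ (t + 1) with hb
    set yy := y t with hyy
    set w := ytil t with hw
    set v := u t with hv
    set z := a - (η * v) • F yy - (η * (1 - v)) • F w with hz
    have hbX : b ∈ X := by rw [hst]; exact (hproj z).1
    have h1 : ⟪z - b, θstar - b⟫ ≤ 0 := by
      have h := hproj_char z θstar hθstarX
      rwa [← hst] at h
    have h2 : ‖b - θstar‖^2 ≤ ‖z - θstar‖^2 - ‖z - b‖^2 := by
      have e1 : z - θstar = (z - b) + (b - θstar) := by abel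
      have e2 : ‖z - θstar‖^2 = ‖z - b‖^2 + 2*⟪z - b, b - θstar⟫ + ‖b - θstar‖^2 := by
        rw [e1]; exact norm_add_sq_real _ _
      have e3 : ⟪z - b, b - θstar⟫ = -⟪z - b, θstar - b⟫ := by
        rw [show b - θstar = -(θstar - b) from by abel, inner_neg_right]
      linarith
    have e4 : ‖z - θstar‖^2 - ‖z - b‖^2
        = ‖a - θstar‖^2 - ‖a - b‖^2
          - 2*(η*v*⟪F yy, b - θstar⟫ + η*(1-v)*⟪F w, b - θstar⟫) := by
      set g := (η*v) • F yy + (η*(1-v)) • F w with hg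
      have ez1 : z - θstar = (a - θstar) - g := by rw [hz, hg]; abel
      have ez2 : z - b = (a - b) - g := by rw [hz, hg]; abel
      have en1 : ‖a - θstar - g‖^2 = ‖a - θstar‖^2 - 2*⟪a - θstar, g⟫ + ‖g‖^2 :=
        norm_sub_sq_real _ _
      have en2 : ‖a - b - g‖^2 = ‖a - b‖^2 - 2*⟪a - b, g⟫ + ‖g‖^2 :=
        norm_sub_sq_real _ _
      rw [ez1, ez2, en1, en2]
      have ei : ⟪a - b, g⟫ - ⟪a - θstar, g⟫ = -⟪b - θstar, g⟫ := by
        rw [← inner_sub_left, ← inner_neg_left]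
        congr 1
        abel
      have eg : ⟪b - θstar, g⟫ = η*v*⟪F yy, b - θstar⟫ + η*(1-v)*⟪F w, b - θstar⟫ := by
        rw [real_inner_comm, hg, inner_add_left, real_inner_smul_left, real_inner_smul_left]
      linarith
    have hbr1 := branch_bound proj hproj_char (fun w => (hproj w).1) F L η v hLip hmono
      θstar hθstarX hVI hη0 hL hu1 hu2 a b yy hbX hyt
    have hbr2 := branch_bound proj hproj_char (fun w => (hproj w).1) F L η (1 - v) hLip hmono
      θstar hθstarX hVI hη0 hL (by linarith) (by linarith) a b w hbX hytt
    linarith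
  -- telescoping
  have tele : ∀ n, (1 - 4*η^2*L^2)/2
        * (∑ l ∈ Finset.range n, (‖θ l - y l‖^2 + ‖θ l - ytil l‖^2))
        + ‖θ n - θstar‖^2 ≤ ‖θ 0 - θstar‖^2 := by
    intro n
    induction n with
    | zero => simp
    | succ n ih =>
      rw [Finset.sum_range_succ]
      have hk := key n
      nlinarith [hk, ih]
  have hkpos : (0:ℝ) < (k:ℝ) + 1 := by positivity
  constructor
  · -- min ≤ average
    have hsum : ((k:ℝ)+1) * ((Finset.range (k+1)).inf' Finset.nonempty_range_add_one
          (fun l => (‖θ l - y l‖ ^ 2 + ‖θ l - ytil l‖ ^ 2) / 2))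
        ≤ ∑ l ∈ Finset.range (k+1), (‖θ l - y l‖ ^ 2 + ‖θ l - ytil l‖ ^ 2) / 2 := by
      calc ((k:ℝ)+1) * _ = ∑ _l ∈ Finset.range (k+1),
            ((Finset.range (k+1)).inf' Finset.nonempty_range_add_one
              (fun l => (‖θ l - y l‖ ^ 2 + ‖θ l - ytil l‖ ^ 2) / 2)) := by
            rw [Finset.sum_const, Finset.card_range, nsmul_eq_mul]; push_cast; ring
        _ ≤ _ := Finset.sum_le_sum (fun l hl => Finset.inf'_le _ hl)
    rw [← Finset.sum_div] at hsum
    have heq : (1:ℝ)/(2*((k:ℝ)+1))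
          * (∑ l ∈ Finset.range (k+1), (‖θ l - y l‖ ^ 2 + ‖θ l - ytil l‖ ^ 2))
        = ((∑ l ∈ Finset.range (k+1), (‖θ l - y l‖ ^ 2 + ‖θ l - ytil l‖ ^ 2))/2)/((k:ℝ)+1) := by
      field_simp
    rw [heq, le_div_iff₀ hkpos]
    linarith
  · have ht := tele (k+1)
    rw [hinit] at ht
    have hpos : (0:ℝ) < (1 - 4*η^2*L^2) * ((k:ℝ)+1) := mul_pos hcpos hkpos
    rw [le_div_iff₀ hpos]
    have hnn : 0 ≤ ‖θ (k+1) - θstar‖^2 := sq_nonneg _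
    have heq : (1:ℝ)/(2*((k:ℝ)+1))
          * (∑ l ∈ Finset.range (k+1), (‖θ l - y l‖ ^ 2 + ‖θ l - ytil l‖ ^ 2))
          * ((1 - 4*η^2*L^2)*((k:ℝ)+1))
        = (1 - 4*η^2*L^2)/2
          * (∑ l ∈ Finset.range (k+1), (‖θ l - y l‖ ^ 2 + ‖θ l - ytil l‖ ^ 2)) := by
      field_simp
    linarith
end

section
/- Under the hypotheses of the SS-RAMPAGE+ theorem (𝒳 ⊆ ℝ^p nonempty closed convex, F L-Lipschitz and monotone, VI solution θ* ∈ 𝒳, 0 < η < 1/(2L), u_t ∈ [0,1], iterates y_t, ỹ_t, θ_{t+1} as in SS-RAMPAGE+), let 𝓑 ⊆ 𝒳 be a nonempty closed bounded set, and assume sup_{l≥0, v∈𝓑} ‖θ_l − v‖ ≤ D and sup_{l≥0} ‖F(θ_l)‖ ≤ G. If l* ∈ {0,…,k} minimizes ‖θ_l − y_l‖² + ‖θ_l − ỹ_l‖² over 0 ≤ l ≤ k, then the restricted gap satisfies sup_{v∈𝓑} ⟨F(θ_{l*}), θ_{l*} − v⟩ ≤ (G + D/η) · √2 ‖θ₀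 − θ*‖ / √((1 − 4η²L²)·(k+1)). -/
open scoped RealInnerProductSpace

private lemma proj_vi' {p : ℕ} {X : Set (EuclideanSpace ℝ (Fin p))}
    (hXconv : Convex ℝ X)
    {proj : EuclideanSpace ℝ (Fin p) → EuclideanSpace ℝ (Fin p)}
    (hproj : ∀ w, proj w ∈ X ∧ ∀ v ∈ X, ‖w - proj w‖ ≤ ‖w - v‖)
    (w : EuclideanSpace ℝ (Fin p)) :
    ∀ v ∈ X, ⟪w - proj w, v - proj w⟫ ≤ (0:ℝ) := by
  have hmem := (hproj w).1
  have : Nonempty X := ⟨⟨_, hmem⟩⟩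
  have hbdd : BddBelow (Set.range fun v : X => ‖w - (v:EuclideanSpace ℝ (Fin p))‖) := by
    refine ⟨0, ?_⟩
    rintro x ⟨v, rfl⟩
    exact norm_nonneg _
  have heq : ‖w - proj w‖ = ⨅ v : X, ‖w - (v:EuclideanSpace ℝ (Fin p))‖ := by
    refine le_antisymm (le_ciInf fun v => (hproj w).2 v v.2) ?_
    exact ciInf_le hbdd ⟨_, hmem⟩
  exact (norm_eq_iInf_iff_real_inner_le_zero hXconv hmem).1 heq

private lemma three_point' {E : Type*} [NormedAddCommGroup E] [InnerProductSpace ℝ E]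
    (a b c : E) :
    2 * ⟪a - b, b - c⟫ = ‖a - c‖ ^ 2 - ‖a - b‖ ^ 2 - ‖b - c‖ ^ 2 := by
  have h : a - c = (a - b) + (b - c) := by abel
  rw [h, norm_add_sq_real]; ring

set_option maxHeartbeats 4000000 in
/-- Restricted-gap bound for the best iterate of SS-RAMPAGE+ on constrained monotone
variational inequalities. -/
theorem ss_rampage_plus_best_iterate_gap {p : ℕ}
    (X : Set (EuclideanSpace ℝ (Fin p)))
    (hXne : X.Nonempty) (hXclosed : IsClosed X) (hXconv : Convex ℝ X)
    (proj : EuclideanSpace ℝ (Fin p) → EuclideanSpace ℝ (Fin p))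
    (hproj : ∀ w, proj w ∈ X ∧ ∀ v ∈ X, ‖w - proj w‖ ≤ ‖w - v‖)
    (F : EuclideanSpace ℝ (Fin p) → EuclideanSpace ℝ (Fin p))
    (L η : ℝ)
    (hLip : ∀ a b, ‖F a - F b‖ ≤ L * ‖a - b‖)
    (hmono : ∀ a b, (0:ℝ) ≤ ⟪F a - F b, a - b⟫)
    (θstar : EuclideanSpace ℝ (Fin p)) (hθstarX : θstar ∈ X)
    (hVI : ∀ θ ∈ X, (0:ℝ) ≤ ⟪F θstar, θ - θstar⟫)
    (hη0 : 0 < η) (hη : η < 1 / (2 * L))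
    (θ0 : EuclideanSpace ℝ (Fin p)) (hθ0X : θ0 ∈ X)
    (u : ℕ → ℝ) (hu : ∀ t, u t ∈ Set.Icc (0:ℝ) 1)
    (θ y ytil : ℕ → EuclideanSpace ℝ (Fin p))
    (hinit : θ 0 = θ0)
    (hy : ∀ t, y t = proj (θ t - (2 * η * u t) • F (θ t)))
    (hytil : ∀ t, ytil t = proj (θ t - (2 * η * (1 - u t)) • F (θ t)))
    (hstep : ∀ t, θ (t+1)
      = proj (θ t - (η * u t) • F (y t) - (η * (1 - u t)) • F (ytil t)))
    (B : Set (EuclideanSpace ℝ (Fin p)))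
    (hBX : B ⊆ X) (hBne : B.Nonempty) (hBclosed : IsClosed B)
    (hBbdd : Bornology.IsBounded B)
    (D G : ℝ)
    (hD : ∀ l : ℕ, ∀ v ∈ B, ‖θ l - v‖ ≤ D)
    (hG : ∀ l : ℕ, ‖F (θ l)‖ ≤ G)
    (k lstar : ℕ) (hlstar : lstar ≤ k)
    (hmin : ∀ l ≤ k,
      ‖θ lstar - y lstar‖ ^ 2 + ‖θ lstar - ytil lstar‖ ^ 2
        ≤ ‖θ l - y l‖ ^ 2 + ‖θ l - ytil l‖ ^ 2) :
    ∀ v ∈ B, ⟪F (θ lstar), θ lstar - v⟫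
      ≤ (G + D / η) * (Real.sqrt 2 * ‖θ0 - θstar‖)
          / Real.sqrt ((1 - 4 * η ^ 2 * L ^ 2) * (k+1)) := by
  -- basic positivity facts
  have h2L : 0 < 2 * L := by
    by_contra h
    push_neg at h
    have h1 : 1 / (2 * L) ≤ 0 := div_nonpos_of_nonneg_of_nonpos zero_le_one h
    linarith
  have hL0 : 0 < L := by linarith
  have hηL : η * (2 * L) < 1 := (lt_div_iff₀ h2L).1 hη
  have hpos : 0 < 1 - 4 * η ^ 2 * L ^ 2 := by nlinarith [mul_pos hη0 h2L]
  -- per-step decrease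
  have key : ∀ t, ‖θ (t+1) - θstar‖ ^ 2 ≤ ‖θ t - θstar‖ ^ 2
      - ((1 - 4 * η ^ 2 * L ^ 2) / 2) * (‖θ t - y t‖ ^ 2 + ‖θ t - ytil t‖ ^ 2) := by
    intro t
    obtain ⟨hu0, hu1⟩ := hu t
    have hbX : θ (t+1) ∈ X := by rw [hstep t]; exact (hproj _).1
    have hyyX : y t ∈ X := by rw [hy t]; exact (hproj _).1
    have hytX : ytil t ∈ X := by rw [hytil t]; exact (hproj _).1
    -- P1 : projection inequality for the main step
    have P1 : ⟪θ t - θ (t+1), θstar - θ (t+1)⟫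
        - (η * u t) * ⟪F (y t), θstar - θ (t+1)⟫
        - (η * (1 - u t)) * ⟪F (ytil t), θstar - θ (t+1)⟫ ≤ 0 := by
      have h := proj_vi' hXconv hproj
        (θ t - (η * u t) • F (y t) - (η * (1 - u t)) • F (ytil t)) θstar hθstarX
      rw [← hstep t] at h
      have he : θ t - (η * u t) • F (y t) - (η * (1 - u t)) • F (ytil t) - θ (t+1)
          = (θ t - θ (t+1)) - (η * u t) • F (y t) - (η * (1 - u t)) • F (ytil t) := by
        abel
      rw [he, inner_sub_left, inner_sub_left, real_inner_smul_left,
        real_inner_smul_left] at h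
      linarith
    -- P2 : projection inequality for y
    have P2 : ⟪θ t - y t, θ (t+1) - y t⟫
        - (2 * η * u t) * ⟪F (θ t), θ (t+1) - y t⟫ ≤ 0 := by
      have h := proj_vi' hXconv hproj (θ t - (2 * η * u t) • F (θ t)) (θ (t+1)) hbX
      rw [← hy t] at h
      have he : θ t - (2 * η * u t) • F (θ t) - y t
          = (θ t - y t) - (2 * η * u t) • F (θ t) := by abel
      rw [he, inner_sub_left, real_inner_smul_left] at h
      linarith
    -- P3 : projection inequality for ytil
    have P3 : ⟪θ t - ytil t, θ (t+1) - ytil t⟫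
        - (2 * η * (1 - u t)) * ⟪F (θ t), θ (t+1) - ytil t⟫ ≤ 0 := by
      have h := proj_vi' hXconv hproj (θ t - (2 * η * (1 - u t)) • F (θ t)) (θ (t+1)) hbX
      rw [← hytil t] at h
      have he : θ t - (2 * η * (1 - u t)) • F (θ t) - ytil t
          = (θ t - ytil t) - (2 * η * (1 - u t)) • F (θ t) := by abel
      rw [he, inner_sub_left, real_inner_smul_left] at h
      linarith
    -- monotonicity + VI
    have M1 : ⟪F (y t), θstar - y t⟫ ≤ (0:ℝ) := by
      have h1 := hmono (y t) θstar
      have h2 := hVI (y t) hyyX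
      rw [inner_sub_left] at h1
      have h3 : ⟪F (y t), θstar - y t⟫ = -⟪F (y t), y t - θstar⟫ := by
        rw [← inner_neg_right]; congr 1; abel
      rw [h3]; linarith
    have M2 : ⟪F (ytil t), θstar - ytil t⟫ ≤ (0:ℝ) := by
      have h1 := hmono (ytil t) θstar
      have h2 := hVI (ytil t) hytX
      rw [inner_sub_left] at h1
      have h3 : ⟪F (ytil t), θstar - ytil t⟫ = -⟪F (ytil t), ytil t - θstar⟫ := by
        rw [← inner_neg_right]; congr 1; abel
      rw [h3]; linarith
    -- Cauchy–Schwarz + Lipschitz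
    have CS1 : ⟪F (y t) - F (θ t), y t - θ (t+1)⟫
        ≤ L * ‖θ t - y t‖ * ‖y t - θ (t+1)‖ := by
      calc ⟪F (y t) - F (θ t), y t - θ (t+1)⟫
          ≤ ‖F (y t) - F (θ t)‖ * ‖y t - θ (t+1)‖ := real_inner_le_norm _ _
        _ ≤ (L * ‖y t - θ t‖) * ‖y t - θ (t+1)‖ :=
            mul_le_mul_of_nonneg_right (hLip _ _) (norm_nonneg _)
        _ = L * ‖θ t - y t‖ * ‖y t - θ (t+1)‖ := by rw [norm_sub_rev]
    have CS2 : ⟪F (ytil t) - F (θ t), ytil t - θ (t+1)⟫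
        ≤ L * ‖θ t - ytil t‖ * ‖ytil t - θ (t+1)‖ := by
      calc ⟪F (ytil t) - F (θ t), ytil t - θ (t+1)⟫
          ≤ ‖F (ytil t) - F (θ t)‖ * ‖ytil t - θ (t+1)‖ := real_inner_le_norm _ _
        _ ≤ (L * ‖ytil t - θ t‖) * ‖ytil t - θ (t+1)‖ :=
            mul_le_mul_of_nonneg_right (hLip _ _) (norm_nonneg _)
        _ = L * ‖θ t - ytil t‖ * ‖ytil t - θ (t+1)‖ := by rw [norm_sub_rev]
    -- splitting identities
    have sp1 : ⟪F (y t), θstar - θ (t+1)⟫ = ⟪F (y t), θstar - y t⟫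
        + ⟪F (θ t), y t - θ (t+1)⟫ + ⟪F (y t) - F (θ t), y t - θ (t+1)⟫ := by
      have hsp : ⟪F (y t), θstar - θ (t+1)⟫
          = ⟪F (y t), θstar - y t⟫ + ⟪F (y t), y t - θ (t+1)⟫ := by
        rw [← inner_add_right]
        congr 1
        abel
      rw [hsp, inner_sub_left]
      ring
    have sp2 : ⟪F (ytil t), θstar - θ (t+1)⟫ = ⟪F (ytil t), θstar - ytil t⟫
        + ⟪F (θ t), ytil t - θ (t+1)⟫ + ⟪F (ytil t) - F (θ t), ytil t - θ (t+1)⟫ := by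
      have hsp : ⟪F (ytil t), θstar - θ (t+1)⟫
          = ⟪F (ytil t), θstar - ytil t⟫ + ⟪F (ytil t), ytil t - θ (t+1)⟫ := by
        rw [← inner_add_right]
        congr 1
        abel
      rw [hsp, inner_sub_left]
      ring
    -- sign flips to match P2 / P3
    have fl1 : ⟪F (θ t), θ (t+1) - y t⟫ = -⟪F (θ t), y t - θ (t+1)⟫ := by
      rw [← inner_neg_right]; congr 1; abel
    have fl2 : ⟪F (θ t), θ (t+1) - ytil t⟫ = -⟪F (θ t), ytil t - θ (t+1)⟫ := by
      rw [← inner_neg_right]; congr 1; abel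
    have fl3 : ⟪θ t - y t, θ (t+1) - y t⟫ = -⟪θ t - y t, y t - θ (t+1)⟫ := by
      rw [← inner_neg_right]; congr 1; abel
    have fl4 : ⟪θ t - ytil t, θ (t+1) - ytil t⟫ = -⟪θ t - ytil t, ytil t - θ (t+1)⟫ := by
      rw [← inner_neg_right]; congr 1; abel
    have fl0 : ⟪θ t - θ (t+1), θstar - θ (t+1)⟫
        = -⟪θ t - θ (t+1), θ (t+1) - θstar⟫ := by
      rw [← inner_neg_right]; congr 1; abel
    -- three-point identities
    have tp0 := three_point' (θ t) (θ (t+1)) θstar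
    have tp1 := three_point' (θ t) (y t) (θ (t+1))
    have tp2 := three_point' (θ t) (ytil t) (θ (t+1))
    -- AM-GM bounds
    have am1 : η * (L * ‖θ t - y t‖ * ‖y t - θ (t+1)‖)
        ≤ η ^ 2 * L ^ 2 * ‖θ t - y t‖ ^ 2 + ‖y t - θ (t+1)‖ ^ 2 / 4 := by
      nlinarith [sq_nonneg (2 * η * L * ‖θ t - y t‖ - ‖y t - θ (t+1)‖)]
    have am2 : η * (L * ‖θ t - ytil t‖ * ‖ytil t - θ (t+1)‖)
        ≤ η ^ 2 * L ^ 2 * ‖θ t - ytil t‖ ^ 2 + ‖ytil t - θ (t+1)‖ ^ 2 / 4 := by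
      nlinarith [sq_nonneg (2 * η * L * ‖θ t - ytil t‖ - ‖ytil t - θ (t+1)‖)]
    -- bound η * u t * ⟪F (y t), θstar - θ (t+1)⟫
    have hLab1 : (0:ℝ) ≤ L * ‖θ t - y t‖ * ‖y t - θ (t+1)‖ := by positivity
    have hLab2 : (0:ℝ) ≤ L * ‖θ t - ytil t‖ * ‖ytil t - θ (t+1)‖ := by positivity
    have hA1 : η * u t * ⟪F (y t), θstar - θ (t+1)⟫
        ≤ ‖θ t - θ (t+1)‖ ^ 2 / 4
          - (1 - 4 * η ^ 2 * L ^ 2) * ‖θ t - y t‖ ^ 2 / 4 := by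
      have e1 : η * u t * ⟪F (y t), θstar - θ (t+1)⟫
          ≤ η * u t * (⟪F (θ t), y t - θ (t+1)⟫
            + L * ‖θ t - y t‖ * ‖y t - θ (t+1)‖) := by
        have hnn : (0:ℝ) ≤ η * u t := mul_nonneg hη0.le hu0
        have hle : ⟪F (y t), θstar - θ (t+1)⟫ ≤ ⟪F (θ t), y t - θ (t+1)⟫
            + L * ‖θ t - y t‖ * ‖y t - θ (t+1)‖ := by rw [sp1]; linarith [M1, CS1]
        exact mul_le_mul_of_nonneg_left hle hnn
      -- from P2: 2 η u ⟪F θt, y - b⟫ ≤ ⟪θt - y, y - b⟫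
      have e2 : 2 * (η * u t) * ⟪F (θ t), y t - θ (t+1)⟫
          ≤ ⟪θ t - y t, y t - θ (t+1)⟫ := by
        rw [fl1, fl3] at P2
        linarith
      have e3 : η * u t * (L * ‖θ t - y t‖ * ‖y t - θ (t+1)‖)
          ≤ η * (L * ‖θ t - y t‖ * ‖y t - θ (t+1)‖) := by
        have h1 : η * u t ≤ η * 1 := mul_le_mul_of_nonneg_left hu1 hη0.le
        nlinarith [hLab1]
      linarith [e1, e2, e3, am1, tp1]
    have hA2 : η * (1 - u t) * ⟪F (ytil t), θstar - θ (t+1)⟫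
        ≤ ‖θ t - θ (t+1)‖ ^ 2 / 4
          - (1 - 4 * η ^ 2 * L ^ 2) * ‖θ t - ytil t‖ ^ 2 / 4 := by
      have e1 : η * (1 - u t) * ⟪F (ytil t), θstar - θ (t+1)⟫
          ≤ η * (1 - u t) * (⟪F (θ t), ytil t - θ (t+1)⟫
            + L * ‖θ t - ytil t‖ * ‖ytil t - θ (t+1)‖) := by
        have hnn : (0:ℝ) ≤ η * (1 - u t) := mul_nonneg hη0.le (by linarith)
        have hle : ⟪F (ytil t), θstar - θ (t+1)⟫ ≤ ⟪F (θ t), ytil t - θ (t+1)⟫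
            + L * ‖θ t - ytil t‖ * ‖ytil t - θ (t+1)‖ := by rw [sp2]; linarith [M2, CS2]
        exact mul_le_mul_of_nonneg_left hle hnn
      have e2 : 2 * (η * (1 - u t)) * ⟪F (θ t), ytil t - θ (t+1)⟫
          ≤ ⟪θ t - ytil t, ytil t - θ (t+1)⟫ := by
        rw [fl2, fl4] at P3
        linarith
      have e3 : η * (1 - u t) * (L * ‖θ t - ytil t‖ * ‖ytil t - θ (t+1)‖)
          ≤ η * (L * ‖θ t - ytil t‖ * ‖ytil t - θ (t+1)‖) := by
        have h1 : η * (1 - u t) ≤ η * 1 := mul_le_mul_of_nonneg_left (by linarith) hη0.le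
        nlinarith [hLab2]
      linarith [e1, e2, e3, am2, tp2]
    -- combine
    rw [fl0] at P1
    linarith [P1, hA1, hA2, tp0]
  -- telescoping
  have hsum : ∀ n : ℕ,
      ((1 - 4 * η ^ 2 * L ^ 2) / 2)
        * (∑ l ∈ Finset.range n, (‖θ l - y l‖ ^ 2 + ‖θ l - ytil l‖ ^ 2))
        + ‖θ n - θstar‖ ^ 2 ≤ ‖θ 0 - θstar‖ ^ 2 := by
    intro n
    induction n with
    | zero => simp
    | succ n ih =>
      rw [Finset.sum_range_succ]
      have := key n
      linarith [this, ih]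
  -- best-iterate bound
  set Sl : ℝ := ‖θ lstar - y lstar‖ ^ 2 + ‖θ lstar - ytil lstar‖ ^ 2 with hSl
  have hSl0 : 0 ≤ Sl := by positivity
  have hcard : ((k:ℝ) + 1) * Sl
      ≤ ∑ l ∈ Finset.range (k+1), (‖θ l - y l‖ ^ 2 + ‖θ l - ytil l‖ ^ 2) := by
    have h := Finset.sum_le_sum (f := fun _ : ℕ => Sl)
      (g := fun l => ‖θ l - y l‖ ^ 2 + ‖θ l - ytil l‖ ^ 2)
      (s := Finset.range (k+1))
      (fun l hl => hmin l (Nat.lt_succ_iff.mp (Finset.mem_range.mp hl)))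
    rw [Finset.sum_const, Finset.card_range, nsmul_eq_mul] at h
    push_cast at h ⊢
    linarith
  have hfinal : (1 - 4 * η ^ 2 * L ^ 2) * ((k:ℝ) + 1) * Sl
      ≤ 2 * ‖θ0 - θstar‖ ^ 2 := by
    have h1 := hsum (k+1)
    have h2 : (0:ℝ) ≤ ‖θ (k+1) - θstar‖ ^ 2 := by positivity
    rw [hinit] at h1
    have h3 := mul_le_mul_of_nonneg_left hcard hpos.le
    nlinarith [h3, h1, h2]
  -- sqrt bound
  have hc : (0:ℝ) < (1 - 4 * η ^ 2 * L ^ 2) * ((k:ℝ) + 1) := by positivity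
  have hsqrt : Real.sqrt Sl
      ≤ Real.sqrt 2 * ‖θ0 - θstar‖ / Real.sqrt ((1 - 4 * η ^ 2 * L ^ 2) * ((k:ℝ) + 1)) := by
    have h1 : Real.sqrt ((1 - 4 * η ^ 2 * L ^ 2) * ((k:ℝ) + 1) * Sl)
        ≤ Real.sqrt (2 * ‖θ0 - θstar‖ ^ 2) := Real.sqrt_le_sqrt hfinal
    rw [Real.sqrt_mul hc.le, Real.sqrt_mul (by norm_num : (0:ℝ) ≤ 2),
      Real.sqrt_sq (norm_nonneg _)] at h1
    rw [le_div_iff₀ (Real.sqrt_pos.2 hc)]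
    calc Real.sqrt Sl * Real.sqrt ((1 - 4 * η ^ 2 * L ^ 2) * ((k:ℝ) + 1))
        = Real.sqrt ((1 - 4 * η ^ 2 * L ^ 2) * ((k:ℝ) + 1)) * Real.sqrt Sl := by ring
      _ ≤ Real.sqrt 2 * ‖θ0 - θstar‖ := h1
  -- gap bound
  intro v hv
  have hvX : v ∈ X := hBX hv
  have hD0 : 0 ≤ D := le_trans (norm_nonneg _) (hD 0 v hv)
  have hG0 : 0 ≤ G := le_trans (norm_nonneg _) (hG 0)
  have gap : ∀ c' : ℝ, η ≤ c' →
      ∀ z, z = proj (θ lstar - c' • F (θ lstar)) →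
      ⟪F (θ lstar), θ lstar - v⟫ ≤ (G + D / η) * ‖θ lstar - z‖ := by
    intro c' hc' z hz
    have hc'0 : 0 < c' := lt_of_lt_of_le hη0 hc'
    have hp := proj_vi' hXconv hproj (θ lstar - c' • F (θ lstar)) v hvX
    rw [← hz] at hp
    have he : θ lstar - c' • F (θ lstar) - z = (θ lstar - z) - c' • F (θ lstar) := by abel
    rw [he, inner_sub_left, real_inner_smul_left] at hp
    -- hp : ⟪θ lstar - z, v - z⟫ - c' * ⟪F (θ lstar), v - z⟫ ≤ 0
    have hexp : ⟪θ lstar - z, v - z⟫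
        = ⟪θ lstar - z, v - θ lstar⟫ + ‖θ lstar - z‖ ^ 2 := by
      rw [← real_inner_self_eq_norm_sq, ← inner_add_right]
      congr 1; abel
    have hflip : ⟪θ lstar - z, v - θ lstar⟫ = -⟪θ lstar - z, θ lstar - v⟫ := by
      rw [← inner_neg_right]; congr 1; abel
    have hCS : ⟪θ lstar - z, θ lstar - v⟫ ≤ ‖θ lstar - z‖ * D := by
      calc ⟪θ lstar - z, θ lstar - v⟫
          ≤ ‖θ lstar - z‖ * ‖θ lstar - v‖ := real_inner_le_norm _ _
        _ ≤ ‖θ lstar - z‖ * D :=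
            mul_le_mul_of_nonneg_left (hD lstar v hv) (norm_nonneg _)
    have hflip2 : ⟪F (θ lstar), z - v⟫ = -⟪F (θ lstar), v - z⟫ := by
      rw [← inner_neg_right]; congr 1; abel
    have h3 : c' * ⟪F (θ lstar), z - v⟫ ≤ ‖θ lstar - z‖ * D := by
      rw [hflip2]
      nlinarith [hp, hexp, hflip, hCS, sq_nonneg ‖θ lstar - z‖]
    have h4 : ⟪F (θ lstar), z - v⟫ ≤ ‖θ lstar - z‖ * (D / η) := by
      calc ⟪F (θ lstar), z - v⟫ ≤ (‖θ lstar - z‖ * D) / c' := by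
            rw [le_div_iff₀ hc'0]; linarith [h3]
        _ ≤ (‖θ lstar - z‖ * D) / η := by
            apply div_le_div_of_nonneg_left _ hη0 hc'
            positivity
        _ = ‖θ lstar - z‖ * (D / η) := by ring
    have hsplit : ⟪F (θ lstar), θ lstar - v⟫
        = ⟪F (θ lstar), θ lstar - z⟫ + ⟪F (θ lstar), z - v⟫ := by
      rw [← inner_add_right]
      congr 1; abel
    have h5 : ⟪F (θ lstar), θ lstar - z⟫ ≤ G * ‖θ lstar - z‖ := by
      calc ⟪F (θ lstar), θ lstar - z⟫
          ≤ ‖F (θ lstar)‖ * ‖θ lstar - z‖ := real_inner_le_norm _ _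
        _ ≤ G * ‖θ lstar - z‖ :=
            mul_le_mul_of_nonneg_right (hG lstar) (norm_nonneg _)
    rw [hsplit]
    nlinarith [h4, h5]
  -- choose the step with bigger coefficient
  obtain ⟨hu0, hu1⟩ := hu lstar
  have hmain : ⟪F (θ lstar), θ lstar - v⟫ ≤ (G + D / η) * Real.sqrt Sl := by
    rcases le_or_gt (1/2 : ℝ) (u lstar) with h | h
    · have h1 := gap (2 * η * u lstar) (by nlinarith) (y lstar) (hy lstar)
      have h2 : ‖θ lstar - y lstar‖ ≤ Real.sqrt Sl := by
        rw [← Real.sqrt_sq (norm_nonneg (θ lstar - y lstar))]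
        apply Real.sqrt_le_sqrt
        nlinarith [sq_nonneg ‖θ lstar - ytil lstar‖]
      calc ⟪F (θ lstar), θ lstar - v⟫ ≤ (G + D / η) * ‖θ lstar - y lstar‖ := h1
        _ ≤ (G + D / η) * Real.sqrt Sl := by
            apply mul_le_mul_of_nonneg_left h2
            have : 0 ≤ D / η := div_nonneg hD0 hη0.le
            linarith
    · have h1 := gap (2 * η * (1 - u lstar)) (by nlinarith) (ytil lstar) (hytil lstar)
      have h2 : ‖θ lstar - ytil lstar‖ ≤ Real.sqrt Sl := by
        rw [← Real.sqrt_sq (norm_nonneg (θ lstar - ytil lstar))]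
        apply Real.sqrt_le_sqrt
        nlinarith [sq_nonneg ‖θ lstar - y lstar‖]
      calc ⟪F (θ lstar), θ lstar - v⟫ ≤ (G + D / η) * ‖θ lstar - ytil lstar‖ := h1
        _ ≤ (G + D / η) * Real.sqrt Sl := by
            apply mul_le_mul_of_nonneg_left h2
            have : 0 ≤ D / η := div_nonneg hD0 hη0.le
            linarith
  have hGD : 0 ≤ G + D / η := by
    have : 0 ≤ D / η := div_nonneg hD0 hη0.le
    linarith
  calc ⟪F (θ lstar), θ lstar - v⟫ ≤ (G + D / η) * Real.sqrt Sl := hmain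
    _ ≤ (G + D / η)
        * (Real.sqrt 2 * ‖θ0 - θstar‖ / Real.sqrt ((1 - 4 * η ^ 2 * L ^ 2) * ((k:ℝ) + 1))) :=
        mul_le_mul_of_nonneg_left hsqrt hGD
    _ = (G + D / η) * (Real.sqrt 2 * ‖θ0 - θstar‖)
          / Real.sqrt ((1 - 4 * η ^ 2 * L ^ 2) * ((k:ℝ) + 1)) := by ring
end

section
/- Let 𝒳 ⊆ ℝ^p be nonempty, closed, and convex with metric projection Π, let F : ℝ^p → ℝ^p be a map, η > 0, and θ ∈ 𝒳. Set z = Π(θ − η·F(θ)) and r = θ − z. Then for every nonempty bounded set 𝓑 ⊆ 𝒳: sup_{v∈𝓑} ⟨F(θ), θ − v⟩ ≤ ‖r‖ · ( ‖F(θ)‖ + (1/η)·sup_{v∈𝓑} ‖θ − v‖ ). -/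
open scoped RealInnerProductSpace

/-- Restricted-gap lemma: the gap of `θ` over a bounded set `𝓑 ⊆ 𝒳` is controlled by the
projected residual `r = θ - Π(θ - η F(θ))`. -/
theorem restricted_gap_le_residual {p : ℕ}
    (X : Set (EuclideanSpace ℝ (Fin p)))
    (hXne : X.Nonempty) (hXclosed : IsClosed X) (hXconv : Convex ℝ X)
    (proj : EuclideanSpace ℝ (Fin p) → EuclideanSpace ℝ (Fin p))
    (hproj : ∀ w, proj w ∈ X ∧ ∀ v ∈ X, ‖w - proj w‖ ≤ ‖w - v‖)
    (F : EuclideanSpace ℝ (Fin p) → EuclideanSpace ℝ (Fin p))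
    (η : ℝ) (hη : 0 < η)
    (θ : EuclideanSpace ℝ (Fin p)) (hθX : θ ∈ X)
    (B : Set (EuclideanSpace ℝ (Fin p)))
    (hBX : B ⊆ X) (hBne : B.Nonempty) (hBbdd : Bornology.IsBounded B)
    (z r : EuclideanSpace ℝ (Fin p))
    (hz : z = proj (θ - η • F θ)) (hr : r = θ - z) :
    sSup ((fun v => ⟪F θ, θ - v⟫) '' B)
      ≤ ‖r‖ * (‖F θ‖ + (1 / η) * sSup ((fun v => ‖θ - v‖) '' B)) := by
  set w := θ - η • F θ with hw
  obtain ⟨hzX, hzmin⟩ := hproj w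
  -- variational inequality
  have : Nonempty X := ⟨⟨θ, hθX⟩⟩
  have hVI : ∀ v ∈ X, ⟪w - z, v - z⟫ ≤ 0 := by
    rw [hz]
    have hinf : ‖w - proj w‖ = ⨅ v : X, ‖w - v‖ := by
      refine le_antisymm (le_ciInf fun v => hzmin v v.2) ?_
      exact ciInf_le ⟨0, fun x ⟨v, hv⟩ => hv ▸ norm_nonneg _⟩ (⟨proj w, hzX⟩ : X)
    exact (norm_eq_iInf_iff_real_inner_le_zero hXconv hzX).1 hinf
  -- the supremum S of ‖θ - v‖ over B
  set S := sSup ((fun v => ‖θ - v‖) '' B) with hS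
  obtain ⟨C, hC⟩ := hBbdd.exists_norm_le
  have hbdd : BddAbove ((fun v => ‖θ - v‖) '' B) := by
    refine ⟨‖θ‖ + C, ?_⟩
    rintro x ⟨v, hv, rfl⟩
    calc ‖θ - v‖ ≤ ‖θ‖ + ‖v‖ := norm_sub_le _ _
      _ ≤ ‖θ‖ + C := by linarith [hC v hv]
  have hSle : ∀ v ∈ B, ‖θ - v‖ ≤ S := fun v hv => le_csSup hbdd ⟨v, hv, rfl⟩
  refine csSup_le (hBne.image _) ?_
  rintro x ⟨v, hv, rfl⟩
  have hVIv := hVI v (hBX hv)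
  have hwz : w - z = r - η • F θ := by rw [hr, hw]; abel
  rw [hwz, inner_sub_left, real_inner_smul_left] at hVIv
  -- ⟪r, v - z⟫ ≤ η * ⟪F θ, v - z⟫
  have key : ⟪F θ, θ - v⟫ ≤ ⟪F θ, r⟫ + (1 / η) * ⟪r, z - v⟫ := by
    have h1 : ⟪F θ, θ - v⟫ = ⟪F θ, r⟫ + ⟪F θ, z - v⟫ := by
      rw [← inner_add_right]
      congr 1
      rw [hr]; abel
    have h2 : ⟪F θ, z - v⟫ ≤ (1 / η) * ⟪r, z - v⟫ := by
      have h3 : ⟪r, z - v⟫ = -⟪r, v - z⟫ := by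
        rw [← inner_neg_right]; congr 1; abel
      have h4 : ⟪F θ, z - v⟫ = -⟪F θ, v - z⟫ := by
        rw [← inner_neg_right]; congr 1; abel
      rw [h3, h4]
      rw [div_mul_eq_mul_div, le_div_iff₀ hη]
      nlinarith
    linarith
  have hFr : ⟪F θ, r⟫ ≤ ‖F θ‖ * ‖r‖ := real_inner_le_norm _ _
  have hrzv : ⟪r, z - v⟫ ≤ ‖r‖ * ‖θ - v‖ := by
    have : ⟪r, z - v⟫ = ⟪r, θ - v⟫ - ‖r‖ ^ 2 := by
      rw [← real_inner_self_eq_norm_sq, ← inner_sub_right]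
      congr 1; rw [hr]; abel
    calc ⟪r, z - v⟫ = ⟪r, θ - v⟫ - ‖r‖ ^ 2 := this
      _ ≤ ⟪r, θ - v⟫ := by nlinarith [sq_nonneg ‖r‖]
      _ ≤ ‖r‖ * ‖θ - v‖ := real_inner_le_norm _ _
  have hnv : ‖θ - v‖ ≤ S := hSle v hv
  have hη' : 0 ≤ 1 / η := by positivity
  have hrn : (0:ℝ) ≤ ‖r‖ := norm_nonneg _
  calc ⟪F θ, θ - v⟫ ≤ ⟪F θ, r⟫ + (1 / η) * ⟪r, z - v⟫ := key
    _ ≤ ‖F θ‖ * ‖r‖ + (1 / η) * (‖r‖ * ‖θ - v‖) := by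
        have := mul_le_mul_of_nonneg_left hrzv hη'
        linarith
    _ ≤ ‖F θ‖ * ‖r‖ + (1 / η) * (‖r‖ * S) := by
        have := mul_le_mul_of_nonneg_left (mul_le_mul_of_nonneg_left hnv hrn) hη'
        linarith
    _ = ‖r‖ * (‖F θ‖ + (1 / η) * S) := by ring
end

section
/- Let F : ℝ^p → ℝ^p be L-Lipschitz continuous, let 0 < η ≤ 1/(2L), and fix θ_t, θ ∈ ℝ^p. For s ∈ [0,1] set y(s) = θ_t − 2ηs·F(θ_t) and θ₊(s) = θ_t − η·F(y(s)). Then 2η · ∫₀¹ ⟨F(y(s)), y(s) − θ⟩ ds ≤ ‖θ_t − θ‖² − ∫₀¹ ‖θ₊(s) − θ‖² ds. -/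
open scoped RealInnerProductSpace

set_option maxHeartbeats 1000000

/-- Fundamental averaged one-step descent inequality for RAMPAGE under Lipschitz
continuity alone. -/
theorem rampage_fundamental_descent {p : ℕ}
    (F : EuclideanSpace ℝ (Fin p) → EuclideanSpace ℝ (Fin p))
    (L η : ℝ)
    (hLip : ∀ a b, ‖F a - F b‖ ≤ L * ‖a - b‖)
    (hη0 : 0 < η) (hη : η ≤ 1 / (2 * L))
    (θt θ : EuclideanSpace ℝ (Fin p)) :
    2 * η * ∫ s in (0:ℝ)..1,
        ⟪F (θt - (2 * η * s) • F θt), (θt - (2 * η * s) • F θt) - θ⟫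
      ≤ ‖θt - θ‖ ^ 2
        - ∫ s in (0:ℝ)..1, ‖(θt - η • F (θt - (2 * η * s) • F θt)) - θ‖ ^ 2 := by
  have hL : 0 < L := by
    by_contra h
    push_neg at h
    rcases lt_or_eq_of_le h with h' | h'
    · have : 1 / (2 * L) ≤ 0 := le_of_lt (div_neg_of_pos_of_neg one_pos (by linarith))
      linarith
    · rw [h'] at hη
      norm_num at hη
      linarith
  have h2ηL : 2 * η * L ≤ 1 := by
    have h2L : (0:ℝ) < 2 * L := by linarith
    have := (le_div_iff₀ h2L).mp hη
    nlinarith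
  -- F is continuous
  have hFc : Continuous F := by
    have : LipschitzWith (Real.toNNReal L) F := by
      apply LipschitzWith.of_dist_le_mul
      intro a b
      simpa [dist_eq_norm, Real.coe_toNNReal L hL.le] using hLip a b
    exact this.continuous
  set g : EuclideanSpace ℝ (Fin p) := F θt with hg
  set a : ℝ := ‖g‖ with ha
  set y : ℝ → EuclideanSpace ℝ (Fin p) := fun s => θt - (2 * η * s) • g with hy
  have hyc : Continuous y := by
    apply Continuous.sub continuous_const
    exact (continuous_const.mul continuous_id).smul continuous_const
  set I : ℝ → ℝ := fun s => ⟪F (y s), y s - θ⟫ with hI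
  set J : ℝ → ℝ := fun s => ‖(θt - η • F (y s)) - θ‖ ^ 2 with hJ
  have hIc : Continuous I := (Continuous.inner (hFc.comp hyc) (hyc.sub continuous_const))
  have hJc : Continuous J := by
    apply Continuous.pow
    fun_prop
  set ψ : ℝ → ℝ := fun s => -8*s^3 + 7*s^2 + 3/2*s - 1 with hψ
  have hψc : Continuous ψ := by rw [hψ]; fun_prop
  set A : ℝ := ‖θt - θ‖ ^ 2 with hA
  set C : ℝ := η^2 * a^2 with hC
  have hC0 : 0 ≤ C := by positivity
  -- pointwise key inequality
  have key : ∀ s ∈ Set.Icc (0:ℝ) 1,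
      2 * η * I s + J s ≤ A - C * ψ s := by
    intro s hs
    obtain ⟨hs0, hs1⟩ := hs
    set u : EuclideanSpace ℝ (Fin p) := F (y s) with hu
    set Δ : EuclideanSpace ℝ (Fin p) := u - g with hΔ
    set d : EuclideanSpace ℝ (Fin p) := θt - θ with hd
    have hΔn : ‖Δ‖ ≤ s * a := by
      have h1 : ‖Δ‖ ≤ L * ‖y s - θt‖ := hLip (y s) θt
      have h2 : y s - θt = -((2 * η * s) • g) := by simp [hy]
      have h3 : ‖y s - θt‖ = 2 * η * s * a := by
        rw [h2, norm_neg, norm_smul, Real.norm_eq_abs, abs_of_nonneg (by positivity)]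
      rw [h3] at h1
      calc ‖Δ‖ ≤ L * (2 * η * s * a) := h1
        _ = (2 * η * L) * (s * a) := by ring
        _ ≤ 1 * (s * a) := by
            apply mul_le_mul_of_nonneg_right h2ηL (by positivity)
        _ = s * a := by ring
    have hΔ0 : 0 ≤ ‖Δ‖ := norm_nonneg _
    have ha0 : 0 ≤ a := norm_nonneg _
    have hΔsq : ‖Δ‖^2 ≤ s^2 * a^2 := by nlinarith
    have hin : |⟪Δ, g⟫| ≤ ‖Δ‖ * a := abs_real_inner_le_norm Δ g
    -- the step bound
    have hstep : (2 - 4*s) * ⟪Δ, g⟫ ≤ (8*s^3 - 8*s^2 + 5/2*s) * a^2 := by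
      have h1 : (2 - 4*s) * ⟪Δ, g⟫ ≤ |2 - 4*s| * |⟪Δ, g⟫| := by
        calc (2 - 4*s) * ⟪Δ, g⟫ ≤ |(2 - 4*s) * ⟪Δ, g⟫| := le_abs_self _
          _ = |2 - 4*s| * |⟪Δ, g⟫| := abs_mul _ _
      have h2 : |⟪Δ, g⟫| ≤ s * a^2 := by nlinarith [abs_nonneg ⟪Δ, g⟫]
      have h3 : |2 - 4*s| * |⟪Δ, g⟫| ≤ |2 - 4*s| * (s * a^2) :=
        mul_le_mul_of_nonneg_left h2 (abs_nonneg _)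
      have h4 : |2 - 4*s| ≤ ((4*s - 2)^2 + 1) / 2 := by
        nlinarith [sq_abs (2 - 4*s), sq_nonneg (|2 - 4*s| - 1), abs_nonneg (2 - 4*s)]
      have h5 : |2 - 4*s| * (s * a^2) ≤ ((4*s - 2)^2 + 1) / 2 * (s * a^2) :=
        mul_le_mul_of_nonneg_right h4 (by positivity)
      calc (2 - 4*s) * ⟪Δ, g⟫ ≤ |2 - 4*s| * |⟪Δ, g⟫| := h1
        _ ≤ |2 - 4*s| * (s * a^2) := h3
        _ ≤ ((4*s - 2)^2 + 1) / 2 * (s * a^2) := h5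
        _ = (8*s^3 - 8*s^2 + 5/2*s) * a^2 := by ring
    -- expansions
    have e1 : J s = ‖d‖^2 - 2 * η * ⟪u, d⟫ + η^2 * ‖u‖^2 := by
      have h0 : (θt - η • F (y s)) - θ = d - η • u := by
        rw [hd, hu]; abel
      rw [hJ]
      simp only [h0]
      rw [norm_sub_sq_real, real_inner_smul_right, norm_smul, Real.norm_eq_abs,
        mul_pow, sq_abs, real_inner_comm]
      ring
    have e2 : I s = ⟪u, d⟫ - (2 * η * s) * ⟪u, g⟫ := by
      have h0 : y s - θ = d - (2 * η * s) • g := by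
        show θt - (2 * η * s) • g - θ = θt - θ - (2 * η * s) • g
        exact sub_right_comm _ _ _
      rw [hI]
      simp only [← hu, h0]
      rw [inner_sub_right, real_inner_smul_right]
    have e3 : ‖u‖^2 = a^2 + 2 * ⟪Δ, g⟫ + ‖Δ‖^2 := by
      have h0 : u = g + Δ := by rw [hΔ]; abel
      rw [h0, norm_add_sq_real, real_inner_comm]
    have e4 : ⟪u, g⟫ = a^2 + ⟪Δ, g⟫ := by
      have h0 : u = g + Δ := by rw [hΔ]; abel
      rw [h0, inner_add_left, real_inner_self_eq_norm_sq]
    have hd2 : A = ‖d‖^2 := by rw [hA, hd]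
    rw [e1, e2, e3, e4, hd2, hC, hψ]
    have hbr : a^2 * (1 - 4*s) + (2 - 4*s) * ⟪Δ, g⟫ + ‖Δ‖^2
        ≤ a^2 * (8*s^3 - 7*s^2 - 3/2*s + 1) := by nlinarith [hstep, hΔsq]
    nlinarith [mul_le_mul_of_nonneg_left hbr (sq_nonneg η)]
  -- integrability
  have hIint : IntervalIntegrable I MeasureTheory.volume 0 1 := hIc.intervalIntegrable _ _
  have hJint : IntervalIntegrable J MeasureTheory.volume 0 1 := hJc.intervalIntegrable _ _
  have hfint : IntervalIntegrable (fun s => 2 * η * I s + J s) MeasureTheory.volume 0 1 :=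
    ((continuous_const.mul hIc).add hJc).intervalIntegrable _ _
  have hgint : IntervalIntegrable (fun s => A - C * ψ s) MeasureTheory.volume 0 1 := by
    apply Continuous.intervalIntegrable
    exact continuous_const.sub (continuous_const.mul hψc)
  -- integral of ψ
  have hψint : ∫ s in (0:ℝ)..1, ψ s = 1/12 := by
    have hderiv : ∀ s ∈ Set.uIcc (0:ℝ) 1,
        HasDerivAt (fun x : ℝ => -2*x^4 + 7/3*x^3 + 3/4*x^2 - x) (ψ s) s := by
      intro s _
      have h := ((((hasDerivAt_pow 4 s).const_mul (-2:ℝ)).add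
        ((hasDerivAt_pow 3 s).const_mul (7/3:ℝ))).add
        ((hasDerivAt_pow 2 s).const_mul (3/4:ℝ))).sub (hasDerivAt_id' (x := s))
      exact h.congr_deriv (by rw [hψ]; push_cast; ring)
    rw [intervalIntegral.integral_eq_sub_of_hasDerivAt hderiv
      (hψc.intervalIntegrable _ _)]
    norm_num
  have hmono := intervalIntegral.integral_mono_on (by norm_num : (0:ℝ) ≤ 1) hfint hgint key
  have hfeq : ∫ s in (0:ℝ)..1, (2 * η * I s + J s)
      = 2 * η * (∫ s in (0:ℝ)..1, I s) + ∫ s in (0:ℝ)..1, J s := by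
    rw [intervalIntegral.integral_add (f := fun s => 2 * η * I s) ((continuous_const.mul hIc).intervalIntegrable _ _) hJint,
      intervalIntegral.integral_const_mul]
  have hgeq : ∫ s in (0:ℝ)..1, (A - C * ψ s) = A - C * (1/12) := by
    rw [intervalIntegral.integral_sub (g := fun s => C * ψ s) (intervalIntegrable_const)
      ((continuous_const.mul hψc).intervalIntegrable _ _),
      intervalIntegral.integral_const_mul, hψint]
    simp
  rw [hfeq, hgeq] at hmono
  have : 2 * η * (∫ s in (0:ℝ)..1, I s) ≤ A - ∫ s in (0:ℝ)..1, J s := by nlinarith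
  exact this
end

section
/- Let f : ℝⁿ × ℝᵐ → ℝ be continuously differentiable, with x ↦ f(x,z) convex for each z and z ↦ f(x,z) concave for each x, and suppose the operator F(x,z) = (∇ₓf(x,z), −∇_z f(x,z)) on ℝ^{n+m} is L-Lipschitz continuous. Fix 0 < η ≤ (√3 − 1)/(2L), θ₀ ∈ ℝ^{n+m}, and any sequence u : ℕ → [0,1]; define RAMPAGE+ iterates y_t = θ_t − 2η·u_t·F(θ_t), ỹ_t = θ_t − 2η·(1−u_t)·F(θ_t), θ_{t+1} = θ_t − (η/2)(F(y_t) + F(ỹ_t)), and the ergodic average (x̂_k, ẑ_k) = (1/(2(k+1))) Σ_{t=0}^{k} (y_t + ỹ_t). Then for every reference point (x,z) ∈ ℝⁿ × ℝᵐ and every k ∈ ℕ: f(x̂_k, z) − f(x, ẑ_k) ≤ ‖θ₀ − (x,z)‖² / (2η(k+1)). -/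
open scoped RealInnerProductSpace

section Aux

lemma rampage_convex_grad_le {E : Type*} [NormedAddCommGroup E] [InnerProductSpace ℝ E]
    [CompleteSpace E] {g : E → ℝ} (hg : ConvexOn ℝ Set.univ g)
    (hd : Differentiable ℝ g) (p w : E) :
    g p + ⟪gradient g p, w - p⟫ ≤ g w := by
  set φ : ℝ → ℝ := fun t => g (t • (w - p) + p) with hφ
  have hφconv : ConvexOn ℝ Set.univ φ := by
    have := hg.comp_affineMap (AffineMap.lineMap p w)
    simpa [Function.comp_def, AffineMap.lineMap_apply, hφ] using this
  have hφd : ∀ t : ℝ, HasDerivAt φ ⟪gradient g (t • (w - p) + p), w - p⟫ t := by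
    intro t
    have h1 : HasDerivAt (fun t : ℝ => t • (w - p) + p) (w - p) t := by
      simpa using ((hasDerivAt_id t).smul_const (w - p)).add_const p
    have h2 := (hd (t • (w - p) + p)).hasGradientAt.hasFDerivAt
    have := h2.comp_hasDerivAt t h1
    simp only [InnerProductSpace.toDual_apply_apply] at this
    exact this
  have key := hφconv.deriv_le_slope (Set.mem_univ (0:ℝ)) (Set.mem_univ (1:ℝ))
    one_pos (hφd 0).differentiableAt
  rw [(hφd 0).deriv] at key
  have hslope : slope φ 0 1 = φ 1 - φ 0 := by simp [slope_def_field]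
  rw [hslope] at key
  have h0 : φ 0 = g p := by simp [hφ]
  have h1 : φ 1 = g w := by simp [hφ]
  rw [h0, h1] at key
  simp only [zero_smul, zero_add] at key
  linarith

lemma rampage_concave_grad_ge {E : Type*} [NormedAddCommGroup E] [InnerProductSpace ℝ E]
    [CompleteSpace E] {g : E → ℝ} (hg : ConcaveOn ℝ Set.univ g)
    (hd : Differentiable ℝ g) (p w : E) :
    g w ≤ g p + ⟪gradient g p, w - p⟫ := by
  set φ : ℝ → ℝ := fun t => g (t • (w - p) + p) with hφ
  have hφconc : ConcaveOn ℝ Set.univ φ := by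
    have := hg.comp_affineMap (AffineMap.lineMap p w)
    simpa [Function.comp_def, AffineMap.lineMap_apply, hφ] using this
  have hφd : ∀ t : ℝ, HasDerivAt φ ⟪gradient g (t • (w - p) + p), w - p⟫ t := by
    intro t
    have h1 : HasDerivAt (fun t : ℝ => t • (w - p) + p) (w - p) t := by
      simpa using ((hasDerivAt_id t).smul_const (w - p)).add_const p
    have h2 := (hd (t • (w - p) + p)).hasGradientAt.hasFDerivAt
    have := h2.comp_hasDerivAt t h1
    simp only [InnerProductSpace.toDual_apply_apply] at this
    exact this
  have key := hφconc.slope_le_deriv (Set.mem_univ (0:ℝ)) (Set.mem_univ (1:ℝ))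
    one_pos (hφd 0).differentiableAt
  rw [(hφd 0).deriv] at key
  have hslope : slope φ 0 1 = φ 1 - φ 0 := by simp [slope_def_field]
  rw [hslope] at key
  have h0 : φ 0 = g p := by simp [hφ]
  have h1 : φ 1 = g w := by simp [hφ]
  rw [h0, h1] at key
  simp only [zero_smul, zero_add] at key
  linarith

lemma rampage_key_scalar (s u c r r' N A B : ℝ) (hs0 : 0 ≤ s) (hs : s ≤ Real.sqrt 3 - 1)
    (hu0 : 0 ≤ u) (hu1 : u ≤ 1) (hc : 0 ≤ c) (hN0 : 0 ≤ N)
    (hr : r ≤ s * u * c) (hr' : r' ≤ s * (1 - u) * c) (hN : N ≤ r + r')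
    (hA : |A| ≤ r * c) (hB : |B| ≤ r' * c) :
    (1/4) * (4 * c^2 + 4 * (A + B) + N^2) ≤ 2 * (u * (c^2 + A) + (1 - u) * (c^2 + B)) := by
  obtain ⟨hA1, hA2⟩ := abs_le.mp hA
  obtain ⟨hB1, hB2⟩ := abs_le.mp hB
  have hr0 : 0 ≤ r * c := le_trans (abs_nonneg A) hA
  have hr'0 : 0 ≤ r' * c := le_trans (abs_nonneg B) hB
  have e1 : 0 ≤ r * c + (2*u - 1) * A := by
    nlinarith [mul_nonneg hu0 (by linarith : 0 ≤ r*c + A),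
      mul_nonneg (by linarith : 0 ≤ 1 - u) (by linarith : 0 ≤ r*c - A)]
  have e2 : 0 ≤ r' * c + (1 - 2*u) * B := by
    nlinarith [mul_nonneg hu0 (by linarith : 0 ≤ r'*c - B),
      mul_nonneg (by linarith : 0 ≤ 1 - u) (by linarith : 0 ≤ r'*c + B)]
  have hrr : r + r' ≤ s * c := by nlinarith
  have hN2 : N^2 ≤ (s*c)^2 := by
    have h1 : N ≤ s * c := le_trans hN hrr
    nlinarith
  have hsc : s^2 / 4 + s ≤ 1 := by
    nlinarith [Real.sq_sqrt (by norm_num : (0:ℝ) ≤ 3), Real.sqrt_nonneg 3,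
      sq_nonneg (Real.sqrt 3 - 1), sq_nonneg (s - (Real.sqrt 3 - 1))]
  have hmain : (s*c)^2 / 4 + s * c * c ≤ c^2 := by nlinarith [sq_nonneg c, mul_nonneg hc hc]
  have hrc : r * c + r' * c ≤ s * c * c := by nlinarith
  linarith

lemma rampage_step_s13 {E : Type*} [NormedAddCommGroup E] [InnerProductSpace ℝ E]
    (η s u : ℝ) (hη : 0 < η) (hs0 : 0 ≤ s) (hs : s ≤ Real.sqrt 3 - 1)
    (hu0 : 0 ≤ u) (hu1 : u ≤ 1)
    (θ θ' w fθ fy fy' : E)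
    (hfy : ‖fy - fθ‖ ≤ s * u * ‖fθ‖) (hfy' : ‖fy' - fθ‖ ≤ s * (1 - u) * ‖fθ‖)
    (hθ' : θ' = θ - (η/2) • (fy + fy')) :
    η * (⟪fy, (θ - (2*η*u) • fθ) - w⟫ + ⟪fy', (θ - (2*η*(1-u)) • fθ) - w⟫)
      ≤ ‖θ - w‖^2 - ‖θ' - w‖^2 := by
  subst hθ'
  have key : (1/4) * ‖fy + fy'‖^2 ≤ 2 * (u * ⟪fy, fθ⟫ + (1 - u) * ⟪fy', fθ⟫) := by
    have hexp : ‖fy + fy'‖^2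
        = 4 * ‖fθ‖^2 + 4 * (⟪fy - fθ, fθ⟫ + ⟪fy' - fθ, fθ⟫) + ‖(fy - fθ) + (fy' - fθ)‖^2 := by
      have h : fy + fy' = (2:ℝ) • fθ + ((fy - fθ) + (fy' - fθ)) := by module
      rw [h, norm_add_sq_real, norm_smul, inner_smul_left, inner_add_right,
        real_inner_comm fθ (fy - fθ), real_inner_comm fθ (fy' - fθ)]
      simp [RCLike.ofReal_real_eq_id]
      ring
    have hy : ⟪fy, fθ⟫ = ‖fθ‖^2 + ⟪fy - fθ, fθ⟫ := by
      rw [inner_sub_left, real_inner_self_eq_norm_sq]; ring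
    have hy' : ⟪fy', fθ⟫ = ‖fθ‖^2 + ⟪fy' - fθ, fθ⟫ := by
      rw [inner_sub_left, real_inner_self_eq_norm_sq]; ring
    rw [hexp, hy, hy']
    have := rampage_key_scalar s u ‖fθ‖ ‖fy - fθ‖ ‖fy' - fθ‖ ‖(fy - fθ) + (fy' - fθ)‖
      ⟪fy - fθ, fθ⟫ ⟪fy' - fθ, fθ⟫ hs0 hs hu0 hu1 (norm_nonneg _) (norm_nonneg _)
      hfy hfy' (norm_add_le _ _) (abs_real_inner_le_norm _ _) (abs_real_inner_le_norm _ _)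
    linarith
  have hid : ‖(θ - w) - (η/2) • (fy + fy')‖^2
      = ‖θ - w‖^2 - η * ⟪fy + fy', θ - w⟫ + (η^2/4) * ‖fy + fy'‖^2 := by
    rw [norm_sub_sq_real, real_inner_smul_right, norm_smul]
    simp [abs_of_pos hη, abs_of_pos (by linarith : (0:ℝ) < η/2)]
    rw [real_inner_comm]
    ring
  have hrw : θ - (η/2) • (fy + fy') - w = (θ - w) - (η/2) • (fy + fy') := by abel
  rw [hrw, hid]
  have hinner : ⟪fy, (θ - (2*η*u) • fθ) - w⟫ = ⟪fy, θ - w⟫ - (2*η*u) * ⟪fy, fθ⟫ := by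
    have : (θ - (2*η*u) • fθ) - w = (θ - w) - (2*η*u) • fθ := by abel
    rw [this, inner_sub_right, real_inner_smul_right]
  have hinner' : ⟪fy', (θ - (2*η*(1-u)) • fθ) - w⟫ = ⟪fy', θ - w⟫ - (2*η*(1-u)) * ⟪fy', fθ⟫ := by
    have : (θ - (2*η*(1-u)) • fθ) - w = (θ - w) - (2*η*(1-u)) • fθ := by abel
    rw [this, inner_sub_right, real_inner_smul_right]
  rw [hinner, hinner', inner_add_left]
  nlinarith [mul_pos hη hη, sq_nonneg η, mul_le_mul_of_nonneg_left key (le_of_lt (mul_pos hη hη))]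

end Aux

/-- Deterministic ergodic `O(1/k)` convergence of RAMPAGE+ for unconstrained smooth
convex-concave min-max games. The joint state is split into its two coordinates
`(x, z)`, the game operator is `F(x,z) = (∇ₓ f(x,z), -∇_z f(x,z))`, and norms on the
product are the `ℓ²` combination of the component norms. -/
theorem rampage_plus_ergodic_minmax {n m : ℕ}
    (f : EuclideanSpace ℝ (Fin n) → EuclideanSpace ℝ (Fin m) → ℝ)
    (hf : ContDiff ℝ 1 fun q : EuclideanSpace ℝ (Fin n) × EuclideanSpace ℝ (Fin m) => f q.1 q.2)
    (hconv : ∀ z, ConvexOn ℝ Set.univ fun x => f x z)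
    (hconc : ∀ x, ConcaveOn ℝ Set.univ fun z => f x z)
    (Fx : EuclideanSpace ℝ (Fin n) → EuclideanSpace ℝ (Fin m) → EuclideanSpace ℝ (Fin n))
    (Fz : EuclideanSpace ℝ (Fin n) → EuclideanSpace ℝ (Fin m) → EuclideanSpace ℝ (Fin m))
    (hFx : ∀ x z, Fx x z = gradient (fun x' => f x' z) x)
    (hFz : ∀ x z, Fz x z = -gradient (fun z' => f x z') z)
    (L η : ℝ)
    (hLip : ∀ x z x' z',
      Real.sqrt (‖Fx x z - Fx x' z'‖ ^ 2 + ‖Fz x z - Fz x' z'‖ ^ 2)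
        ≤ L * Real.sqrt (‖x - x'‖ ^ 2 + ‖z - z'‖ ^ 2))
    (hη0 : 0 < η) (hη : η ≤ (Real.sqrt 3 - 1) / (2 * L))
    (x0 : EuclideanSpace ℝ (Fin n)) (z0 : EuclideanSpace ℝ (Fin m))
    (u : ℕ → ℝ) (hu : ∀ t, u t ∈ Set.Icc (0:ℝ) 1)
    (xθ xy xy' : ℕ → EuclideanSpace ℝ (Fin n))
    (zθ zy zy' : ℕ → EuclideanSpace ℝ (Fin m))
    (hx0 : xθ 0 = x0) (hz0 : zθ 0 = z0)
    (hxy : ∀ t, xy t = xθ t - (2 * η * u t) • Fx (xθ t) (zθ t))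
    (hzy : ∀ t, zy t = zθ t - (2 * η * u t) • Fz (xθ t) (zθ t))
    (hxy' : ∀ t, xy' t = xθ t - (2 * η * (1 - u t)) • Fx (xθ t) (zθ t))
    (hzy' : ∀ t, zy' t = zθ t - (2 * η * (1 - u t)) • Fz (xθ t) (zθ t))
    (hxstep : ∀ t, xθ (t+1) = xθ t - (η/2) • (Fx (xy t) (zy t) + Fx (xy' t) (zy' t)))
    (hzstep : ∀ t, zθ (t+1) = zθ t - (η/2) • (Fz (xy t) (zy t) + Fz (xy' t) (zy' t)))
    (x : EuclideanSpace ℝ (Fin n)) (z : EuclideanSpace ℝ (Fin m)) (k : ℕ) :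
    f ((1 / (2 * (k+1 : ℝ))) • ∑ t ∈ Finset.range (k+1), (xy t + xy' t)) z
      - f x ((1 / (2 * (k+1 : ℝ))) • ∑ t ∈ Finset.range (k+1), (zy t + zy' t))
      ≤ (‖x0 - x‖ ^ 2 + ‖z0 - z‖ ^ 2) / (2 * η * (k+1)) := by
  have hu0 : ∀ t, 0 ≤ u t := fun t => (hu t).1
  have hu1 : ∀ t, u t ≤ 1 := fun t => (hu t).2
  have h31 : (1:ℝ) < Real.sqrt 3 := by
    rw [show (1:ℝ) = Real.sqrt 1 by simp]
    exact Real.sqrt_lt_sqrt (by norm_num) (by norm_num)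
  have hL : 0 < L := by
    by_contra h
    push_neg at h
    rcases lt_or_eq_of_le h with h' | h'
    · have : (Real.sqrt 3 - 1) / (2*L) < 0 :=
        div_neg_of_pos_of_neg (by linarith) (by linarith)
      linarith
    · rw [h'] at hη
      simp at hη
      linarith
  have hs0 : 0 ≤ 2 * η * L := by positivity
  have hs : 2 * η * L ≤ Real.sqrt 3 - 1 := by
    rw [le_div_iff₀ (by linarith : (0:ℝ) < 2 * L)] at hη
    linarith [hη]
  -- product space
  set P : (EuclideanSpace ℝ (Fin n) × EuclideanSpace ℝ (Fin m)) →
      WithLp 2 (EuclideanSpace ℝ (Fin n) × EuclideanSpace ℝ (Fin m)) :=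
    fun q => (WithLp.equiv 2 (EuclideanSpace ℝ (Fin n) × EuclideanSpace ℝ (Fin m))).symm q
      with hP
  have Pnorm : ∀ (a : EuclideanSpace ℝ (Fin n)) (b : EuclideanSpace ℝ (Fin m)),
      ‖P (a, b)‖ = Real.sqrt (‖a‖^2 + ‖b‖^2) := by
    intro a b; simp only [hP]; rw [WithLp.prod_norm_eq_of_L2]; simp
  have Psub : ∀ (a c : EuclideanSpace ℝ (Fin n)) (b d : EuclideanSpace ℝ (Fin m)),
      P (a, b) - P (c, d) = P (a - c, b - d) := by
    intro a c b d; simp only [hP]; rfl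
  have Psmul : ∀ (r : ℝ) (a : EuclideanSpace ℝ (Fin n)) (b : EuclideanSpace ℝ (Fin m)),
      r • P (a, b) = P (r • a, r • b) := by
    intro r a b; simp only [hP]; rfl
  have Padd : ∀ (a c : EuclideanSpace ℝ (Fin n)) (b d : EuclideanSpace ℝ (Fin m)),
      P (a, b) + P (c, d) = P (a + c, b + d) := by
    intro a c b d; simp only [hP]; rfl
  have Pinner : ∀ (a c : EuclideanSpace ℝ (Fin n)) (b d : EuclideanSpace ℝ (Fin m)),
      ⟪P (a, b), P (c, d)⟫ = ⟪a, c⟫ + ⟪b, d⟫ := by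
    intro a c b d; simp only [hP]; rw [WithLp.prod_inner_apply]; simp
  -- distance and gap sequences
  set D : ℕ → ℝ := fun t => ‖xθ t - x‖^2 + ‖zθ t - z‖^2 with hD
  set G : ℕ → ℝ := fun t =>
    (⟪Fx (xy t) (zy t), xy t - x⟫ + ⟪Fz (xy t) (zy t), zy t - z⟫)
      + (⟪Fx (xy' t) (zy' t), xy' t - x⟫ + ⟪Fz (xy' t) (zy' t), zy' t - z⟫) with hGdef
  -- per-step inequality
  have hstep : ∀ t, η * G t ≤ D t - D (t+1) := by
    intro t
    have hc : ∀ a : ℝ, 0 ≤ a →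
        Real.sqrt (‖a • Fx (xθ t) (zθ t)‖^2 + ‖a • Fz (xθ t) (zθ t)‖^2)
          = a * Real.sqrt (‖Fx (xθ t) (zθ t)‖^2 + ‖Fz (xθ t) (zθ t)‖^2) := by
      intro a ha
      rw [norm_smul, norm_smul]
      rw [show (‖a‖ * ‖Fx (xθ t) (zθ t)‖)^2 + (‖a‖ * ‖Fz (xθ t) (zθ t)‖)^2
        = a^2 * (‖Fx (xθ t) (zθ t)‖^2 + ‖Fz (xθ t) (zθ t)‖^2) by
          simp only [Real.norm_eq_abs, mul_pow, sq_abs]; ring]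
      rw [Real.sqrt_mul (sq_nonneg a), Real.sqrt_sq ha]
    have hfy : ‖P (Fx (xy t) (zy t), Fz (xy t) (zy t)) - P (Fx (xθ t) (zθ t), Fz (xθ t) (zθ t))‖
        ≤ (2*η*L) * u t * ‖P (Fx (xθ t) (zθ t), Fz (xθ t) (zθ t))‖ := by
      rw [Psub, Pnorm, Pnorm]
      have h1 := hLip (xy t) (zy t) (xθ t) (zθ t)
      have hxd : ‖xy t - xθ t‖ = ‖(2 * η * u t) • Fx (xθ t) (zθ t)‖ := by
        rw [hxy t, show xθ t - (2 * η * u t) • Fx (xθ t) (zθ t) - xθ t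
          = -((2 * η * u t) • Fx (xθ t) (zθ t)) by abel, norm_neg]
      have hzd : ‖zy t - zθ t‖ = ‖(2 * η * u t) • Fz (xθ t) (zθ t)‖ := by
        rw [hzy t, show zθ t - (2 * η * u t) • Fz (xθ t) (zθ t) - zθ t
          = -((2 * η * u t) • Fz (xθ t) (zθ t)) by abel, norm_neg]
      rw [hxd, hzd, hc (2 * η * u t) (mul_nonneg (mul_nonneg (by norm_num) hη0.le) (hu0 t))] at h1
      calc Real.sqrt (‖Fx (xy t) (zy t) - Fx (xθ t) (zθ t)‖^2
            + ‖Fz (xy t) (zy t) - Fz (xθ t) (zθ t)‖^2)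
          ≤ L * (2 * η * u t * Real.sqrt (‖Fx (xθ t) (zθ t)‖^2 + ‖Fz (xθ t) (zθ t)‖^2)) := h1
        _ = (2*η*L) * u t * Real.sqrt (‖Fx (xθ t) (zθ t)‖^2 + ‖Fz (xθ t) (zθ t)‖^2) := by ring
    have hfy' : ‖P (Fx (xy' t) (zy' t), Fz (xy' t) (zy' t))
          - P (Fx (xθ t) (zθ t), Fz (xθ t) (zθ t))‖
        ≤ (2*η*L) * (1 - u t) * ‖P (Fx (xθ t) (zθ t), Fz (xθ t) (zθ t))‖ := by
      rw [Psub, Pnorm, Pnorm]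
      have h1 := hLip (xy' t) (zy' t) (xθ t) (zθ t)
      have hxd : ‖xy' t - xθ t‖ = ‖(2 * η * (1 - u t)) • Fx (xθ t) (zθ t)‖ := by
        rw [hxy' t, show xθ t - (2 * η * (1 - u t)) • Fx (xθ t) (zθ t) - xθ t
          = -((2 * η * (1 - u t)) • Fx (xθ t) (zθ t)) by abel, norm_neg]
      have hzd : ‖zy' t - zθ t‖ = ‖(2 * η * (1 - u t)) • Fz (xθ t) (zθ t)‖ := by
        rw [hzy' t, show zθ t - (2 * η * (1 - u t)) • Fz (xθ t) (zθ t) - zθ t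
          = -((2 * η * (1 - u t)) • Fz (xθ t) (zθ t)) by abel, norm_neg]
      have hu1t : 0 ≤ 1 - u t := by linarith [hu1 t]
      rw [hxd, hzd, hc (2 * η * (1 - u t)) (mul_nonneg (mul_nonneg (by norm_num) hη0.le) hu1t)] at h1
      calc Real.sqrt (‖Fx (xy' t) (zy' t) - Fx (xθ t) (zθ t)‖^2
            + ‖Fz (xy' t) (zy' t) - Fz (xθ t) (zθ t)‖^2)
          ≤ L * (2 * η * (1 - u t)
              * Real.sqrt (‖Fx (xθ t) (zθ t)‖^2 + ‖Fz (xθ t) (zθ t)‖^2)) := h1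
        _ = (2*η*L) * (1 - u t) * Real.sqrt (‖Fx (xθ t) (zθ t)‖^2 + ‖Fz (xθ t) (zθ t)‖^2) := by
            ring
    have hθ' : P (xθ (t+1), zθ (t+1)) = P (xθ t, zθ t)
        - (η/2) • (P (Fx (xy t) (zy t), Fz (xy t) (zy t))
          + P (Fx (xy' t) (zy' t), Fz (xy' t) (zy' t))) := by
      rw [Padd, Psmul, Psub, hxstep t, hzstep t]
    have hmain := rampage_step_s13 η (2*η*L) (u t) hη0 hs0 hs (hu0 t) (hu1 t)
      (P (xθ t, zθ t)) (P (xθ (t+1), zθ (t+1))) (P (x, z))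
      (P (Fx (xθ t) (zθ t), Fz (xθ t) (zθ t)))
      (P (Fx (xy t) (zy t), Fz (xy t) (zy t)))
      (P (Fx (xy' t) (zy' t), Fz (xy' t) (zy' t))) hfy hfy' hθ'
    simp only [Psmul, Psub, Pinner, Pnorm] at hmain
    rw [show xθ t - (2*η*u t) • Fx (xθ t) (zθ t) = xy t from (hxy t).symm,
        show zθ t - (2*η*u t) • Fz (xθ t) (zθ t) = zy t from (hzy t).symm,
        show xθ t - (2*η*(1 - u t)) • Fx (xθ t) (zθ t) = xy' t from (hxy' t).symm,
        show zθ t - (2*η*(1 - u t)) • Fz (xθ t) (zθ t) = zy' t from (hzy' t).symm] at hmain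
    rw [Real.sq_sqrt (by positivity), Real.sq_sqrt (by positivity)] at hmain
    exact hmain
  -- telescoping
  have hDnonneg : ∀ t, 0 ≤ D t := fun t => by rw [hD]; positivity
  have hsumG : η * ∑ t ∈ Finset.range (k+1), G t ≤ D 0 := by
    have h1 : ∑ t ∈ Finset.range (k+1), (η * G t)
        ≤ ∑ t ∈ Finset.range (k+1), (D t - D (t+1)) :=
      Finset.sum_le_sum fun t _ => hstep t
    rw [Finset.sum_range_sub' D (k+1)] at h1
    rw [Finset.mul_sum]
    calc ∑ t ∈ Finset.range (k+1), η * G t ≤ D 0 - D (k+1) := h1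
      _ ≤ D 0 := by linarith [hDnonneg (k+1)]
  -- differentiability of partial maps
  have hdf : Differentiable ℝ (fun q : EuclideanSpace ℝ (Fin n) × EuclideanSpace ℝ (Fin m)
      => f q.1 q.2) := hf.differentiable one_ne_zero
  have hdx : ∀ z', Differentiable ℝ (fun x' => f x' z') := by
    intro z' p
    exact (hdf (p, z')).comp (f := fun x' : EuclideanSpace ℝ (Fin n) => (x', z')) p ((differentiableAt_id (x := p)).prodMk (differentiableAt_const z'))
  have hdz : ∀ x', Differentiable ℝ (fun z' => f x' z') := by
    intro x' q
    exact (hdf (x', q)).comp q ((differentiableAt_const x').prodMk differentiableAt_id)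
  -- gap bound per point
  have hpoint : ∀ (p : EuclideanSpace ℝ (Fin n)) (q : EuclideanSpace ℝ (Fin m)),
      f p z - f x q ≤ ⟪Fx p q, p - x⟫ + ⟪Fz p q, q - z⟫ := by
    intro p q
    have hc1 := rampage_convex_grad_le (hconv q) (hdx q) p x
    have hc2 := rampage_concave_grad_ge (hconc p) (hdz p) q z
    rw [← hFx p q] at hc1
    have hgz : gradient (fun z' => f p z') q = -Fz p q := by rw [hFz p q]; simp
    rw [hgz] at hc2
    have e1 : ⟪Fx p q, x - p⟫ = -⟪Fx p q, p - x⟫ := by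
      rw [← inner_neg_right, neg_sub]
    have e2 : ⟪-Fz p q, z - q⟫ = ⟪Fz p q, q - z⟫ := by
      rw [inner_neg_left, ← inner_neg_right, neg_sub]
    rw [e1] at hc1
    rw [e2] at hc2
    linarith
  have hgap : ∀ t, (f (xy t) z - f x (zy t)) + (f (xy' t) z - f x (zy' t)) ≤ G t := by
    intro t
    have h1 := hpoint (xy t) (zy t)
    have h2 := hpoint (xy' t) (zy' t)
    rw [hGdef]
    dsimp only
    linarith
  -- Jensen
  have hkpos : (0:ℝ) < 2 * (k+1 : ℝ) := by positivity
  set T : Finset (ℕ × Bool) := Finset.range (k+1) ×ˢ (Finset.univ : Finset Bool) with hT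
  have hwsum : ∑ _i ∈ T, (1:ℝ) = 2 * (k+1 : ℝ) := by
    rw [hT, Finset.sum_product]
    simp
    ring
  have hJ1 : f ((1 / (2 * (k+1 : ℝ))) • ∑ t ∈ Finset.range (k+1), (xy t + xy' t)) z
      ≤ (1 / (2 * (k+1 : ℝ))) * ∑ t ∈ Finset.range (k+1), (f (xy t) z + f (xy' t) z) := by
    have hcm := (hconv z).map_centerMass_le (t := T) (w := fun _ => (1:ℝ))
      (p := fun i => if i.2 then xy i.1 else xy' i.1)
      (fun i _ => zero_le_one) (by rw [hwsum]; positivity) (fun i _ => Set.mem_univ _)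
    rw [Finset.centerMass, Finset.centerMass, hwsum] at hcm
    have hp : ∑ i ∈ T, (1:ℝ) • (if i.2 then xy i.1 else xy' i.1)
        = ∑ t ∈ Finset.range (k+1), (xy t + xy' t) := by
      rw [hT, Finset.sum_product]
      refine Finset.sum_congr rfl fun t _ => ?_
      simp [add_comm]
    have hfp : ∑ i ∈ T, (1:ℝ) • ((fun x' => f x' z) ∘ fun i => if i.2 then xy i.1 else xy' i.1) i
        = ∑ t ∈ Finset.range (k+1), (f (xy t) z + f (xy' t) z) := by
      rw [hT, Finset.sum_product]
      refine Finset.sum_congr rfl fun t _ => ?_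
      simp [Function.comp, add_comm]
    rw [hp, hfp, smul_eq_mul] at hcm
    rw [one_div]
    exact hcm
  have hJ2 : (1 / (2 * (k+1 : ℝ))) * ∑ t ∈ Finset.range (k+1), (f x (zy t) + f x (zy' t))
      ≤ f x ((1 / (2 * (k+1 : ℝ))) • ∑ t ∈ Finset.range (k+1), (zy t + zy' t)) := by
    have hcm := (hconc x).le_map_centerMass (t := T) (w := fun _ => (1:ℝ))
      (p := fun i => if i.2 then zy i.1 else zy' i.1)
      (fun i _ => zero_le_one) (by rw [hwsum]; positivity) (fun i _ => Set.mem_univ _)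
    rw [Finset.centerMass, Finset.centerMass, hwsum] at hcm
    have hp : ∑ i ∈ T, (1:ℝ) • (if i.2 then zy i.1 else zy' i.1)
        = ∑ t ∈ Finset.range (k+1), (zy t + zy' t) := by
      rw [hT, Finset.sum_product]
      refine Finset.sum_congr rfl fun t _ => ?_
      simp [add_comm]
    have hfp : ∑ i ∈ T, (1:ℝ) • ((fun z' => f x z') ∘ fun i => if i.2 then zy i.1 else zy' i.1) i
        = ∑ t ∈ Finset.range (k+1), (f x (zy t) + f x (zy' t)) := by
      rw [hT, Finset.sum_product]
      refine Finset.sum_congr rfl fun t _ => ?_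
      simp [Function.comp, add_comm]
    rw [hp, hfp, smul_eq_mul] at hcm
    rw [one_div]
    exact hcm
  -- put everything together
  have hsum_gap : ∑ t ∈ Finset.range (k+1), ((f (xy t) z + f (xy' t) z)
      - (f x (zy t) + f x (zy' t))) ≤ ∑ t ∈ Finset.range (k+1), G t :=
    Finset.sum_le_sum fun t _ => by linarith [hgap t]
  have hGsum : ∑ t ∈ Finset.range (k+1), G t ≤ D 0 / η := by
    rw [le_div_iff₀ hη0]
    calc (∑ t ∈ Finset.range (k+1), G t) * η = η * ∑ t ∈ Finset.range (k+1), G t := by ring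
      _ ≤ D 0 := hsumG
  have hD0 : D 0 = ‖x0 - x‖^2 + ‖z0 - z‖^2 := by rw [hD]; simp [hx0, hz0]
  have hfinal : (1 / (2 * (k+1 : ℝ))) * ∑ t ∈ Finset.range (k+1), ((f (xy t) z + f (xy' t) z)
      - (f x (zy t) + f x (zy' t))) ≤ (‖x0 - x‖^2 + ‖z0 - z‖^2) / (2 * η * (k+1)) := by
    have h1 : ∑ t ∈ Finset.range (k+1), ((f (xy t) z + f (xy' t) z)
        - (f x (zy t) + f x (zy' t))) ≤ D 0 / η := le_trans hsum_gap hGsum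
    have h2 := mul_le_mul_of_nonneg_left h1 (le_of_lt (by positivity :
      (0:ℝ) < 1 / (2 * (k+1 : ℝ))))
    calc (1 / (2 * (k+1 : ℝ))) * ∑ t ∈ Finset.range (k+1), ((f (xy t) z + f (xy' t) z)
        - (f x (zy t) + f x (zy' t))) ≤ (1 / (2 * (k+1 : ℝ))) * (D 0 / η) := h2
      _ = (‖x0 - x‖^2 + ‖z0 - z‖^2) / (2 * η * (k+1)) := by
          rw [hD0, one_div, ← div_eq_inv_mul, div_div]
          ring_nf
  have hsplit : ∑ t ∈ Finset.range (k+1), ((f (xy t) z + f (xy' t) z)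
      - (f x (zy t) + f x (zy' t)))
      = ∑ t ∈ Finset.range (k+1), (f (xy t) z + f (xy' t) z)
        - ∑ t ∈ Finset.range (k+1), (f x (zy t) + f x (zy' t)) := by
    rw [Finset.sum_sub_distrib]
  rw [hsplit] at hfinal
  have hfin2 := sub_le_sub hJ1 hJ2
  calc f ((1 / (2 * (k+1 : ℝ))) • ∑ t ∈ Finset.range (k+1), (xy t + xy' t)) z
      - f x ((1 / (2 * (k+1 : ℝ))) • ∑ t ∈ Finset.range (k+1), (zy t + zy' t))
      ≤ (1 / (2 * (k+1 : ℝ))) * ∑ t ∈ Finset.range (k+1), (f (xy t) z + f (xy' t) z)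
        - (1 / (2 * (k+1 : ℝ))) * ∑ t ∈ Finset.range (k+1), (f x (zy t) + f x (zy' t)) := hfin2
    _ ≤ (‖x0 - x‖^2 + ‖z0 - z‖^2) / (2 * η * (k+1)) := by linarith [hfinal]
end
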